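/- arXiv:1909.07141 — 9 statements merged into one kernel-verified Lean document; each statement's English description precedes it below -/
import Mathlib

section
/- For any two non-atomic Borel probability measures μ and μ' on the circle S¹ and any rational α = p/q ∈ [0,1], there exist q closed arcs X₁, ..., X_q of S¹ such that μ(Xᵢ) = α for each i and every point of the circle belongs to exactly p of the arcs; consequently, by pigeonhole, some arc Xᵢ satisfies μ'(Xᵢ) ≥ α. -/
private lemma modAux {q k i : ℕ} (hk : k < q) (hi : i < q) :
    (k + q - i) % q = if i ≤ k then k - i else k + q - i := by
  rcases le_or_gt i k with h | h
  · rw [if_pos h]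
    have h2 : k + q - i = (k - i) + q := by omega
    rw [h2, Nat.add_mod_right, Nat.mod_eq_of_lt (by omega)]
  · rw [if_neg (by omega)]
    exact Nat.mod_eq_of_lt (by omega)

private lemma countAux (p q k : ℕ) (hq : 0 < q) (hpq : p ≤ q) (hk : k < q) :
    (Finset.univ.filter (fun i : Fin q =>
      (((i:ℕ) ≤ k ∧ k + 1 ≤ (i:ℕ) + p) ∨ (k + 1 ≤ (i:ℕ) + p - q)))).card = p := by
  conv_rhs => rw [← Finset.card_range p]
  refine Finset.card_bij' (fun i _ => (k + q - (i:ℕ)) % q)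
      (fun j _ => (⟨(k + q - j) % q, Nat.mod_lt _ hq⟩ : Fin q)) ?_ ?_ ?_ ?_
  · intro i hi
    simp only [Finset.mem_filter, Finset.mem_univ, true_and] at hi
    simp only [Finset.mem_range, modAux hk i.isLt]
    split <;> omega
  · intro j hj
    rw [Finset.mem_range] at hj
    simp only [Finset.mem_filter, Finset.mem_univ, true_and, modAux hk (show j < q by omega)]
    split <;> omega
  · intro i hi
    apply Fin.ext
    simp only [modAux hk i.isLt]
    split
    · rw [modAux hk (by omega)]; split <;> omega
    · rw [modAux hk (by omega)]; split <;> omega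
  · intro j hj
    rw [Finset.mem_range] at hj
    simp only [modAux hk (show j < q by omega)]
    split
    · rw [modAux hk (by omega)]; split <;> omega
    · rw [modAux hk (by omega)]; split <;> omega

set_option maxHeartbeats 1000000 in
open MeasureTheory Set Classical in

/-- For any two non-atomic Borel probability measures `μ, μ'` on the circle `S¹ = ℝ/ℤ` and any
rational `α = p/q ∈ [0,1]`, there exist `q` closed arcs `X₁, …, X_q`, each of `μ`-measure `α`,
covering every point of the circle exactly `p` times (outside a `μ`-null set of endpoints);
consequently, by pigeonhole, some arc `Xᵢ` satisfies `μ'(Xᵢ) ≥ α`. -/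
theorem arcs_rational_cover (μ μ' : Measure (AddCircle (1 : ℝ)))
    [IsProbabilityMeasure μ] [IsProbabilityMeasure μ']
    (hμ : ∀ z : AddCircle (1 : ℝ), μ {z} = 0)
    (hμ' : ∀ z : AddCircle (1 : ℝ), μ' {z} = 0)
    (p q : ℕ) (hq : 0 < q) (hpq : p ≤ q) :
    ∃ X : Fin q → Set (AddCircle (1 : ℝ)),
      (∀ i, ∃ a b : ℝ, a ≤ b ∧ b ≤ a + 1 ∧
          X i = (QuotientAddGroup.mk : ℝ → AddCircle (1 : ℝ)) '' Set.Icc a b) ∧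
      (∀ i, μ (X i) = ENNReal.ofReal ((p : ℝ) / q)) ∧
      (∃ N : Set (AddCircle (1 : ℝ)), μ N = 0 ∧ μ' N = 0 ∧
        ∀ z ∉ N, (Finset.univ.filter (fun i : Fin q => z ∈ X i)).card = p) ∧
      (∃ i, ENNReal.ofReal ((p : ℝ) / q) ≤ μ' (X i)) := by
  haveI : Fact ((0:ℝ) < 1) := ⟨zero_lt_one⟩
  set mkc : ℝ → AddCircle (1:ℝ) := (QuotientAddGroup.mk : ℝ → AddCircle (1 : ℝ)) with hmkc
  -- the canonical representative in `(0, 1]`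
  set g : AddCircle (1:ℝ) → ℝ := fun z => ((AddCircle.equivIoc 1 0 z : Ioc (0:ℝ) (0+1)) : ℝ)
    with hgdef
  have hgIoc : ∀ z, g z ∈ Ioc (0:ℝ) 1 := by
    intro z
    have := (AddCircle.equivIoc 1 0 z).2
    simpa using this
  have hgmk : ∀ z : AddCircle (1:ℝ), mkc (g z) = z := by
    intro z
    exact (AddCircle.equivIoc 1 0).symm_apply_apply z
  have hrep : ∀ s : ℝ, s ∈ Ioc (0:ℝ) 1 → g (mkc s) = s := by
    intro s hs
    have h1 : (AddCircle.equivIoc 1 0) (mkc s) = ⟨s, by simpa using hs⟩ := by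
      rw [Equiv.apply_eq_iff_eq_symm_apply]
      rfl
    simp [hgdef, h1]
  have hgmeas : Measurable g :=
    measurable_subtype_coe.comp (AddCircle.measurableEquivIoc 1 0).measurable
  -- the coordinates of the circle
  have hcoe : ∀ s t : ℝ, mkc s = mkc t ↔ ∃ n : ℤ, s - t = n := by
    intro s t
    rw [hmkc, QuotientAddGroup.eq_iff_sub_mem]
    constructor
    · intro h
      obtain ⟨n, hn⟩ := AddSubgroup.mem_zmultiples_iff.mp h
      exact ⟨n, by rw [← hn, zsmul_eq_mul, mul_one]⟩
    · rintro ⟨n, hn⟩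
      exact AddSubgroup.mem_zmultiples_iff.mpr ⟨n, by rw [zsmul_eq_mul, mul_one, hn]⟩
  -- the pushforward CDF
  set ν : Measure ℝ := μ.map g with hνdef
  haveI : IsProbabilityMeasure ν := Measure.isProbabilityMeasure_map hgmeas.aemeasurable
  have hν : ∀ t : ℝ, ν {t} = 0 := by
    intro t
    rw [hνdef, Measure.map_apply hgmeas (measurableSet_singleton t)]
    refine measure_mono_null (fun z hz => ?_) (hμ (mkc t))
    simp only [mem_preimage, mem_singleton_iff] at hz ⊢
    rw [← hz, hgmk]
  set F : ℝ → ℝ := fun t => ProbabilityTheory.cdf ν t with hFdef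
  have hFmono : Monotone F := ProbabilityTheory.monotone_cdf ν
  have hFcont : Continuous F := by
    rw [continuous_iff_continuousAt]
    intro x
    have h1 : (ProbabilityTheory.cdf ν).measure {x} = 0 := by
      rw [ProbabilityTheory.measure_cdf]; exact hν x
    rw [StieltjesFunction.measure_singleton] at h1
    have h2 : F x - Function.leftLim F x ≤ 0 := ENNReal.ofReal_eq_zero.mp h1
    have h4 : Function.leftLim F x ≤ F x := hFmono.leftLim_le le_rfl
    have hLL : Function.leftLim F x = F x := le_antisymm h4 (by linarith)
    rw [hFmono.continuousAt_iff_leftLim_eq_rightLim]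
    exact hLL.trans ((ProbabilityTheory.cdf ν).rightLim_eq x).symm
  have hIic : ∀ t, ν (Iic t) = μ (g ⁻¹' Iic t) := by
    intro t; rw [hνdef, Measure.map_apply hgmeas measurableSet_Iic]
  have hF0 : F 0 = 0 := by
    have h1 : ENNReal.ofReal (F 0) = ν (Iic 0) := ProbabilityTheory.ofReal_cdf ν 0
    have h2 : ν (Iic 0) = 0 := by
      rw [hIic]
      convert measure_empty (μ := μ)
      ext z
      simp only [mem_preimage, mem_Iic, mem_empty_iff_false, iff_false, not_le]
      exact (hgIoc z).1
    rw [h2, ENNReal.ofReal_eq_zero] at h1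
    exact le_antisymm h1 (ProbabilityTheory.cdf_nonneg ν 0)
  have hF1 : F 1 = 1 := by
    have h1 : ENNReal.ofReal (F 1) = ν (Iic 1) := ProbabilityTheory.ofReal_cdf ν 1
    have h2 : ν (Iic 1) = 1 := by
      rw [hIic]
      have h3 : g ⁻¹' Iic 1 = univ := by
        ext z; simpa using (hgIoc z).2
      rw [h3]; exact measure_univ
    rw [h2, ENNReal.ofReal_eq_one] at h1
    exact h1
  -- measures of arcs
  have hIocPre : ∀ a b : ℝ, 0 ≤ a → b ≤ 1 → mkc '' Ioc a b = g ⁻¹' Ioc a b := by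
    intro a b ha hb
    ext z
    constructor
    · rintro ⟨s, hs, rfl⟩
      have hs' : s ∈ Ioc (0:ℝ) 1 := ⟨lt_of_le_of_lt ha hs.1, hs.2.trans hb⟩
      simpa [mem_preimage, hrep s hs'] using hs
    · intro hz
      exact ⟨g z, hz, hgmk z⟩
  have hIocMeasure : ∀ a b : ℝ, 0 ≤ a → b ≤ 1 →
      μ (mkc '' Ioc a b) = ENNReal.ofReal (F b - F a) := by
    intro a b ha hb
    rw [hIocPre a b ha hb, ← Measure.map_apply hgmeas measurableSet_Ioc, ← hνdef,
      ← ProbabilityTheory.measure_cdf (μ := ν), StieltjesFunction.measure_Ioc]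
  have hIccMeasure : ∀ a b : ℝ, 0 ≤ a → a ≤ b → b ≤ 1 →
      μ (mkc '' Icc a b) = ENNReal.ofReal (F b - F a) := by
    intro a b ha hab hb
    apply le_antisymm
    · have hsub : mkc '' Icc a b ⊆ (mkc '' Ioc a b) ∪ {mkc a} := by
        rintro _ ⟨s, hs, rfl⟩
        rcases eq_or_lt_of_le hs.1 with rfl | h
        · exact Or.inr rfl
        · exact Or.inl ⟨s, ⟨h, hs.2⟩, rfl⟩
      calc μ (mkc '' Icc a b) ≤ μ (mkc '' Ioc a b) + μ {mkc a} :=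
            le_trans (measure_mono hsub) (measure_union_le _ _)
        _ = ENNReal.ofReal (F b - F a) := by
            rw [hμ (mkc a), add_zero, hIocMeasure a b ha hb]
    · rw [← hIocMeasure a b ha hb]
      exact measure_mono (image_mono Ioc_subset_Icc_self)
  -- division points
  have hq' : (0:ℝ) < q := by exact_mod_cast hq
  have hIVT : ∀ k : ℕ, k ≤ q → ∃ x, x ∈ Icc (0:ℝ) 1 ∧ F x = k / q := by
    intro k hk
    have hmem : (k:ℝ)/q ∈ Icc (F 0) (F 1) := by
      rw [hF0, hF1]
      constructor
      · positivity
      · rw [div_le_one hq']; exact_mod_cast hk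
    obtain ⟨x, hx1, hx2⟩ := intermediate_value_Icc (zero_le_one) hFcont.continuousOn hmem
    exact ⟨x, hx1, hx2⟩
  set A : ℕ → ℝ := fun k => if k = 0 then 0 else if h : k < q then
      Classical.choose (hIVT k h.le) else 1 with hAdef
  have hA0 : A 0 = 0 := by simp [hAdef]
  have hAq : A q = 1 := by simp [hAdef, lt_irrefl, hq.ne']
  have hA : ∀ k : ℕ, k ≤ q → A k ∈ Icc (0:ℝ) 1 ∧ F (A k) = k / q := by
    intro k hk
    rcases Nat.eq_zero_or_pos k with rfl | hk0
    · refine ⟨by rw [hA0]; exact ⟨le_rfl, zero_le_one⟩, by rw [hA0, hF0]; simp⟩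
    rcases eq_or_lt_of_le hk with rfl | hkq
    · refine ⟨by rw [hAq]; exact ⟨zero_le_one, le_rfl⟩, by
        rw [hAq, hF1]; rw [div_self hq'.ne']⟩
    · have hAk : A k = Classical.choose (hIVT k hkq.le) := by
        simp [hAdef, hk0.ne', hkq]
      rw [hAk]
      exact Classical.choose_spec (hIVT k hkq.le)
  have hAlt : ∀ j k : ℕ, j < k → k ≤ q → A j < A k := by
    intro j k hjk hkq
    by_contra hc
    push_neg at hc
    have h1 := hFmono hc
    rw [(hA j (by omega)).2, (hA k hkq).2] at h1
    have h2 : (k:ℝ) ≤ j := by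
      rwa [div_le_div_iff_of_pos_right hq'] at h1
    exact absurd (by exact_mod_cast h2) (not_le.mpr hjk)
  have hAle : ∀ j k : ℕ, j ≤ k → k ≤ q → A j ≤ A k := by
    intro j k hjk hkq
    rcases eq_or_lt_of_le hjk with rfl | h
    · exact le_rfl
    · exact (hAlt j k h hkq).le
  -- the arcs
  set B : Fin q → ℝ := fun i => if (i:ℕ) + p ≤ q then A ((i:ℕ)+p)
    else A ((i:ℕ)+p-q) + 1 with hBdef
  set X : Fin q → Set (AddCircle (1:ℝ)) := fun i => mkc '' Icc (A i) (B i) with hXdef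
  -- condition 1: arcs
  have hcond1 : ∀ i : Fin q, ∃ a b : ℝ, a ≤ b ∧ b ≤ a + 1 ∧ X i = mkc '' Icc a b := by
    intro i
    have hiq : (i:ℕ) < q := i.isLt
    refine ⟨A i, B i, ?_, ?_, rfl⟩
    · by_cases h : (i:ℕ) + p ≤ q
      · simp only [hBdef, if_pos h]
        exact hAle i ((i:ℕ)+p) (by omega) h
      · simp only [hBdef, if_neg h]
        have h1 := (hA ((i:ℕ)+p-q) (by omega)).1
        have h2 := (hA i hiq.le).1
        have := h1.1; have := h2.2
        linarith
    · by_cases h : (i:ℕ) + p ≤ q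
      · simp only [hBdef, if_pos h]
        have h1 := (hA ((i:ℕ)+p) h).1
        have h2 := (hA i hiq.le).1
        have := h1.2; have := h2.1
        linarith
      · simp only [hBdef, if_neg h]
        have := hAle ((i:ℕ)+p-q) i (by omega) hiq.le
        linarith
  -- condition 2: measures
  have hcond2 : ∀ i : Fin q, μ (X i) = ENNReal.ofReal ((p:ℝ)/q) := by
    intro i
    have hiq : (i:ℕ) < q := i.isLt
    have hAi := (hA i hiq.le)
    by_cases h : (i:ℕ) + p ≤ q
    · have hXi : X i = mkc '' Icc (A i) (A ((i:ℕ)+p)) := by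
        simp [hXdef, hBdef, if_pos h]
      have hAip := (hA ((i:ℕ)+p) h)
      rw [hXi, hIccMeasure _ _ hAi.1.1 (hAle i ((i:ℕ)+p) (by omega) h) hAip.1.2,
        hAi.2, hAip.2]
      congr 1
      push_cast
      ring
    · -- wrap-around arc
      have hjq : (i:ℕ)+p-q ≤ q := by omega
      have hAj := (hA ((i:ℕ)+p-q) hjq)
      have hXi : X i = mkc '' Icc (A i) (A ((i:ℕ)+p-q) + 1) := by
        simp [hXdef, hBdef, if_neg h]
      have hcast : ((((i:ℕ)+p-q : ℕ)):ℝ) = (i:ℕ) + p - q := by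
        push_cast [Nat.cast_sub (show q ≤ (i:ℕ)+p by omega)]
        ring
      have hval : ENNReal.ofReal (F 1 - F (A ((i:ℕ)))) +
          ENNReal.ofReal (F (A ((i:ℕ)+p-q)) - F 0) = ENNReal.ofReal ((p:ℝ)/q) := by
        have hnn2 : (0:ℝ) ≤ ((i:ℕ):ℝ) + (p:ℝ) - (q:ℝ) := by
          have hh : q ≤ (i:ℕ) + p := le_of_not_ge h
          have hh2 := (Nat.cast_le (α := ℝ)).mpr hh
          push_cast at hh2
          linarith
        rw [hF0, hF1, hAi.2, hAj.2, hcast,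
          ← ENNReal.ofReal_add (by rw [sub_nonneg, div_le_one hq']; exact_mod_cast hiq.le)
            (by rw [sub_zero]; exact div_nonneg hnn2 hq'.le)]
        congr 1
        field_simp
        ring
      apply le_antisymm
      · have hsub : X i ⊆ (mkc '' Ioc (A i) 1) ∪ ((mkc '' Ioc 0 (A ((i:ℕ)+p-q))) ∪ {mkc (A i)}) := by
          rw [hXi]
          rintro _ ⟨s, hs, rfl⟩
          rcases le_or_gt s 1 with hs1 | hs1
          · rcases eq_or_lt_of_le hs.1 with rfl | hlt
            · exact Or.inr (Or.inr rfl)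
            · exact Or.inl ⟨s, ⟨hlt, hs1⟩, rfl⟩
          · refine Or.inr (Or.inl ⟨s - 1, ⟨by linarith, by linarith [hs.2]⟩, ?_⟩)
            exact ((hcoe (s-1) s).mpr ⟨-1, by push_cast; ring⟩).trans rfl
        calc μ (X i) ≤ μ (mkc '' Ioc (A i) 1) + (μ (mkc '' Ioc 0 (A ((i:ℕ)+p-q))) + μ {mkc (A i)}) :=
              le_trans (measure_mono hsub)
                (le_trans (measure_union_le _ _) (by gcongr; exact measure_union_le _ _))
          _ = ENNReal.ofReal ((p:ℝ)/q) := by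
              rw [hμ (mkc (A i)), add_zero, hIocMeasure _ _ hAi.1.1 le_rfl,
                hIocMeasure _ _ le_rfl hAj.1.2, hval]
      · have hsub : (g ⁻¹' Ioc (A i) 1) ∪ (g ⁻¹' Ioc 0 (A ((i:ℕ)+p-q))) ⊆ X i := by
          rw [← hIocPre _ _ hAi.1.1 le_rfl, ← hIocPre _ _ le_rfl hAj.1.2, hXi]
          rintro z (⟨s, hs, rfl⟩ | ⟨s, hs, rfl⟩)
          · exact ⟨s, ⟨hs.1.le, by linarith [hs.2, hAj.1.1]⟩, rfl⟩
          · refine ⟨s + 1, ⟨by linarith [hs.1, hAi.1.2], by linarith [hs.2]⟩, ?_⟩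
            exact (hcoe (s+1) s).mpr ⟨1, by push_cast; ring⟩
        have hdisj : Disjoint (g ⁻¹' Ioc (A i) 1) (g ⁻¹' Ioc 0 (A ((i:ℕ)+p-q))) := by
          apply Disjoint.preimage
          apply Set.disjoint_left.mpr
          rintro x hx1 hx2
          have := hAle ((i:ℕ)+p-q) i (by omega) hiq.le
          have := hx1.1; have := hx2.2
          linarith
        calc ENNReal.ofReal ((p:ℝ)/q)
            = μ (g ⁻¹' Ioc (A i) 1) + μ (g ⁻¹' Ioc 0 (A ((i:ℕ)+p-q))) := by
              rw [← hIocPre _ _ hAi.1.1 le_rfl, ← hIocPre _ _ le_rfl hAj.1.2,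
                hIocMeasure _ _ hAi.1.1 le_rfl, hIocMeasure _ _ le_rfl hAj.1.2, hval]
          _ = μ ((g ⁻¹' Ioc (A i) 1) ∪ (g ⁻¹' Ioc 0 (A ((i:ℕ)+p-q)))) :=
              (measure_union hdisj (hgmeas measurableSet_Ioc)).symm
          _ ≤ μ (X i) := measure_mono hsub
  -- the null set of endpoints
  set N : Set (AddCircle (1:ℝ)) := ⋃ k : Fin (q+1), {mkc (A k)} with hNdef
  have hNmeas : MeasurableSet N :=
    MeasurableSet.iUnion (fun k => measurableSet_singleton _)
  have hμN : μ N = 0 := measure_iUnion_null (fun k => hμ _)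
  have hμ'N : μ' N = 0 := measure_iUnion_null (fun k => hμ' _)
  -- condition 3: covering
  have hcond3 : ∀ z ∉ N, (Finset.univ.filter (fun i : Fin q => z ∈ X i)).card = p := by
    intro z hz
    set t : ℝ := g z with htdef
    have ht : t ∈ Ioc (0:ℝ) 1 := hgIoc z
    have hzt : mkc t = z := hgmk z
    have htne : ∀ k : ℕ, k ≤ q → t ≠ A k := by
      intro k hk he
      apply hz
      rw [hNdef]
      exact mem_iUnion.mpr ⟨⟨k, by omega⟩, by simp [← hzt, he]⟩
    have ht1 : t < 1 := lt_of_le_of_ne ht.2 (by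
      have := htne q le_rfl; rwa [hAq] at this)
    -- locate t between consecutive division points
    set k : ℕ := Nat.findGreatest (fun j => A j < t) q with hkdef
    have hkq : k ≤ q := Nat.findGreatest_le q
    have hk1 : A k < t :=
      Nat.findGreatest_spec (P := fun j => A j < t) (m := 0) (Nat.zero_le q)
        (by show A 0 < t; rw [hA0]; exact ht.1)
    have hklt : k < q := by
      rcases eq_or_lt_of_le hkq with he | h
      · exfalso; rw [he, hAq] at hk1; linarith
      · exact h
    have hk2 : t < A (k+1) := by
      have h1 : ¬ A (k+1) < t :=
        Nat.findGreatest_is_greatest (P := fun j => A j < t) (n := q)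
          (Nat.lt_succ_self k) (by omega)
      push_neg at h1
      exact lt_of_le_of_ne h1 (htne (k+1) (by omega))
    have hAi_le : ∀ m : ℕ, m ≤ q → (A m ≤ t ↔ m ≤ k) := by
      intro m hm
      constructor
      · intro hle
        by_contra hc
        push_neg at hc
        have := hAle (k+1) m hc hm
        linarith
      · intro hmk
        have := hAle m k hmk (by omega)
        linarith
    have ht_le : ∀ m : ℕ, m ≤ q → (t ≤ A m ↔ k + 1 ≤ m) := by
      intro m hm
      constructor
      · intro hle
        by_contra hc
        push_neg at hc
        have := hAle m k (by omega) (by omega)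
        linarith
      · intro hkm
        have := hAle (k+1) m hkm hm
        linarith
    have hmem : ∀ i : Fin q, z ∈ X i ↔
        (((i:ℕ) ≤ k ∧ k + 1 ≤ (i:ℕ) + p) ∨ (k + 1 ≤ (i:ℕ) + p - q)) := by
      intro i
      have hiq : (i:ℕ) < q := i.isLt
      by_cases h : (i:ℕ) + p ≤ q
      · have hXi : X i = mkc '' Icc (A i) (A ((i:ℕ)+p)) := by
          simp [hXdef, hBdef, if_pos h]
        rw [hXi]
        constructor
        · rintro ⟨s, hs, hsz⟩
          rw [← hzt] at hsz
          obtain ⟨n, hn⟩ := (hcoe s t).mp hsz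
          have hs0 : 0 ≤ s := le_trans (hA i hiq.le).1.1 hs.1
          have hs1 : s ≤ 1 := le_trans hs.2 (hA _ h).1.2
          have l1 : (-1:ℝ) < (n:ℝ) := by rw [← hn]; linarith [ht.2]
          have l2 : (n:ℝ) < 1 := by rw [← hn]; linarith [ht.1]
          have l1' : (-1:ℤ) < n := by exact_mod_cast l1
          have l2' : n < 1 := by exact_mod_cast l2
          have hn0 : n = 0 := by omega
          rw [hn0] at hn
          push_cast at hn
          have hst : s = t := by linarith
          rw [hst] at hs
          exact Or.inl ⟨(hAi_le i hiq.le).mp hs.1, (ht_le _ h).mp hs.2⟩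
        · rintro (⟨h1, h2⟩ | h2)
          · exact ⟨t, ⟨(hAi_le i hiq.le).mpr h1, (ht_le _ h).mpr h2⟩, hzt⟩
          · exfalso; omega
      · have hjq : (i:ℕ)+p-q ≤ q := by omega
        have hXi : X i = mkc '' Icc (A i) (A ((i:ℕ)+p-q) + 1) := by
          simp [hXdef, hBdef, if_neg h]
        rw [hXi]
        constructor
        · rintro ⟨s, hs, hsz⟩
          rw [← hzt] at hsz
          obtain ⟨n, hn⟩ := (hcoe s t).mp hsz
          have hs0 : 0 ≤ s := le_trans (hA i hiq.le).1.1 hs.1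
          have hs2 : s ≤ 2 := le_trans hs.2 (by linarith [(hA _ hjq).1.2])
          have l1 : (-1:ℝ) < (n:ℝ) := by rw [← hn]; linarith [ht.2]
          have l2 : (n:ℝ) < 2 := by rw [← hn]; linarith [ht.1]
          have l1' : (-1:ℤ) < n := by exact_mod_cast l1
          have l2' : n < 2 := by exact_mod_cast l2
          have hn0 : n = 0 ∨ n = 1 := by omega
          rcases hn0 with rfl | rfl
          · push_cast at hn
            have hst : s = t := by linarith
            rw [hst] at hs
            exact Or.inl ⟨(hAi_le i hiq.le).mp hs.1, by omega⟩
          · push_cast at hn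
            have hst : s = t + 1 := by linarith
            rw [hst] at hs
            exact Or.inr ((ht_le _ hjq).mp (by linarith [hs.2]))
        · rintro (⟨h1, h2⟩ | h2)
          · refine ⟨t, ⟨(hAi_le i hiq.le).mpr h1, ?_⟩, hzt⟩
            linarith [ht.2, (hA _ hjq).1.1]
          · refine ⟨t+1, ⟨?_, ?_⟩, ?_⟩
            · linarith [(hA i hiq.le).1.2, ht.1]
            · have := (ht_le _ hjq).mpr h2
              linarith
            · rw [← hzt]
              exact (hcoe (t+1) t).mpr ⟨1, by push_cast; ring⟩
    rw [Finset.filter_congr (fun i _ => by rw [hmem i])]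
    exact countAux p q k hq hpq hklt
  -- measurability of arcs
  have hmkcont : Continuous mkc := continuous_coinduced_rng
  have hXmeas : ∀ i : Fin q, MeasurableSet (X i) := by
    intro i
    obtain ⟨a, b, _, _, hXi⟩ := hcond1 i
    rw [hXi]
    exact ((isCompact_Icc).image hmkcont).measurableSet
  -- pigeonhole
  haveI : Nonempty (Fin q) := ⟨⟨0, hq⟩⟩
  have hsum : (p : ENNReal) ≤ ∑ i : Fin q, μ' (X i) := by
    have h1 : ∑ i : Fin q, μ' (X i)
        = ∫⁻ z, ∑ i : Fin q, (X i).indicator (fun _ => (1:ENNReal)) z ∂μ' := by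
      calc ∑ i : Fin q, μ' (X i)
          = ∑ i : Fin q, ∫⁻ z, (X i).indicator (fun _ => (1:ENNReal)) z ∂μ' :=
            Finset.sum_congr rfl fun i _ => (lintegral_indicator_one (hXmeas i)).symm
        _ = ∫⁻ z, ∑ i : Fin q, (X i).indicator (fun _ => (1:ENNReal)) z ∂μ' :=
            (lintegral_finset_sum _ (fun i _ => measurable_const.indicator (hXmeas i))).symm
    have h2 : ∀ z, (Nᶜ).indicator (fun _ => (p:ENNReal)) z
        ≤ ∑ i : Fin q, (X i).indicator (fun _ => (1:ENNReal)) z := by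
      intro z
      by_cases hz : z ∈ Nᶜ
      · rw [Set.indicator_of_mem hz]
        have hc := hcond3 z hz
        have h3 : ∑ i : Fin q, (X i).indicator (fun _ => (1:ENNReal)) z
            = ((Finset.univ.filter (fun i : Fin q => z ∈ X i)).card : ENNReal) := by
          simp [Set.indicator_apply]
        rw [h3, hc]
      · rw [Set.indicator_of_notMem hz]
        exact zero_le
    have h4 : ∫⁻ z, (Nᶜ).indicator (fun _ => (p:ENNReal)) z ∂μ' = p := by
      rw [lintegral_indicator hNmeas.compl, setLIntegral_const,
        prob_compl_eq_one_sub hNmeas, hμ'N]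
      simp
    calc (p:ENNReal) = ∫⁻ z, (Nᶜ).indicator (fun _ => (p:ENNReal)) z ∂μ' := h4.symm
      _ ≤ ∫⁻ z, ∑ i : Fin q, (X i).indicator (fun _ => (1:ENNReal)) z ∂μ' := lintegral_mono h2
      _ = ∑ i : Fin q, μ' (X i) := h1.symm
  have hconst : ∑ _i : Fin q, ENNReal.ofReal ((p:ℝ)/q) = (p:ENNReal) := by
    rw [Finset.sum_const, Finset.card_univ, Fintype.card_fin, nsmul_eq_mul,
      ← ENNReal.ofReal_natCast q, ← ENNReal.ofReal_mul (by positivity),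
      ← ENNReal.ofReal_natCast p]
    congr 1
    field_simp
  obtain ⟨i₀, -, hmax⟩ := Finset.exists_max_image (Finset.univ : Finset (Fin q))
    (fun i => μ' (X i)) ⟨⟨0, hq⟩, Finset.mem_univ _⟩
  refine ⟨X, hcond1, hcond2, ⟨N, hμN, hμ'N, hcond3⟩, ⟨i₀, ?_⟩⟩
  have hofq : ENNReal.ofReal ((p:ℝ)/q) = (p:ENNReal) / (q:ENNReal) := by
    rw [ENNReal.ofReal_div_of_pos hq', ENNReal.ofReal_natCast, ENNReal.ofReal_natCast]
  rw [hofq, ENNReal.div_le_iff (by exact_mod_cast hq.ne') (by simp)]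
  calc (p:ENNReal) ≤ ∑ i : Fin q, μ' (X i) := hsum
    _ ≤ Finset.univ.card • μ' (X i₀) :=
        Finset.sum_le_card_nsmul _ _ _ (fun i _ => hmax i (Finset.mem_univ i))
    _ = μ' (X i₀) * q := by
        rw [Finset.card_univ, Fintype.card_fin, nsmul_eq_mul, mul_comm]
end

section
/- For any two non-atomic Borel probability measures μ and μ' on the circle S¹ and any real α ∈ [0,1], there exists a closed arc X ⊆ S¹ such that μ(X) = α and μ'(X) ≥ α. -/
open MeasureTheory Set
set_option linter.unusedSectionVars false
set_option linter.unusedVariables false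

namespace ArcAux

noncomputable section

abbrev Circ := AddCircle (1:ℝ)

def arc (a b : ℝ) : Set Circ := (QuotientAddGroup.mk : ℝ → Circ) '' Set.Icc a b

lemma mk_eq_mk {u v : ℝ} : (QuotientAddGroup.mk u : Circ) = QuotientAddGroup.mk v ↔ ∃ k : ℤ, v - u = k := by
  rw [QuotientAddGroup.eq]
  constructor
  · rintro h
    rw [AddSubgroup.mem_zmultiples_iff] at h
    obtain ⟨k, hk⟩ := h
    exact ⟨k, by simp at hk; linarith⟩
  · rintro ⟨k, hk⟩
    rw [AddSubgroup.mem_zmultiples_iff]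
    exact ⟨k, by simp; linarith⟩

lemma mk_add_int (x : ℝ) (n : ℤ) : (QuotientAddGroup.mk (x + n) : Circ) = QuotientAddGroup.mk x := by
  rw [mk_eq_mk]; exact ⟨-n, by push_cast; ring⟩

lemma isCompact_arc (a b : ℝ) : IsCompact (arc a b) :=
  isCompact_Icc.image (AddCircle.continuous_mk' 1)

lemma measurableSet_arc (a b : ℝ) : MeasurableSet (arc a b) :=
  (isCompact_arc a b).isClosed.measurableSet

lemma arc_add_int (a b : ℝ) (n : ℤ) : arc (a + n) (b + n) = arc a b := by
  unfold arc
  have : Icc (a + (n:ℝ)) (b + n) = (fun x => x + (n:ℝ)) '' Icc a b := by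
    rw [Set.image_add_const_Icc]
  rw [this, ← Set.image_comp]
  apply Set.image_congr
  intro x _
  exact mk_add_int x n

lemma arc_union {a b c : ℝ} (hab : a ≤ b) (hbc : b ≤ c) : arc a c = arc a b ∪ arc b c := by
  unfold arc
  rw [← Set.image_union, Set.Icc_union_Icc_eq_Icc hab hbc]

lemma arc_inter_subset {a b c : ℝ} (hab : a ≤ b) (hbc : b ≤ c) (hca : c ≤ a + 1) :
    arc a b ∩ arc b c ⊆ {QuotientAddGroup.mk b, QuotientAddGroup.mk a} := by
  rintro x ⟨⟨u, hu, rfl⟩, ⟨v, hv, hx⟩⟩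
  obtain ⟨k, hk⟩ := mk_eq_mk.mp hx.symm
  -- hk : u - v = k, u ∈ [a,b], v ∈ [b,c]
  have h1 : (0:ℝ) ≤ k := by rw [← hk]; linarith [hu.2, hv.1]
  have h2 : (k:ℝ) ≤ 1 := by rw [← hk]; linarith [hu.1, hv.2]
  have h1' : 0 ≤ k := by exact_mod_cast h1
  have h2' : k ≤ 1 := by exact_mod_cast h2
  interval_cases k
  · -- k = 0 : v = u, so u = b
    have : v = u := by push_cast at hk; linarith
    have : u = b := le_antisymm hu.2 (this ▸ hv.1)
    exact Or.inl (by rw [this])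
  · -- k = 1 : v = u + 1 ≤ c ≤ a + 1, so u = a
    have : v = u + 1 := by push_cast at hk; linarith
    have : u = a := le_antisymm (by linarith [hv.2]) hu.1
    exact Or.inr (by rw [this]; rfl)

section Meas

variable (μ : Measure Circ) [IsProbabilityMeasure μ] (hμ : ∀ z : Circ, μ {z} = 0)
include hμ

lemma arc_add {a b c : ℝ} (hab : a ≤ b) (hbc : b ≤ c) (hca : c ≤ a + 1) :
    μ (arc a c) = μ (arc a b) + μ (arc b c) := by
  rw [arc_union hab hbc]
  apply measure_union₀_aux (measurableSet_arc a b).nullMeasurableSet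
    (measurableSet_arc b c).nullMeasurableSet
  · apply measure_mono_null (arc_inter_subset hab hbc hca)
    refine measure_union_null (hμ _) (hμ _)

omit hμ in
lemma arc_univ (a : ℝ) : arc a (a + 1) = univ := by
  ext z
  simp only [mem_univ, iff_true]
  induction z using QuotientAddGroup.induction_on with
  | H t =>
    refine ⟨a + Int.fract (t - a), ⟨by simp [Int.fract_nonneg], by linarith [(Int.fract_lt_one (t - a)).le]⟩, ?_⟩
    have : a + Int.fract (t - a) = t + (-⌊t - a⌋ : ℤ) := by
      rw [Int.fract]; push_cast; ring
    rw [this, mk_add_int]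

lemma arc_zero (a : ℝ) : μ (arc a a) = 0 := by
  have : arc a a = {QuotientAddGroup.mk a} := by simp [arc]
  rw [this]; exact hμ _

/-- The lifted CDF of `μ`. -/
def cdf (x : ℝ) : ℝ := ⌊x⌋ + (μ (arc 0 (Int.fract x))).toReal

omit hμ in
lemma cdf_add_one (x : ℝ) : cdf μ (x + 1) = cdf μ x + 1 := by
  unfold cdf
  rw [Int.fract_add_one, Int.floor_add_one]
  push_cast; ring

omit hμ in
lemma cdf_add_int (x : ℝ) (n : ℤ) : cdf μ (x + n) = cdf μ x + n := by
  unfold cdf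
  rw [Int.fract_add_intCast, Int.floor_add_intCast]
  push_cast; ring

lemma toReal_arc_add {a b c : ℝ} (hab : a ≤ b) (hbc : b ≤ c) (hca : c ≤ a + 1) :
    (μ (arc a c)).toReal = (μ (arc a b)).toReal + (μ (arc b c)).toReal := by
  rw [arc_add μ hμ hab hbc hca, ENNReal.toReal_add (measure_ne_top μ _) (measure_ne_top μ _)]

lemma cdf_key0 {a b : ℝ} (h0 : 0 ≤ a) (h1 : a < 1) (hab : a ≤ b) (hba : b ≤ a + 1) :
    (μ (arc a b)).toReal = cdf μ b - cdf μ a := by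
  have hcdfa : cdf μ a = (μ (arc 0 a)).toReal := by
    unfold cdf
    rw [Int.floor_eq_zero_iff.mpr ⟨h0, h1⟩, Int.fract_eq_self.mpr ⟨h0, h1⟩]
    simp
  rcases lt_or_ge b 1 with hb1 | hb1
  · have hb0 : 0 ≤ b := le_trans h0 hab
    have hcdfb : cdf μ b = (μ (arc 0 b)).toReal := by
      unfold cdf
      rw [Int.floor_eq_zero_iff.mpr ⟨hb0, hb1⟩, Int.fract_eq_self.mpr ⟨hb0, hb1⟩]
      simp
    rw [hcdfa, hcdfb]
    have := toReal_arc_add μ hμ h0 hab (le_of_lt (by linarith) : b ≤ (0:ℝ) + 1)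
    linarith
  · have hb2 : b < 2 := by linarith
    have hfb : ⌊b⌋ = 1 := Int.floor_eq_iff.mpr ⟨by exact_mod_cast hb1, by push_cast; linarith⟩
    have hcdfb : cdf μ b = 1 + (μ (arc 0 (b - 1))).toReal := by
      unfold cdf
      rw [Int.fract, hfb]
      norm_num
    have h1b : arc 1 b = arc 0 (b - 1) := by
      have h := arc_add_int 0 (b - 1) 1
      norm_num at h
      exact h
    have e1 : (μ (arc a b)).toReal = (μ (arc a 1)).toReal + (μ (arc 1 b)).toReal :=
      toReal_arc_add μ hμ (le_of_lt h1) hb1 hba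
    have e2 : (μ (arc 0 1)).toReal = (μ (arc 0 a)).toReal + (μ (arc a 1)).toReal :=
      toReal_arc_add μ hμ h0 (le_of_lt h1) (by norm_num)
    have e3 : (μ (arc 0 1)).toReal = 1 := by
      have : arc 0 1 = univ := by simpa using arc_univ 0
      rw [this, measure_univ]; simp
    rw [h1b] at e1
    rw [hcdfa, hcdfb]
    linarith

lemma cdf_key {a b : ℝ} (hab : a ≤ b) (hba : b ≤ a + 1) :
    (μ (arc a b)).toReal = cdf μ b - cdf μ a := by
  have key := cdf_key0 μ hμ (a := a - ⌊a⌋) (b := b - ⌊a⌋)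
    (by linarith [Int.floor_le a]) (by linarith [Int.lt_floor_add_one a])
    (by linarith) (by linarith)
  have harc : arc (a - ⌊a⌋) (b - ⌊a⌋) = arc a b := by
    have h := arc_add_int (a - ⌊a⌋) (b - ⌊a⌋) ⌊a⌋
    rw [sub_add_cancel, sub_add_cancel] at h
    exact h.symm
  rw [harc] at key
  rw [key]
  have ha' : cdf μ (a - ⌊a⌋) = cdf μ a - ⌊a⌋ := by
    have h := cdf_add_int μ (a - ⌊a⌋) ⌊a⌋
    rw [sub_add_cancel] at h; linarith
  have hb' : cdf μ (b - ⌊a⌋) = cdf μ b - ⌊a⌋ := by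
    have h := cdf_add_int μ (b - ⌊a⌋) ⌊a⌋
    rw [sub_add_cancel] at h; linarith
  rw [ha', hb']; ring

lemma cdf_nonneg_step {a b : ℝ} (hab : a ≤ b) (hba : b ≤ a + 1) : cdf μ a ≤ cdf μ b := by
  have := cdf_key μ hμ hab hba
  have h0 := ENNReal.toReal_nonneg (a := μ (arc a b))
  linarith

lemma cdf_mono : Monotone (cdf μ) := by
  have step : ∀ n : ℕ, ∀ x y : ℝ, x ≤ y → y ≤ x + n → cdf μ x ≤ cdf μ y := by
    intro n
    induction n with
    | zero => intro x y h1 h2; norm_num at h2; rw [le_antisymm h2 h1]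
    | succ n ih =>
      intro x y h1 h2
      rcases le_or_gt y (x + 1) with h | h
      · exact cdf_nonneg_step μ hμ h1 h
      · have ha := ih (x + 1) y (le_of_lt h) (by push_cast at h2 ⊢; linarith)
        have hb := cdf_add_one μ x
        linarith
  intro x y hxy
  obtain ⟨n, hn⟩ := exists_nat_ge (y - x)
  exact step n x y hxy (by linarith)

omit hμ in
lemma cdf_le (x : ℝ) : cdf μ x ≤ x + 1 := by
  unfold cdf
  have h1 : (μ (arc 0 (Int.fract x))).toReal ≤ 1 := by
    have := prob_le_one (μ := μ) (s := arc 0 (Int.fract x))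
    exact ENNReal.toReal_le_of_le_ofReal one_pos.le (by simpa using this)
  have := Int.floor_le x
  linarith

omit hμ in
lemma le_cdf (x : ℝ) : x - 1 ≤ cdf μ x := by
  unfold cdf
  have h1 : 0 ≤ (μ (arc 0 (Int.fract x))).toReal := ENNReal.toReal_nonneg
  have := Int.lt_floor_add_one x
  linarith

lemma tendsto_arc_right (p : ℝ) :
    Filter.Tendsto (fun n : ℕ => μ (arc p (p + 1/(n+1)))) Filter.atTop (nhds 0) := by
  have hset : (⋂ n : ℕ, arc p (p + 1/(n+1))) = {QuotientAddGroup.mk p} := by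
    apply Set.Subset.antisymm
    · intro z hz
      simp only [Set.mem_iInter] at hz
      obtain ⟨u, hu, hzu⟩ := hz 1
      have hu2 : u ≤ p + 1/2 := by norm_num at hu; exact hu.2
      have key : ∀ n : ℕ, 1 ≤ n → u ≤ p + 1/(n+1) := by
        intro n hn
        obtain ⟨v, hv, hzv⟩ := hz n
        obtain ⟨k, hk⟩ := mk_eq_mk.mp (hzv.trans hzu.symm)
        -- hk : u - v = k
        have hhalf : (1:ℝ)/(n+1) ≤ 1/2 := by
          apply one_div_le_one_div_of_le (by norm_num)
          have : (2:ℕ) ≤ n + 1 := Nat.succ_le_succ hn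
          exact_mod_cast this
        have hk0 : k = 0 := by
          have h1 : (k:ℝ) ≤ 1/2 := by rw [← hk]; linarith [hv.1, hu.1]
          have h2 : -(1/2 : ℝ) ≤ (k:ℝ) := by rw [← hk]; linarith [hv.2, hu.1]
          have hlt : |(k:ℝ)| < 1 := abs_lt.mpr ⟨by linarith, by linarith⟩
          rw [← Int.cast_abs] at hlt
          have : |k| < 1 := by exact_mod_cast hlt
          exact Int.abs_lt_one_iff.mp this
        have huv : u = v := by rw [hk0] at hk; push_cast at hk; linarith
        rw [huv]; exact hv.2
      have hup : u = p := by
        refine le_antisymm ?_ hu.1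
        by_contra hlt
        push_neg at hlt
        obtain ⟨n, hn⟩ := exists_nat_one_div_lt (show 0 < u - p by linarith)
        have h1 := key (n + 1) (Nat.le_add_left 1 n)
        have h2 : (1:ℝ)/((n:ℝ)+1+1) ≤ 1/(n+1) := by
          apply one_div_le_one_div_of_le (by positivity)
          linarith
        push_cast at h1
        linarith
      rw [← hzu, hup]
      exact Set.mem_singleton _
    · intro z hz
      rw [Set.mem_singleton_iff] at hz
      subst hz
      simp only [Set.mem_iInter]
      intro n
      exact ⟨p, ⟨le_refl p, le_add_of_nonneg_right (by positivity)⟩, rfl⟩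
  have h := MeasureTheory.tendsto_measure_iInter_atTop (μ := μ)
    (s := fun n : ℕ => arc p (p + 1/(n+1)))
    (fun n => (measurableSet_arc _ _).nullMeasurableSet)
    (fun m n hmn => by
      apply Set.image_mono
      apply Set.Icc_subset_Icc le_rfl
      have h2 : (1:ℝ)/(n+1) ≤ 1/(m+1) := by
        apply one_div_le_one_div_of_le (by positivity)
        have : (m:ℝ) ≤ n := by exact_mod_cast hmn
        linarith
      linarith)
    ⟨0, measure_ne_top μ _⟩
  rw [hset, hμ] at h
  exact h

lemma tendsto_arc_left (p : ℝ) :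
    Filter.Tendsto (fun n : ℕ => μ (arc (p - 1/(n+1)) p)) Filter.atTop (nhds 0) := by
  have hset : (⋂ n : ℕ, arc (p - 1/(n+1)) p) = {QuotientAddGroup.mk p} := by
    apply Set.Subset.antisymm
    · intro z hz
      simp only [Set.mem_iInter] at hz
      obtain ⟨u, hu, hzu⟩ := hz 1
      have hu2 : p - 1/2 ≤ u := by have := hu.1; norm_num at this; linarith
      have key : ∀ n : ℕ, 1 ≤ n → p - 1/(n+1) ≤ u := by
        intro n hn
        obtain ⟨v, hv, hzv⟩ := hz n
        obtain ⟨k, hk⟩ := mk_eq_mk.mp (hzv.trans hzu.symm)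
        have hhalf : (1:ℝ)/(n+1) ≤ 1/2 := by
          apply one_div_le_one_div_of_le (by norm_num)
          have : (2:ℕ) ≤ n + 1 := Nat.succ_le_succ hn
          exact_mod_cast this
        have hk0 : k = 0 := by
          have h1 : (k:ℝ) ≤ 1/2 := by rw [← hk]; linarith [hv.1, hu.2]
          have h2 : -(1/2 : ℝ) ≤ (k:ℝ) := by rw [← hk]; linarith [hv.2, hu.2]
          have hlt : |(k:ℝ)| < 1 := abs_lt.mpr ⟨by linarith, by linarith⟩
          rw [← Int.cast_abs] at hlt
          have : |k| < 1 := by exact_mod_cast hlt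
          exact Int.abs_lt_one_iff.mp this
        have huv : u = v := by rw [hk0] at hk; push_cast at hk; linarith
        rw [huv]; exact hv.1
      have hup : u = p := by
        refine le_antisymm hu.2 ?_
        by_contra hlt
        push_neg at hlt
        obtain ⟨n, hn⟩ := exists_nat_one_div_lt (show 0 < p - u by linarith)
        have h1 := key (n + 1) (Nat.le_add_left 1 n)
        have h2 : (1:ℝ)/((n:ℝ)+1+1) ≤ 1/(n+1) := by
          apply one_div_le_one_div_of_le (by positivity)
          linarith
        push_cast at h1
        linarith
      rw [← hzu, hup]
      exact Set.mem_singleton _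
    · intro z hz
      rw [Set.mem_singleton_iff] at hz
      subst hz
      simp only [Set.mem_iInter]
      intro n
      exact ⟨p, ⟨by linarith [one_div_pos.mpr (show (0:ℝ) < n+1 by positivity)], le_refl p⟩, rfl⟩
  have h := MeasureTheory.tendsto_measure_iInter_atTop (μ := μ)
    (s := fun n : ℕ => arc (p - 1/(n+1)) p)
    (fun n => (measurableSet_arc _ _).nullMeasurableSet)
    (fun m n hmn => by
      apply Set.image_mono
      apply Set.Icc_subset_Icc _ le_rfl
      have h2 : (1:ℝ)/(n+1) ≤ 1/(m+1) := by
        apply one_div_le_one_div_of_le (by positivity)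
        have : (m:ℝ) ≤ n := by exact_mod_cast hmn
        linarith
      linarith)
    ⟨0, measure_ne_top μ _⟩
  rw [hset, hμ] at h
  exact h

lemma cdf_tendsto_right (p : ℝ) :
    Filter.Tendsto (fun n : ℕ => cdf μ (p + 1/(n+1))) Filter.atTop (nhds (cdf μ p)) := by
  have heq : ∀ n : ℕ, cdf μ (p + 1/(n+1)) = cdf μ p + (μ (arc p (p + 1/(n+1)))).toReal := by
    intro n
    have h1 : (0:ℝ) < 1/(n+1) := by positivity
    have h2 : (1:ℝ)/(n+1) ≤ 1 := by
      apply div_le_one_of_le₀ <;> [push_cast; skip] <;> [linarith [Nat.cast_nonneg (α := ℝ) n]; positivity]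
    have := cdf_key μ hμ (by linarith : p ≤ p + 1/(n+1)) (by linarith)
    linarith
  have h2 : Filter.Tendsto (fun n : ℕ => (μ (arc p (p + 1/(n+1)))).toReal) Filter.atTop (nhds 0) := by
    have := (ENNReal.tendsto_toReal (a := 0) (by simp)).comp (tendsto_arc_right μ hμ p)
    simpa [Function.comp_def] using this
  have : Filter.Tendsto (fun n : ℕ => cdf μ p + (μ (arc p (p + 1/(n+1)))).toReal)
      Filter.atTop (nhds (cdf μ p + 0)) := Filter.Tendsto.const_add _ h2
  rw [add_zero] at this
  exact (funext heq : (fun n : ℕ => cdf μ (p + 1/(n+1))) = _) ▸ this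

lemma cdf_tendsto_left (p : ℝ) :
    Filter.Tendsto (fun n : ℕ => cdf μ (p - 1/(n+1))) Filter.atTop (nhds (cdf μ p)) := by
  have heq : ∀ n : ℕ, cdf μ (p - 1/(n+1)) = cdf μ p - (μ (arc (p - 1/(n+1)) p)).toReal := by
    intro n
    have h1 : (0:ℝ) < 1/(n+1) := by positivity
    have h2 : (1:ℝ)/(n+1) ≤ 1 := by
      apply div_le_one_of_le₀ <;> [push_cast; skip] <;> [linarith [Nat.cast_nonneg (α := ℝ) n]; positivity]
    have := cdf_key μ hμ (by linarith : p - 1/(n+1) ≤ p) (by linarith)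
    linarith
  have h2 : Filter.Tendsto (fun n : ℕ => (μ (arc (p - 1/(n+1)) p)).toReal) Filter.atTop (nhds 0) := by
    have := (ENNReal.tendsto_toReal (a := 0) (by simp)).comp (tendsto_arc_left μ hμ p)
    simpa [Function.comp_def] using this
  have : Filter.Tendsto (fun n : ℕ => cdf μ p - (μ (arc (p - 1/(n+1)) p)).toReal)
      Filter.atTop (nhds (cdf μ p - 0)) := Filter.Tendsto.const_sub _ h2
  rw [sub_zero] at this
  exact (funext heq : (fun n : ℕ => cdf μ (p - 1/(n+1))) = _) ▸ this

/-- Generalized inverse of the CDF. -/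
def ginv (t : ℝ) : ℝ := sInf {x | t ≤ cdf μ x}

omit hμ in
lemma ginv_nonempty (t : ℝ) : {x | t ≤ cdf μ x}.Nonempty :=
  ⟨t + 1, by have := le_cdf μ (t + 1); simp only [Set.mem_setOf_eq]; linarith⟩

omit hμ in
lemma ginv_bddBelow (t : ℝ) : BddBelow {x | t ≤ cdf μ x} := by
  refine ⟨t - 1, fun x hx => ?_⟩
  have := cdf_le μ x
  simp only [Set.mem_setOf_eq] at hx
  linarith

lemma cdf_ginv (t : ℝ) : cdf μ (ginv μ t) = t := by
  set p := ginv μ t with hp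
  have hps : sInf {x | t ≤ cdf μ x} = p := rfl
  have hub : t ≤ cdf μ p := by
    have h1 : ∀ n : ℕ, t ≤ cdf μ (p + 1/(n+1)) := by
      intro n
      have hlt : sInf {x | t ≤ cdf μ x} < p + 1/(n+1) := by
        rw [hps]; have : (0:ℝ) < 1/(n+1) := by positivity
        linarith
      obtain ⟨x, hx, hxlt⟩ := (csInf_lt_iff (ginv_bddBelow μ t) (ginv_nonempty μ t)).mp hlt
      exact le_trans hx (cdf_mono μ hμ (le_of_lt hxlt))
    exact ge_of_tendsto (cdf_tendsto_right μ hμ p) (Filter.Eventually.of_forall h1)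
  have hlb : cdf μ p ≤ t := by
    have h2 : ∀ n : ℕ, cdf μ (p - 1/(n+1)) ≤ t := by
      intro n
      by_contra hc
      push_neg at hc
      have hmem : p - 1/(n+1) ∈ {x | t ≤ cdf μ x} := le_of_lt hc
      have := csInf_le (ginv_bddBelow μ t) hmem
      rw [hps] at this
      have hpos : (0:ℝ) < 1/(n+1) := by positivity
      linarith
    exact le_of_tendsto (cdf_tendsto_left μ hμ p) (Filter.Eventually.of_forall h2)
  linarith

omit hμ in
lemma ginv_mono : Monotone (ginv μ) := by
  intro s t hst
  apply csInf_le_csInf (ginv_bddBelow μ s) (ginv_nonempty μ t)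
  intro x hx
  simp only [Set.mem_setOf_eq] at hx ⊢
  linarith

lemma ginv_add_one (t : ℝ) : ginv μ (t + 1) = ginv μ t + 1 := by
  apply le_antisymm
  · apply csInf_le (ginv_bddBelow μ (t+1))
    simp only [Set.mem_setOf_eq]
    rw [cdf_add_one, cdf_ginv μ hμ]
  · apply le_csInf (ginv_nonempty μ (t+1))
    intro x hx
    simp only [Set.mem_setOf_eq] at hx
    have hmem : x - 1 ∈ {y | t ≤ cdf μ y} := by
      simp only [Set.mem_setOf_eq]
      have := cdf_add_one μ (x - 1)
      rw [sub_add_cancel] at this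
      linarith
    have := csInf_le (ginv_bddBelow μ t) hmem
    have h2 : ginv μ t ≤ x - 1 := this
    linarith

end Meas

/-- The key combinatorial fact: a monotone degree-one circle map displaces some point by
at least `α`. -/
lemma exists_good (φ : ℝ → ℝ) (hmono : Monotone φ) (hper : ∀ t, φ (t + 1) = φ t + 1)
    (α : ℝ) (hα0 : 0 ≤ α) : ∃ t, α ≤ φ (t + α) - φ t := by
  by_contra hcon
  push_neg at hcon
  have hmono' : Monotone (fun t => φ (t + α)) :=
    hmono.comp (fun x y h => add_le_add_left h α)
  have hφint : ∀ a b : ℝ, IntervalIntegrable φ volume a b := fun a b => hmono.intervalIntegrable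
  have hφaint : IntervalIntegrable (fun t => φ (t + α)) volume 0 1 := hmono'.intervalIntegrable
  have hdint : IntervalIntegrable (fun t => φ (t + α) - φ t) volume 0 1 :=
    hφaint.sub (hφint 0 1)
  -- the integral of the displacement is α
  have e1 : ∫ t in (0:ℝ)..1, φ (t + α) = ∫ t in α..(1+α), φ t := by
    have := intervalIntegral.integral_comp_add_right (a := (0:ℝ)) (b := 1) (d := α) φ
    simpa [add_comm] using this
  have e2 : ∫ t in (0:ℝ)..α, φ (t + 1) = ∫ t in (1:ℝ)..(1+α), φ t := by
    have := intervalIntegral.integral_comp_add_right (a := (0:ℝ)) (b := α) (d := 1) φ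
    simpa [add_comm] using this
  have e3 : ∫ t in (0:ℝ)..α, φ (t + 1) = (∫ t in (0:ℝ)..α, φ t) + α := by
    have hcong : ∀ t ∈ Set.uIcc (0:ℝ) α, φ (t + 1) = φ t + 1 := fun t _ => hper t
    rw [intervalIntegral.integral_congr hcong,
      intervalIntegral.integral_add (hφint 0 α) intervalIntegrable_const]
    simp [hα0]
  have e4 : (∫ t in (0:ℝ)..α, φ t) + ∫ t in α..(1:ℝ), φ t = ∫ t in (0:ℝ)..1, φ t :=
    intervalIntegral.integral_add_adjacent_intervals (hφint 0 α) (hφint α 1)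
  have e5 : (∫ t in (α:ℝ)..1, φ t) + ∫ t in (1:ℝ)..(1+α), φ t = ∫ t in α..(1+α), φ t :=
    intervalIntegral.integral_add_adjacent_intervals (hφint α 1) (hφint 1 (1+α))
  have hI : ∫ t in (0:ℝ)..1, (φ (t + α) - φ t) = α := by
    rw [intervalIntegral.integral_sub hφaint (hφint 0 1), e1]
    linarith
  -- but the displacement is everywhere < α
  have hgpos : ∀ t, 0 < α - (φ (t + α) - φ t) := fun t => by linarith [hcon t]
  have hgint : IntervalIntegrable (fun t => α - (φ (t + α) - φ t)) volume 0 1 :=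
    intervalIntegrable_const.sub hdint
  have hg0 : ∫ t in (0:ℝ)..1, (α - (φ (t + α) - φ t)) = 0 := by
    rw [intervalIntegral.integral_sub intervalIntegrable_const hdint, hI]
    simp
  rw [intervalIntegral.integral_of_le (by norm_num : (0:ℝ) ≤ 1)] at hg0
  have hgint' : MeasureTheory.Integrable (fun t => α - (φ (t + α) - φ t))
      (volume.restrict (Set.Ioc (0:ℝ) 1)) := by
    exact hgint.1
  have hae : (fun t => α - (φ (t + α) - φ t)) =ᵐ[volume.restrict (Set.Ioc (0:ℝ) 1)] 0 :=
    (MeasureTheory.integral_eq_zero_iff_of_nonneg (fun t => (hgpos t).le) hgint').mp hg0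
  have hne : (volume.restrict (Set.Ioc (0:ℝ) 1)) ≠ 0 := by
    intro h
    rw [MeasureTheory.Measure.restrict_eq_zero] at h
    simp at h
  have : (MeasureTheory.ae (volume.restrict (Set.Ioc (0:ℝ) 1))).NeBot :=
    MeasureTheory.ae_neBot.mpr hne
  obtain ⟨x, hx⟩ := hae.exists
  have := hgpos x
  simp only [Pi.zero_apply] at hx
  linarith

theorem main (μ μ' : Measure Circ)
    [IsProbabilityMeasure μ] [IsProbabilityMeasure μ']
    (hμ : ∀ z : Circ, μ {z} = 0) (hμ' : ∀ z : Circ, μ' {z} = 0)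
    (α : ℝ) (hα : α ∈ Set.Icc (0 : ℝ) 1) :
    ∃ (a b : ℝ), a ≤ b ∧ b ≤ a + 1 ∧
      μ (arc a b) = ENNReal.ofReal α ∧ ENNReal.ofReal α ≤ μ' (arc a b) := by
  obtain ⟨hα0, hα1⟩ := hα
  set φ : ℝ → ℝ := fun t => cdf μ' (ginv μ t) with hφ
  have hφmono : Monotone φ := fun s t h => cdf_mono μ' hμ' (ginv_mono μ h)
  have hφper : ∀ t, φ (t + 1) = φ t + 1 := by
    intro t
    show cdf μ' (ginv μ (t + 1)) = cdf μ' (ginv μ t) + 1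
    rw [ginv_add_one μ hμ, cdf_add_one μ']
  obtain ⟨t, ht⟩ := exists_good φ hφmono hφper α hα0
  refine ⟨ginv μ t, ginv μ (t + α), ginv_mono μ (by linarith), ?_, ?_, ?_⟩
  · calc ginv μ (t + α) ≤ ginv μ (t + 1) := ginv_mono μ (by linarith)
      _ = ginv μ t + 1 := ginv_add_one μ hμ t
  · have hk := cdf_key μ hμ (ginv_mono μ (by linarith : t ≤ t + α))
      (by calc ginv μ (t + α) ≤ ginv μ (t + 1) := ginv_mono μ (by linarith)
            _ = ginv μ t + 1 := ginv_add_one μ hμ t)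
    rw [cdf_ginv μ hμ, cdf_ginv μ hμ] at hk
    have h2 : (μ (arc (ginv μ t) (ginv μ (t + α)))).toReal = α := by rw [hk]; ring
    rw [← ENNReal.ofReal_toReal (measure_ne_top μ (arc (ginv μ t) (ginv μ (t + α)))), h2]
  · have hk := cdf_key μ' hμ' (ginv_mono μ (by linarith : t ≤ t + α))
      (by calc ginv μ (t + α) ≤ ginv μ (t + 1) := ginv_mono μ (by linarith)
            _ = ginv μ t + 1 := ginv_add_one μ hμ t)
    have hge : α ≤ (μ' (arc (ginv μ t) (ginv μ (t + α)))).toReal := by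
      rw [hk]; exact ht
    calc ENNReal.ofReal α ≤ ENNReal.ofReal (μ' (arc (ginv μ t) (ginv μ (t + α)))).toReal :=
          ENNReal.ofReal_le_ofReal hge
      _ = μ' (arc (ginv μ t) (ginv μ (t + α))) := ENNReal.ofReal_toReal (measure_ne_top μ' _)

end
end ArcAux

open ArcAux in
/-- For any two non-atomic Borel probability measures on the circle `S¹ = ℝ/ℤ` and any real
`α ∈ [0,1]`, there is a closed arc `X` with `μ X = α` and `μ' X ≥ α`. -/
theorem arc_lemma (μ μ' : Measure (AddCircle (1 : ℝ)))
    [IsProbabilityMeasure μ] [IsProbabilityMeasure μ']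
    (hμ : ∀ z : AddCircle (1 : ℝ), μ {z} = 0)
    (hμ' : ∀ z : AddCircle (1 : ℝ), μ' {z} = 0)
    (α : ℝ) (hα : α ∈ Set.Icc (0 : ℝ) 1) :
    ∃ (a b : ℝ), a ≤ b ∧ b ≤ a + 1 ∧
      μ ((QuotientAddGroup.mk : ℝ → AddCircle (1 : ℝ)) '' Set.Icc a b) = ENNReal.ofReal α ∧
      ENNReal.ofReal α ≤ μ' ((QuotientAddGroup.mk : ℝ → AddCircle (1 : ℝ)) '' Set.Icc a b) :=
  ArcAux.main μ μ' hμ hμ' α hα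
end

section
/- For any two non-atomic Borel probability measures μ₁, μ₂ on [0,1] and non-negative reals α₁, α₂ with α₁ + α₂ = 1, there exists a partition of [0,1] into at most 3 intervals (i.e., using at most 2 cut points) and an assignment of these intervals to the two agents such that, writing X₁ and X₂ for the unions of the intervals assigned to agents 1 and 2 respectively, μ₁(X₁) ≥ α₁ and μ₂(X₂) ≥ α₂. -/
open MeasureTheory Set


lemma cdf_cont (μ : Measure ℝ) [IsProbabilityMeasure μ] (ha : ∀ p : ℝ, μ {p} = 0) :
    Continuous (ProbabilityTheory.cdf μ) := by
  rw [continuous_iff_continuousAt]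
  intro x
  have hm := ProbabilityTheory.monotone_cdf μ
  rw [hm.continuousAt_iff_leftLim_eq_rightLim]
  have hr : Function.rightLim (ProbabilityTheory.cdf μ) x = ProbabilityTheory.cdf μ x := by
    apply hm.continuousWithinAt_Ioi_iff_rightLim_eq.mp
    exact ((ProbabilityTheory.cdf μ).right_continuous x).mono Ioi_subset_Ici_self
  have hl : Function.leftLim (ProbabilityTheory.cdf μ) x = ProbabilityTheory.cdf μ x := by
    have h0 : (ProbabilityTheory.cdf μ).measure {x} = 0 := by
      rw [ProbabilityTheory.measure_cdf]; exact ha x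
    rw [StieltjesFunction.measure_singleton] at h0
    have h1 : ProbabilityTheory.cdf μ x - Function.leftLim (ProbabilityTheory.cdf μ) x ≤ 0 :=
      ENNReal.ofReal_eq_zero.mp h0
    have h2 := hm.leftLim_le (le_refl x)
    linarith
  rw [hl, hr]

lemma meas_Ioc (μ : Measure ℝ) [IsProbabilityMeasure μ] (a b : ℝ) :
    μ (Ioc a b) = ENNReal.ofReal (ProbabilityTheory.cdf μ b - ProbabilityTheory.cdf μ a) := by
  conv_lhs => rw [← ProbabilityTheory.measure_cdf μ]
  exact StieltjesFunction.measure_Ioc _ a b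

lemma cdf_zero (μ : Measure ℝ) [IsProbabilityMeasure μ] (hs : μ (Set.Icc (0 : ℝ) 1)ᶜ = 0)
    (ha : ∀ p : ℝ, μ {p} = 0) : ProbabilityTheory.cdf μ 0 = 0 := by
  rw [ProbabilityTheory.cdf_eq_real, measureReal_def]
  have : μ (Iic (0:ℝ)) = 0 := by
    have hsub : Iic (0:ℝ) ⊆ {0} ∪ (Set.Icc (0:ℝ) 1)ᶜ := by
      intro t ht
      have ht' : t ≤ 0 := ht
      rcases ht'.lt_or_eq with h | h
      · exact Or.inr (by simp only [mem_compl_iff, Set.mem_Icc, not_and, not_le]; intro h'; linarith)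
      · exact Or.inl (by simp [h])
    have := measure_mono (μ := μ) hsub
    simpa [measure_union_le, ha 0, hs] using le_antisymm ((this).trans (by
      calc μ ({(0:ℝ)} ∪ (Set.Icc (0:ℝ) 1)ᶜ) ≤ μ {(0:ℝ)} + μ (Set.Icc (0:ℝ) 1)ᶜ := measure_union_le _ _
      _ = 0 := by rw [ha 0, hs, add_zero])) zero_le'
  simp [this]

lemma cdf_one (μ : Measure ℝ) [IsProbabilityMeasure μ] (hs : μ (Set.Icc (0 : ℝ) 1)ᶜ = 0) :
    ProbabilityTheory.cdf μ 1 = 1 := by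
  rw [ProbabilityTheory.cdf_eq_real, measureReal_def]
  have h0 : μ (Ioi (1:ℝ)) = 0 := by
    have hsub : Ioi (1:ℝ) ⊆ (Set.Icc (0:ℝ) 1)ᶜ := by
      intro t ht; simp only [mem_compl_iff, Set.mem_Icc, not_and, not_le]
      intro _; exact ht
    exact le_antisymm ((measure_mono hsub).trans hs.le) zero_le'
  have : μ (Iic (1:ℝ)) = 1 := by
    have := measure_add_measure_compl (μ := μ) (measurableSet_Iic (a := (1:ℝ)))
    rw [compl_Iic, h0, add_zero] at this
    simpa using this
  simp [this]

open intervalIntegral in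
lemma key_lemma (F₁ F₂ : ℝ → ℝ) (h₁m : Monotone F₁) (h₂m : Monotone F₂)
    (h₁c : Continuous F₁) (hF₁0 : F₁ 0 = 0) (hF₁1 : F₁ 1 = 1)
    {α₁ α₂ : ℝ} (h₁ : 0 < α₁) (h₂ : 0 < α₂) (hsum : α₁ + α₂ = 1) :
    ∃ u v : ℝ, 0 ≤ u ∧ u ≤ v ∧ v ≤ 1 ∧
      ((α₁ ≤ F₁ v - F₁ u ∧ F₂ v - F₂ u ≤ α₁) ∨
       (α₂ ≤ F₂ v - F₂ u ∧ F₁ v - F₁ u ≤ α₂)) := by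
  have hα₁1 : α₁ ≤ 1 := by linarith
  have hα₂1 : α₂ ≤ 1 := by linarith
  by_contra hcon
  push_neg at hcon
  -- quantile functions
  set S : ℝ → Set ℝ := fun x => {t | t ∈ Icc (0:ℝ) 1 ∧ x ≤ F₁ t} with hS
  set T : ℝ → Set ℝ := fun x => {t | t ∈ Icc (0:ℝ) 1 ∧ F₁ t ≤ x} with hT
  set q : ℝ → ℝ := fun x => sInf (S x) with hq
  set r : ℝ → ℝ := fun x => sSup (T x) with hr
  have hSbdd : ∀ x, BddBelow (S x) := fun x => ⟨0, fun t ht => ht.1.1⟩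
  have hTbdd : ∀ x, BddAbove (T x) := fun x => ⟨1, fun t ht => ht.1.2⟩
  have hSne : ∀ x, x ≤ 1 → (S x).Nonempty := fun x hx =>
    ⟨1, ⟨⟨zero_le_one, le_refl 1⟩, by rw [hF₁1]; exact hx⟩⟩
  have hTne : ∀ x, 0 ≤ x → (T x).Nonempty := fun x hx =>
    ⟨0, ⟨⟨le_refl 0, zero_le_one⟩, by rw [hF₁0]; exact hx⟩⟩
  have hScl : ∀ x, IsClosed (S x) := by
    intro x
    have : S x = Icc 0 1 ∩ F₁ ⁻¹' (Ici x) := by ext t; simp [hS, Set.mem_Icc, and_comm]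
    rw [this]; exact isClosed_Icc.inter (isClosed_Ici.preimage h₁c)
  have hTcl : ∀ x, IsClosed (T x) := by
    intro x
    have : T x = Icc 0 1 ∩ F₁ ⁻¹' (Iic x) := by ext t; simp [hT, Set.mem_Icc, and_comm]
    rw [this]; exact isClosed_Icc.inter (isClosed_Iic.preimage h₁c)
  have hqmem : ∀ x, 0 ≤ x → x ≤ 1 → q x ∈ S x := fun x _ hx1 =>
    (hScl x).csInf_mem (hSne x hx1) (hSbdd x)
  have hrmem : ∀ x, 0 ≤ x → x ≤ 1 → r x ∈ T x := fun x hx0 _ =>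
    (hTcl x).csSup_mem (hTne x hx0) (hTbdd x)
  have hqmono : ∀ x y, x ≤ y → y ≤ 1 → q x ≤ q y := by
    intro x y hxy hy1
    exact csInf_le_csInf (hSbdd x) (hSne y hy1) (fun t ht => ⟨ht.1, le_trans hxy ht.2⟩)
  have hrmono : ∀ x y, 0 ≤ x → x ≤ y → r x ≤ r y := by
    intro x y hx0 hxy
    exact csSup_le_csSup (hTbdd y) (hTne x hx0) (fun t ht => ⟨ht.1, le_trans ht.2 hxy⟩)
  have hqr : ∀ x, 0 ≤ x → x ≤ 1 → q x ≤ r x := by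
    intro x hx0 hx1
    by_contra hlt
    push_neg at hlt
    set t := (r x + q x) / 2 with htdef
    have hqi := hqmem x hx0 hx1
    have hri := hrmem x hx0 hx1
    have ht1 : r x < t := by rw [htdef]; linarith
    have ht2 : t < q x := by rw [htdef]; linarith
    have htIcc : t ∈ Icc (0:ℝ) 1 := ⟨le_trans hri.1.1 ht1.le, le_trans ht2.le hqi.1.2⟩
    have hnotS : ¬ x ≤ F₁ t := fun h => absurd (csInf_le (hSbdd x) ⟨htIcc, h⟩) (not_le.mpr ht2)
    have hnotT : ¬ F₁ t ≤ x := fun h => absurd (le_csSup (hTbdd x) ⟨htIcc, h⟩) (not_le.mpr ht1)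
    exact hnotS (le_of_lt (lt_of_not_ge hnotT))
  set A : ℝ → ℝ := fun x => F₂ (q x) with hA
  set B : ℝ → ℝ := fun x => F₂ (r x) with hB
  have hAmono : MonotoneOn A (Icc 0 1) := fun x hx y hy hxy => h₂m (hqmono x y hxy hy.2)
  have hBmono : MonotoneOn B (Icc 0 1) := fun x hx y hy hxy => h₂m (hrmono x y hx.1 hxy)
  have hABle : ∀ x ∈ Icc (0:ℝ) 1, A x ≤ B x := fun x hx => h₂m (hqr x hx.1 hx.2)
  -- pointwise strict inequalities
  have hP : ∀ x ∈ Icc (0:ℝ) α₂, α₁ < A (x + α₁) - B x := by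
    intro x hx
    have hx1 : x ≤ 1 := le_trans hx.2 hα₂1
    have hxa : 0 ≤ x + α₁ := by linarith [hx.1]
    have hxa1 : x + α₁ ≤ 1 := by linarith [hx.2]
    have hu := hrmem x hx.1 hx1
    have hv := hqmem (x + α₁) hxa hxa1
    have huv : r x ≤ q (x + α₁) := by
      by_contra hlt
      push_neg at hlt
      have := h₁m hlt.le
      have h1 : F₁ (r x) ≤ x := hu.2
      have h2 : x + α₁ ≤ F₁ (q (x + α₁)) := hv.2
      linarith
    have hrise : α₁ ≤ F₁ (q (x + α₁)) - F₁ (r x) := by linarith [hu.2, hv.2]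
    have := (hcon (r x) (q (x + α₁)) hu.1.1 huv hv.1.2).1 hrise
    simpa [hA, hB] using this
  have hQ : ∀ x ∈ Icc (0:ℝ) α₁, B (x + α₂) - A x < α₂ := by
    intro x hx
    have hx1 : x ≤ 1 := le_trans hx.2 hα₁1
    have hxa : 0 ≤ x + α₂ := by linarith [hx.1]
    have hxa1 : x + α₂ ≤ 1 := by linarith [hx.2]
    have hu := hqmem x hx.1 hx1
    have hv := hrmem (x + α₂) hxa hxa1
    rcases le_or_gt (q x) (r (x + α₂)) with huv | huv
    · have hrise : F₁ (r (x + α₂)) - F₁ (q x) ≤ α₂ := by linarith [hu.2, hv.2]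
      by_contra hge
      push_neg at hge
      have := (hcon (q x) (r (x + α₂)) hu.1.1 huv hv.1.2).2 hge
      linarith
    · have : F₂ (r (x + α₂)) ≤ F₂ (q x) := h₂m huv.le
      simp only [hA, hB] at *
      linarith
  -- integrability
  have hAint : ∀ a b : ℝ, 0 ≤ a → a ≤ b → b ≤ 1 → IntervalIntegrable A volume a b := by
    intro a b ha hab hb1
    exact (hAmono.mono (by rw [uIcc_of_le hab]; exact Icc_subset_Icc ha hb1)).intervalIntegrable
  have hBint : ∀ a b : ℝ, 0 ≤ a → a ≤ b → b ≤ 1 → IntervalIntegrable B volume a b := by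
    intro a b ha hab hb1
    exact (hBmono.mono (by rw [uIcc_of_le hab]; exact Icc_subset_Icc ha hb1)).intervalIntegrable
  have hAsint : IntervalIntegrable (fun x => A (x + α₁)) volume 0 α₂ := by
    have : MonotoneOn (fun x => A (x + α₁)) (uIcc 0 α₂) := by
      rw [uIcc_of_le h₂.le]
      intro x hx y hy hxy
      exact hAmono ⟨by linarith [hx.1], by linarith [hx.2]⟩ ⟨by linarith [hy.1], by linarith [hy.2]⟩
        (by linarith)
    exact this.intervalIntegrable
  have hBsint : IntervalIntegrable (fun x => B (x + α₂)) volume 0 α₁ := by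
    have : MonotoneOn (fun x => B (x + α₂)) (uIcc 0 α₁) := by
      rw [uIcc_of_le h₁.le]
      intro x hx y hy hxy
      exact hBmono ⟨by linarith [hx.1], by linarith [hx.2]⟩ ⟨by linarith [hy.1], by linarith [hy.2]⟩
        (by linarith)
    exact this.intervalIntegrable
  have hB02 : IntervalIntegrable B volume 0 α₂ := hBint 0 α₂ le_rfl h₂.le hα₂1
  have hA01 : IntervalIntegrable A volume 0 α₁ := hAint 0 α₁ le_rfl h₁.le hα₁1
  -- first strict integral inequality
  have key1 : α₁ * α₂ < (∫ x in (0:ℝ)..α₂, A (x + α₁)) - ∫ x in (0:ℝ)..α₂, B x := by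
    have h0 : 0 < ∫ x in (0:ℝ)..α₂, (A (x + α₁) - B x - α₁) := by
      apply intervalIntegral_pos_of_pos_on ((hAsint.sub hB02).sub intervalIntegrable_const)
      · intro x hx
        have := hP x ⟨hx.1.le, hx.2.le⟩
        linarith
      · exact h₂
    have heq : ∫ x in (0:ℝ)..α₂, (A (x + α₁) - B x - α₁)
        = (∫ x in (0:ℝ)..α₂, A (x + α₁)) - (∫ x in (0:ℝ)..α₂, B x) - α₁ * α₂ := by
      rw [intervalIntegral.integral_sub (hAsint.sub hB02) intervalIntegrable_const,
        intervalIntegral.integral_sub hAsint hB02, intervalIntegral.integral_const]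
      simp [mul_comm]
    rw [heq] at h0
    linarith
  have key2 : (∫ x in (0:ℝ)..α₁, B (x + α₂)) - (∫ x in (0:ℝ)..α₁, A x) < α₁ * α₂ := by
    have h0 : 0 < ∫ x in (0:ℝ)..α₁, (α₂ - (B (x + α₂) - A x)) := by
      apply intervalIntegral_pos_of_pos_on
        (intervalIntegrable_const.sub (hBsint.sub hA01))
      · intro x hx
        have := hQ x ⟨hx.1.le, hx.2.le⟩
        linarith
      · exact h₁
    have heq : ∫ x in (0:ℝ)..α₁, (α₂ - (B (x + α₂) - A x))
        = α₁ * α₂ - ((∫ x in (0:ℝ)..α₁, B (x + α₂)) - ∫ x in (0:ℝ)..α₁, A x) := by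
      rw [intervalIntegral.integral_sub intervalIntegrable_const (hBsint.sub hA01),
        intervalIntegral.integral_sub hBsint hA01, intervalIntegral.integral_const]
      simp [mul_comm]
    rw [heq] at h0
    linarith
  -- translate shifted integrals
  have hshift1 : (∫ x in (0:ℝ)..α₂, A (x + α₁)) = ∫ x in α₁..(1:ℝ), A x := by
    rw [intervalIntegral.integral_comp_add_right (fun x => A x) α₁]
    norm_num
    rw [show α₂ + α₁ = 1 by linarith]
  have hshift2 : (∫ x in (0:ℝ)..α₁, B (x + α₂)) = ∫ x in α₂..(1:ℝ), B x := by
    rw [intervalIntegral.integral_comp_add_right (fun x => B x) α₂]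
    norm_num
    rw [show α₁ + α₂ = 1 by linarith]
  have hadjA : (∫ x in (0:ℝ)..α₁, A x) + (∫ x in α₁..(1:ℝ), A x) = ∫ x in (0:ℝ)..(1:ℝ), A x :=
    intervalIntegral.integral_add_adjacent_intervals hA01 (hAint α₁ 1 h₁.le hα₁1 le_rfl)
  have hadjB : (∫ x in (0:ℝ)..α₂, B x) + (∫ x in α₂..(1:ℝ), B x) = ∫ x in (0:ℝ)..(1:ℝ), B x :=
    intervalIntegral.integral_add_adjacent_intervals hB02 (hBint α₂ 1 h₂.le hα₂1 le_rfl)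
  have hABint : (∫ x in (0:ℝ)..(1:ℝ), A x) ≤ ∫ x in (0:ℝ)..(1:ℝ), B x :=
    intervalIntegral.integral_mono_on zero_le_one (hAint 0 1 le_rfl zero_le_one le_rfl)
      (hBint 0 1 le_rfl zero_le_one le_rfl) hABle
  rw [hshift1] at key1
  rw [hshift2] at key2
  linarith

/-- Two non-atomic probability measures on `[0,1]` and demands `α₁ + α₂ = 1`: there is a
partition of `[0,1]` into at most 3 intervals (2 cuts) assigned to the two agents so that each
agent gets at least their demand. The pieces are `(x₀, x₁], (x₁, x₂], (x₂, x₃]` with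
`0 = x₀ ≤ x₁ ≤ x₂ ≤ x₃ = 1` (the point `0` being null for both measures). -/
theorem two_agents_two_cuts (μ₁ μ₂ : Measure ℝ)
    [IsProbabilityMeasure μ₁] [IsProbabilityMeasure μ₂]
    (hs₁ : μ₁ (Set.Icc (0 : ℝ) 1)ᶜ = 0) (hs₂ : μ₂ (Set.Icc (0 : ℝ) 1)ᶜ = 0)
    (ha₁ : ∀ p : ℝ, μ₁ {p} = 0) (ha₂ : ∀ p : ℝ, μ₂ {p} = 0)
    (α₁ α₂ : ℝ) (h₁ : 0 ≤ α₁) (h₂ : 0 ≤ α₂) (hsum : α₁ + α₂ = 1) :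
    ∃ (x₁ x₂ : ℝ) (g : Fin 3 → Fin 2), 0 ≤ x₁ ∧ x₁ ≤ x₂ ∧ x₂ ≤ 1 ∧
      ENNReal.ofReal α₁ ≤
        μ₁ (⋃ j ∈ {j : Fin 3 | g j = 0}, ![Set.Ioc 0 x₁, Set.Ioc x₁ x₂, Set.Ioc x₂ 1] j) ∧
      ENNReal.ofReal α₂ ≤
        μ₂ (⋃ j ∈ {j : Fin 3 | g j = 1}, ![Set.Ioc 0 x₁, Set.Ioc x₁ x₂, Set.Ioc x₂ 1] j) := by
  set F₁ : ℝ → ℝ := fun t => ProbabilityTheory.cdf μ₁ t with hF₁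
  set F₂ : ℝ → ℝ := fun t => ProbabilityTheory.cdf μ₂ t with hF₂
  have hF₁0 : F₁ 0 = 0 := cdf_zero μ₁ hs₁ ha₁
  have hF₁1 : F₁ 1 = 1 := cdf_one μ₁ hs₁
  have hF₂0 : F₂ 0 = 0 := cdf_zero μ₂ hs₂ ha₂
  have hF₂1 : F₂ 1 = 1 := cdf_one μ₂ hs₂
  have h₁m : Monotone F₁ := ProbabilityTheory.monotone_cdf μ₁
  have h₂m : Monotone F₂ := ProbabilityTheory.monotone_cdf μ₂
  have hm₁ : ∀ a b : ℝ, μ₁ (Ioc a b) = ENNReal.ofReal (F₁ b - F₁ a) := fun a b => meas_Ioc μ₁ a b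
  have hm₂ : ∀ a b : ℝ, μ₂ (Ioc a b) = ENNReal.ofReal (F₂ b - F₂ a) := fun a b => meas_Ioc μ₂ a b
  -- index set computations
  have hidx1 : {j : Fin 3 | (![1, 0, 1] : Fin 3 → Fin 2) j = 0} = {(1 : Fin 3)} := by
    ext j; fin_cases j <;> simp
  have hidx2 : {j : Fin 3 | (![1, 0, 1] : Fin 3 → Fin 2) j = 1} = {(0 : Fin 3), (2 : Fin 3)} := by
    ext j; fin_cases j <;> simp
  have hidx3 : {j : Fin 3 | (![0, 1, 0] : Fin 3 → Fin 2) j = 1} = {(1 : Fin 3)} := by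
    ext j; fin_cases j <;> simp
  have hidx4 : {j : Fin 3 | (![0, 1, 0] : Fin 3 → Fin 2) j = 0} = {(0 : Fin 3), (2 : Fin 3)} := by
    ext j; fin_cases j <;> simp
  rcases eq_or_lt_of_le h₁ with hz₁ | hp₁
  · -- α₁ = 0, α₂ = 1
    refine ⟨1, 1, ![1, 1, 1], zero_le_one, le_rfl, le_rfl, ?_, ?_⟩
    · have : {j : Fin 3 | (![1, 1, 1] : Fin 3 → Fin 2) j = 0} = (∅ : Set (Fin 3)) := by
        ext j; fin_cases j <;> simp
      rw [this]
      simp [← hz₁]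
    · have hU : (⋃ j ∈ {j : Fin 3 | (![1, 1, 1] : Fin 3 → Fin 2) j = 1},
          (![Set.Ioc (0:ℝ) 1, Set.Ioc 1 1, Set.Ioc 1 1] : Fin 3 → Set ℝ) j) = Set.Ioc (0:ℝ) 1 := by
        apply Set.Subset.antisymm
        · apply Set.iUnion₂_subset
          intro j _
          fin_cases j <;> simp
        · intro t ht
          exact Set.mem_biUnion (x := (0 : Fin 3)) (by simp) ht
      rw [hU, hm₂]
      apply ENNReal.ofReal_le_ofReal
      rw [hF₂0, hF₂1]
      linarith
  rcases eq_or_lt_of_le h₂ with hz₂ | hp₂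
  · -- α₂ = 0, α₁ = 1
    refine ⟨1, 1, ![0, 0, 0], zero_le_one, le_rfl, le_rfl, ?_, ?_⟩
    · have hU : (⋃ j ∈ {j : Fin 3 | (![0, 0, 0] : Fin 3 → Fin 2) j = 0},
          (![Set.Ioc (0:ℝ) 1, Set.Ioc 1 1, Set.Ioc 1 1] : Fin 3 → Set ℝ) j) = Set.Ioc (0:ℝ) 1 := by
        apply Set.Subset.antisymm
        · apply Set.iUnion₂_subset
          intro j _
          fin_cases j <;> simp
        · intro t ht
          exact Set.mem_biUnion (x := (0 : Fin 3)) (by simp) ht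
      rw [hU, hm₁]
      apply ENNReal.ofReal_le_ofReal
      rw [hF₁0, hF₁1]
      linarith
    · have : {j : Fin 3 | (![0, 0, 0] : Fin 3 → Fin 2) j = 1} = (∅ : Set (Fin 3)) := by
        ext j; fin_cases j <;> simp
      rw [this]
      simp [← hz₂]
  · obtain ⟨u, v, hu0, huv, hv1, hcase⟩ :=
      key_lemma F₁ F₂ h₁m h₂m (cdf_cont μ₁ ha₁) hF₁0 hF₁1 hp₁ hp₂ hsum
    have hdisj : Disjoint (Set.Ioc (0:ℝ) u) (Set.Ioc v 1) := by
      apply Set.disjoint_left.mpr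
      intro t ht1 ht2
      have := ht1.2; have := ht2.1; linarith
    rcases hcase with ⟨hα, hβ⟩ | ⟨hα, hβ⟩
    · refine ⟨u, v, ![1, 0, 1], hu0, huv, hv1, ?_, ?_⟩
      · rw [hidx1, Set.biUnion_singleton]
        have : (![Set.Ioc 0 u, Set.Ioc u v, Set.Ioc v 1] : Fin 3 → Set ℝ) 1 = Set.Ioc u v := rfl
        rw [this, hm₁]
        exact ENNReal.ofReal_le_ofReal hα
      · rw [hidx2]
        have : (⋃ j ∈ ({(0 : Fin 3), (2 : Fin 3)} : Set (Fin 3)),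
            (![Set.Ioc 0 u, Set.Ioc u v, Set.Ioc v 1] : Fin 3 → Set ℝ) j)
            = Set.Ioc (0:ℝ) u ∪ Set.Ioc v 1 := by
          rw [Set.biUnion_insert, Set.biUnion_singleton]
          rfl
        rw [this, measure_union hdisj measurableSet_Ioc, hm₂, hm₂,
          ← ENNReal.ofReal_add (by simp; linarith [h₂m hu0, hF₂0]) (by simp; exact h₂m hv1)]
        apply ENNReal.ofReal_le_ofReal
        rw [hF₂0, hF₂1]
        linarith
    · refine ⟨u, v, ![0, 1, 0], hu0, huv, hv1, ?_, ?_⟩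
      · rw [hidx4]
        have : (⋃ j ∈ ({(0 : Fin 3), (2 : Fin 3)} : Set (Fin 3)),
            (![Set.Ioc 0 u, Set.Ioc u v, Set.Ioc v 1] : Fin 3 → Set ℝ) j)
            = Set.Ioc (0:ℝ) u ∪ Set.Ioc v 1 := by
          rw [Set.biUnion_insert, Set.biUnion_singleton]
          rfl
        rw [this, measure_union hdisj measurableSet_Ioc, hm₁, hm₁,
          ← ENNReal.ofReal_add (by simp; linarith [h₁m hu0, hF₁0]) (by simp; exact h₁m hv1)]
        apply ENNReal.ofReal_le_ofReal
        rw [hF₁0, hF₁1]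
        linarith
      · rw [hidx3, Set.biUnion_singleton]
        have : (![Set.Ioc 0 u, Set.Ioc u v, Set.Ioc v 1] : Fin 3 → Set ℝ) 1 = Set.Ioc u v := rfl
        rw [this, hm₂]
        exact ENNReal.ofReal_le_ofReal hα
end

section
/- Let μ₁, ..., μ_{n+1} be non-atomic Borel probability measures on [0,1] and α₁, ..., α_{n+1} non-negative reals summing to 1, with n ≥ 2. For θ ∈ [0,1] and k ∈ [n+1], let S(θ,k) = {i : μᵢ([0,θ]) > 1/2} ∪ {i : μᵢ([0,θ]) = 1/2 and i ≤ k}. Then there exist x ∈ [0,1] and t ∈ [n+1] such that ∑_{i ∈ S(x,t)} αᵢ ≥ 1/2, and for the minimal such x and then minimal such t: (a) μᵢ([0,x]) ≥ 1/2 for all i ∈ S(x,t) \ {t}; (b) μᵢ([0,x]) ≤ 1/2 for all i ∉ S(x,t); (c) μ_t([0,x]) = 1/2; (d) ∑_{i ∈ S(x,t)\{t}} αᵢ ≤ 1/2 and ∑_{i ∉ S(x,t)} αᵢ ≤ 1/2. -/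
open MeasureTheory Set ProbabilityTheory in
private lemma cdf_cont' (μ : Measure ℝ) [IsProbabilityMeasure μ] (h : ∀ p : ℝ, μ {p} = 0) :
    Continuous fun θ => (μ (Iic θ)).toReal := by
  have : Continuous (cdf μ) := by
    rw [continuous_iff_continuousAt]
    intro x
    rw [(monotone_cdf (μ := μ)).continuousAt_iff_leftLim_eq_rightLim, (cdf μ).rightLim_eq]
    have h0 : (cdf μ).measure {x} = 0 := by rw [measure_cdf]; exact h x
    rw [(cdf μ).measure_singleton, ENNReal.ofReal_eq_zero, sub_nonpos] at h0
    exact le_antisymm ((monotone_cdf (μ := μ)).leftLim_le le_rfl) h0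
  simpa [funext fun x => (cdf_eq_real (μ := μ) x), Measure.real_def] using this

open MeasureTheory Set ProbabilityTheory in
private lemma icc_eq_iic (μ : Measure ℝ) (hs : μ (Set.Icc (0:ℝ) 1)ᶜ = 0) (θ : ℝ) (hθ : 0 ≤ θ) :
    μ (Icc 0 θ) = μ (Iic θ) := by
  have h0 : μ (Iio 0) = 0 := by
    refine measure_mono_null (fun y hy => ?_) hs
    simp only [mem_Iio] at hy
    simp only [mem_compl_iff, mem_Icc, not_and_or, not_le]
    exact Or.inl hy
  have h1 : Iic θ = Icc 0 θ ∪ Iio 0 := by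
    ext y; simp only [mem_Iic, mem_union, mem_Icc, mem_Iio]
    constructor
    · intro hy; rcases le_or_gt 0 y with h | h
      · exact Or.inl ⟨h, hy⟩
      · exact Or.inr h
    · rintro (⟨_, hy⟩ | hy); exacts [hy, hy.le.trans hθ]
  refine le_antisymm (measure_mono Icc_subset_Iic_self) ?_
  calc μ (Iic θ) ≤ μ (Icc 0 θ) + μ (Iio 0) := h1 ▸ measure_union_le _ _
    _ = μ (Icc 0 θ) := by rw [h0, add_zero]

open MeasureTheory Set Classical in
/-- The first-cut lemma: with `S(θ,k) = {i : μᵢ[0,θ] > 1/2} ∪ {i : μᵢ[0,θ] = 1/2 ∧ i ≤ k}`, there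
are `x ∈ [0,1]` and `t` with `∑_{i ∈ S(x,t)} αᵢ ≥ 1/2`, such that `x` is minimal with this
property (for some `k`) and `t` is minimal for this `x`, and then: (a) `μᵢ[0,x] ≥ 1/2` on
`S(x,t) \ {t}`; (b) `μᵢ[0,x] ≤ 1/2` off `S(x,t)`; (c) `μ_t[0,x] = 1/2`; (d) the demands of
`S(x,t) \ {t}` and of the complement of `S(x,t)` each sum to at most `1/2`. -/
theorem first_cut (n : ℕ) (hn : 2 ≤ n)
    (μ : Fin (n + 1) → Measure ℝ) (hprob : ∀ i, IsProbabilityMeasure (μ i))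
    (hs : ∀ i, μ i (Set.Icc (0 : ℝ) 1)ᶜ = 0) (ha : ∀ i (p : ℝ), μ i {p} = 0)
    (α : Fin (n + 1) → ℝ) (hα : ∀ i, 0 ≤ α i) (hsum : ∑ i, α i = 1) :
    ∃ (x : ℝ) (t : Fin (n + 1)),
      -- the set S(θ,k)
      let S : ℝ → Fin (n + 1) → Finset (Fin (n + 1)) := fun θ k =>
        Finset.univ.filter (fun i =>
          1 / 2 < ((μ i) (Set.Icc 0 θ)).toReal ∨
            (((μ i) (Set.Icc 0 θ)).toReal = 1 / 2 ∧ i ≤ k))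
      x ∈ Set.Icc (0 : ℝ) 1 ∧
      (1 / 2 : ℝ) ≤ ∑ i ∈ S x t, α i ∧
      -- minimality of x
      (∀ θ ∈ Set.Icc (0 : ℝ) 1, (∃ k, (1 / 2 : ℝ) ≤ ∑ i ∈ S θ k, α i) → x ≤ θ) ∧
      -- minimality of t given x
      (∀ k, (1 / 2 : ℝ) ≤ ∑ i ∈ S x k, α i → t ≤ k) ∧
      -- (a)
      (∀ i ∈ S x t, i ≠ t → (1 / 2 : ℝ) ≤ ((μ i) (Set.Icc 0 x)).toReal) ∧
      -- (b)
      (∀ i ∉ S x t, ((μ i) (Set.Icc 0 x)).toReal ≤ 1 / 2) ∧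
      -- (c)
      ((μ t) (Set.Icc 0 x)).toReal = 1 / 2 ∧
      -- (d)
      (∑ i ∈ (S x t).erase t, α i ≤ 1 / 2) ∧ (∑ i ∈ (S x t)ᶜ, α i ≤ 1 / 2) := by
  have hGcont : ∀ i, Continuous fun θ => ((μ i) (Iic θ)).toReal := fun i => by
    haveI := hprob i; exact cdf_cont' (μ i) (ha i)
  set F : Fin (n + 1) → ℝ → ℝ := fun i θ => ((μ i) (Set.Icc 0 θ)).toReal with hFdef
  have hFG : ∀ i θ, 0 ≤ θ → F i θ = ((μ i) (Iic θ)).toReal := fun i θ hθ => by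
    simp only [hFdef]; rw [icc_eq_iic (μ i) (hs i) θ hθ]
  have hF1 : ∀ i, F i 1 = 1 := by
    intro i
    haveI := hprob i
    have h1 : μ i (Icc (0:ℝ) 1) = 1 := by
      have h2 := measure_add_measure_compl (μ := μ i) (measurableSet_Icc (a := (0:ℝ)) (b := 1))
      rw [hs i, add_zero] at h2; rw [h2]; exact measure_univ
    simp [hFdef, h1]
  have hF0 : ∀ i, F i 0 = 0 := fun i => by
    simp [hFdef, Set.Icc_self, ha i]
  -- the "greedy" set A θ and the target set T
  set A : ℝ → Finset (Fin (n + 1)) := fun θ => Finset.univ.filter (fun i => 1/2 ≤ F i θ)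
    with hAdef
  set T : Set ℝ := {θ | θ ∈ Set.Icc (0:ℝ) 1 ∧ 1/2 ≤ ∑ i ∈ A θ, α i} with hTdef
  have h1T : (1:ℝ) ∈ T := by
    refine ⟨⟨zero_le_one, le_rfl⟩, ?_⟩
    have : A 1 = Finset.univ := by
      apply Finset.eq_univ_iff_forall.mpr
      intro i; simp [hAdef, hF1 i]; norm_num
    rw [this, hsum]; norm_num
  have hTne : T.Nonempty := ⟨1, h1T⟩
  have hTbdd : BddBelow T := ⟨0, fun θ hθ => hθ.1.1⟩
  set x : ℝ := sInf T with hxdef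
  have hxle : ∀ θ ∈ T, x ≤ θ := fun θ h => csInf_le hTbdd h
  have hxmem : x ∈ Set.Icc (0:ℝ) 1 :=
    ⟨le_csInf hTne fun θ hθ => hθ.1.1, hxle 1 h1T⟩
  -- x ∈ T
  have hxT : x ∈ T := by
    refine ⟨hxmem, ?_⟩
    set B : Finset (Fin (n+1)) := Finset.univ.filter (fun i => F i x < 1/2) with hBdef
    have hev : ∀ᶠ θ in nhds x, ∀ i ∈ B, ((μ i) (Iic θ)).toReal < 1/2 := by
      rw [Finset.eventually_all]
      intro i hi
      have hix : ((μ i) (Iic x)).toReal < 1/2 := by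
        rw [← hFG i x hxmem.1]
        exact (Finset.mem_filter.mp hi).2
      exact ((hGcont i).continuousAt (x := x)).eventually_lt_const hix
    obtain ⟨ε, hε, hball⟩ := Metric.eventually_nhds_iff_ball.mp hev
    obtain ⟨θ, hθT, hθlt⟩ := Real.lt_sInf_add_pos hTne hε
    have hxθ : x ≤ θ := hxle θ hθT
    have hmem : θ ∈ Metric.ball x ε := by
      rw [Metric.mem_ball, Real.dist_eq, abs_of_nonneg (by linarith)]
      rw [← hxdef] at hθlt; linarith
    have hsub : A θ ⊆ A x := by
      intro i hi
      simp only [hAdef, Finset.mem_filter, Finset.mem_univ, true_and] at hi ⊢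
      by_contra h
      push_neg at h
      have h2 := hball θ hmem i
        (by simp only [hBdef, Finset.mem_filter, Finset.mem_univ, true_and]; exact h)
      rw [← hFG i θ (hxmem.1.trans hxθ)] at h2
      exact absurd hi (not_le.mpr h2)
    calc (1/2 : ℝ) ≤ ∑ i ∈ A θ, α i := hθT.2
      _ ≤ ∑ i ∈ A x, α i := Finset.sum_le_sum_of_subset_of_nonneg hsub (fun i _ _ => hα i)
  have hx0 : 0 < x := by
    rcases hxmem.1.lt_or_eq with h | h
    · exact h
    · exfalso
      have hA0 : A x = ∅ := by
        apply Finset.filter_false_of_mem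
        intro i _
        rw [← h, hF0 i]; norm_num
      have := hxT.2
      rw [hA0] at this; simp at this; linarith
  -- the strict set P has demand < 1/2
  set P : Finset (Fin (n+1)) := Finset.univ.filter (fun i => 1/2 < F i x) with hPdef
  have hP : ∑ i ∈ P, α i < 1/2 := by
    by_contra h
    push_neg at h
    have hev : ∀ᶠ θ in nhds x, ∀ i ∈ P, 1/2 < ((μ i) (Iic θ)).toReal := by
      rw [Finset.eventually_all]
      intro i hi
      have hix : 1/2 < ((μ i) (Iic x)).toReal := by
        rw [← hFG i x hxmem.1]
        exact (Finset.mem_filter.mp hi).2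
      exact ((hGcont i).continuousAt (x := x)).eventually_const_lt hix
    obtain ⟨ε, hε, hball⟩ := Metric.eventually_nhds_iff_ball.mp hev
    set θ : ℝ := x - min (ε/2) (x/2) with hθdef
    have hmin : 0 < min (ε/2) (x/2) := lt_min (by linarith) (by linarith)
    have hθx : θ < x := by simp only [hθdef]; linarith
    have hθ0 : 0 ≤ θ := by
      have : min (ε/2) (x/2) ≤ x/2 := min_le_right _ _
      simp only [hθdef]; linarith
    have hmem : θ ∈ Metric.ball x ε := by
      rw [Metric.mem_ball, Real.dist_eq, abs_of_nonpos (by simp only [hθdef]; linarith)]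
      have : min (ε/2) (x/2) ≤ ε/2 := min_le_left _ _
      simp only [hθdef]; linarith
    have hθT : θ ∈ T := by
      refine ⟨⟨hθ0, le_trans hθx.le hxmem.2⟩, ?_⟩
      have hsub : P ⊆ A θ := by
        intro i hi
        simp only [hAdef, Finset.mem_filter, Finset.mem_univ, true_and]
        have h2 := hball θ hmem i hi
        rw [← hFG i θ hθ0] at h2
        exact h2.le
      calc (1/2 : ℝ) ≤ ∑ i ∈ P, α i := h
        _ ≤ ∑ i ∈ A θ, α i := Finset.sum_le_sum_of_subset_of_nonneg hsub (fun i _ _ => hα i)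
    exact absurd (hxle θ hθT) (not_le.mpr hθx)
  -- the S sets
  set MS : ℝ → Fin (n + 1) → Finset (Fin (n + 1)) := fun θ k =>
      Finset.univ.filter (fun i =>
        1 / 2 < ((μ i) (Set.Icc 0 θ)).toReal ∨
          (((μ i) (Set.Icc 0 θ)).toReal = 1 / 2 ∧ i ≤ k)) with hMSdef
  have hMSmem : ∀ θ k i, i ∈ MS θ k ↔ (1/2 < F i θ ∨ (F i θ = 1/2 ∧ i ≤ k)) := by
    intro θ k i
    simp [hMSdef, hFdef, Finset.mem_filter]
  have hMSsub : ∀ θ k, MS θ k ⊆ A θ := by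
    intro θ k i hi
    simp only [hAdef, Finset.mem_filter, Finset.mem_univ, true_and]
    rcases (hMSmem θ k i).mp hi with h | ⟨h, _⟩
    · exact h.le
    · exact h.ge
  have hMSlast : ∀ θ, MS θ (Fin.last n) = A θ := by
    intro θ
    apply Finset.Subset.antisymm (hMSsub θ _)
    intro i hi
    simp only [hAdef, Finset.mem_filter, Finset.mem_univ, true_and] at hi
    rw [hMSmem]
    rcases hi.lt_or_eq with h | h
    · exact Or.inl h
    · exact Or.inr ⟨h.symm, Fin.le_last i⟩
  set K : Finset (Fin (n+1)) := Finset.univ.filter (fun k => 1/2 ≤ ∑ i ∈ MS x k, α i)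
    with hKdef
  have hKne : K.Nonempty := by
    refine ⟨Fin.last n, ?_⟩
    simp only [hKdef, Finset.mem_filter, Finset.mem_univ, true_and]
    rw [hMSlast]; exact hxT.2
  set t : Fin (n + 1) := K.min' hKne with htdef
  have ht : 1/2 ≤ ∑ i ∈ MS x t, α i := (Finset.mem_filter.mp (K.min'_mem hKne)).2
  have htmin : ∀ k, 1/2 ≤ ∑ i ∈ MS x k, α i → t ≤ k := fun k hk =>
    K.min'_le k (Finset.mem_filter.mpr ⟨Finset.mem_univ k, hk⟩)
  -- (c)
  have hc : F t x = 1/2 := by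
    by_contra hne
    rcases eq_or_ne t 0 with h0 | h0
    · have hsub : MS x t ⊆ P := by
        intro i hi
        rcases (hMSmem x t i).mp hi with h | ⟨hEq, hle⟩
        · simp only [hPdef, Finset.mem_filter, Finset.mem_univ, true_and]; exact h
        · exfalso
          apply hne
          rw [h0] at hle
          have : i = 0 := Fin.le_zero_iff.mp hle
          rw [h0, ← this]; exact hEq
      have := Finset.sum_le_sum_of_subset_of_nonneg hsub (fun i _ _ => hα i)
      linarith
    · have htpos : 0 < t.val := by
        rcases Nat.eq_zero_or_pos t.val with h | h
        · exact absurd (Fin.ext h) h0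
        · exact h
      set k' : Fin (n+1) := ⟨t.val - 1, by omega⟩ with hk'def
      have hk'lt : k' < t := by
        rw [Fin.lt_def]; simp only [hk'def]; omega
      have hSe : MS x k' = MS x t := by
        ext i
        rw [hMSmem, hMSmem]
        constructor
        · rintro (h | ⟨hEq, hle⟩)
          · exact Or.inl h
          · exact Or.inr ⟨hEq, hle.trans hk'lt.le⟩
        · rintro (h | ⟨hEq, hle⟩)
          · exact Or.inl h
          · refine Or.inr ⟨hEq, ?_⟩
            have hit : i ≠ t := fun h => hne (h ▸ hEq)
            have hlt : i < t := lt_of_le_of_ne hle hit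
            rw [Fin.le_def]; simp only [hk'def]
            rw [Fin.lt_def] at hlt; omega
      exact absurd (htmin k' (hSe ▸ ht)) (not_le.mpr hk'lt)
  -- (d1)
  have hd1 : ∑ i ∈ (MS x t).erase t, α i ≤ 1/2 := by
    rcases eq_or_ne t 0 with h0 | h0
    · have hsub : (MS x t).erase t ⊆ P := by
        intro i hi
        obtain ⟨hit, hi⟩ := Finset.mem_erase.mp hi
        rcases (hMSmem x t i).mp hi with h | ⟨hEq, hle⟩
        · simp only [hPdef, Finset.mem_filter, Finset.mem_univ, true_and]; exact h
        · exfalso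
          apply hit
          rw [h0] at hle ⊢
          exact Fin.le_zero_iff.mp hle
      have := Finset.sum_le_sum_of_subset_of_nonneg hsub (fun i _ _ => hα i)
      linarith
    · have htpos : 0 < t.val := by
        rcases Nat.eq_zero_or_pos t.val with h | h
        · exact absurd (Fin.ext h) h0
        · exact h
      set k' : Fin (n+1) := ⟨t.val - 1, by omega⟩ with hk'def
      have hk'lt : k' < t := by
        rw [Fin.lt_def]; simp only [hk'def]; omega
      have hSe : (MS x t).erase t = MS x k' := by
        ext i
        rw [Finset.mem_erase, hMSmem, hMSmem]
        constructor
        · rintro ⟨hit, h | ⟨hEq, hle⟩⟩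
          · exact Or.inl h
          · refine Or.inr ⟨hEq, ?_⟩
            have hlt : i < t := lt_of_le_of_ne hle hit
            rw [Fin.le_def]; simp only [hk'def]
            rw [Fin.lt_def] at hlt; omega
        · rintro (h | ⟨hEq, hle⟩)
          · refine ⟨?_, Or.inl h⟩
            intro hE; rw [hE, hc] at h; linarith
          · refine ⟨?_, Or.inr ⟨hEq, hle.trans hk'lt.le⟩⟩
            intro hE; rw [hE] at hle
            exact absurd (hle.trans_lt hk'lt) (lt_irrefl t)
      by_contra h
      push_neg at h
      rw [hSe] at h
      exact absurd (htmin k' h.le) (not_le.mpr hk'lt)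
  -- (d2)
  have hd2 : ∑ i ∈ (MS x t)ᶜ, α i ≤ 1/2 := by
    have h := Finset.sum_add_sum_compl (MS x t) α
    rw [hsum] at h
    linarith
  -- assemble
  refine ⟨x, t, hxmem, ht, ?_, htmin, ?_, ?_, hc, hd1, hd2⟩
  · rintro θ hθ ⟨k, hk⟩
    apply hxle
    refine ⟨hθ, hk.trans (Finset.sum_le_sum_of_subset_of_nonneg (hMSsub θ k)
      (fun i _ _ => hα i))⟩
  · intro i hi _
    rcases (hMSmem x t i).mp hi with h | ⟨h, _⟩
    · exact h.le
    · exact h.ge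
  · intro i hi
    by_contra h
    push_neg at h
    exact hi ((hMSmem x t i).mpr (Or.inl h))
end

section
/- If g : ℕ → ℕ satisfies g(1) = 0, g(2) ≤ 2, and g(n+1) ≤ max{1 + g(n), max_{2 ≤ k ≤ n}(1 + g(k) + g(n+2−k))} for all n ≥ 2, then g(n) ≤ 3n − 4 for all n ≥ 2. -/
/-- If `g 1 = 0`, `g 2 ≤ 2` and `g` satisfies the recursion
`g (n+1) ≤ max {1 + g n, max_{2 ≤ k ≤ n} (1 + g k + g (n+2−k))}` for all `n ≥ 2`,
then `g n ≤ 3n − 4` for all `n ≥ 2`. -/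
theorem recursion_solution (g : ℕ → ℕ) (h1 : g 1 = 0) (h2 : g 2 ≤ 2)
    (hrec : ∀ n : ℕ, 2 ≤ n →
      g (n + 1) ≤ max (1 + g n) ((Finset.Icc 2 n).sup fun k => 1 + g k + g (n + 2 - k))) :
    ∀ n : ℕ, 2 ≤ n → g n ≤ 3 * n - 4 := by
  intro n
  induction n using Nat.strong_induction_on with
  | _ n ih =>
    intro hn
    match n, hn with
    | 2, _ => simpa using h2
    | (m + 3), _ =>
      have hm2 : 2 ≤ m + 2 := by omega
      have := hrec (m + 2) hm2
      refine this.trans ?_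
      apply max_le
      · have := ih (m + 2) (by omega) hm2
        omega
      · apply Finset.sup_le
        intro k hk
        simp only [Finset.mem_Icc] at hk
        have h1 : g k ≤ 3 * k - 4 := ih k (by omega) hk.1
        have h2 : g (m + 2 + 2 - k) ≤ 3 * (m + 2 + 2 - k) - 4 :=
          ih (m + 2 + 2 - k) (by omega) (by omega)
        omega
end

section
/- Let μ₁, ..., μ_n be non-atomic Borel probability measures on [0,1] and α₁, ..., α_n non-negative rationals summing to 1. Then there exists a partition of [0,1] into finitely many intervals assigned to the agents such that μᵢ(Xᵢ) ≥ αᵢ for all i, where Xᵢ denotes the union of intervals assigned to agent i. -/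
open MeasureTheory Set Filter Topology

/-- A non-atomic Borel probability measure on `[0,1]`, encoded as a measure on `ℝ`. -/
def GoodMeasure (μ : MeasureTheory.Measure ℝ) : Prop :=
  MeasureTheory.IsProbabilityMeasure μ ∧ μ (Set.Icc (0 : ℝ) 1)ᶜ = 0 ∧ ∀ p : ℝ, μ {p} = 0

/-- The disproportionate division problem for `n` agents with measures `μ` and demands `α` is
solvable with (at most) `m` cuts: there are cut points `0 = x₀ ≤ x₁ ≤ ⋯ ≤ x_m ≤ x_{m+1} = 1`
and an assignment `g` of the `m+1` half-open pieces `(x_j, x_{j+1}]` to agents such that each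
agent `i` receives total `μ i`-measure at least `α i` (the point `0` being null). -/
def Solvable (n m : ℕ) (μ : Fin n → MeasureTheory.Measure ℝ) (α : Fin n → ℝ) : Prop :=
  ∃ (x : Fin (m + 2) → ℝ) (g : Fin (m + 1) → Fin n),
    Monotone x ∧ x 0 = 0 ∧ x (Fin.last (m + 1)) = 1 ∧
    ∀ i, ENNReal.ofReal (α i) ≤
      μ i (⋃ j ∈ {j : Fin (m + 1) | g j = i}, Set.Ioc (x j.castSucc) (x j.succ))

section Helpers

variable {μ : Measure ℝ} [IsProbabilityMeasure μ]

lemma meas_split (a u v : ℝ) (h1 : a ≤ u) (h2 : u ≤ v) :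
    μ (Ioc a v) = μ (Ioc a u) + μ (Ioc u v) := by
  rw [← Ioc_union_Ioc_eq_Ioc h1 h2,
    measure_union (Set.Ioc_disjoint_Ioc_of_le le_rfl) measurableSet_Ioc]

lemma contF [NullSingletonClass μ] (a : ℝ) :
    ContinuousOn (fun t => (μ (Ioc a t)).toReal) (Icc a 1) := by
  intro c hc
  rw [Metric.continuousWithinAt_iff]
  intro ε hε
  have h1 : ∀ᶠ δ in 𝓝 (0:ℝ), μ (Icc (c - δ) (c + δ)) < ENNReal.ofReal ε :=
    (tendsto_measure_Icc μ c).eventually_lt_const (ENNReal.ofReal_pos.2 hε)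
  rw [Metric.eventually_nhds_iff] at h1
  obtain ⟨δ', hδ', hball⟩ := h1
  refine ⟨δ'/2, by positivity, ?_⟩
  intro y hy hyc
  have hkey : μ (Icc (c - δ'/2) (c + δ'/2)) < ENNReal.ofReal ε := by
    apply hball; rw [Real.dist_eq]; simp [abs_of_nonneg (le_of_lt (half_pos hδ'))]
    linarith
  have hbound : ∀ u v : ℝ, a ≤ u → u ≤ v → c - δ'/2 ≤ u → v ≤ c + δ'/2 →
      (μ (Ioc a v)).toReal - (μ (Ioc a u)).toReal < ε := by
    intro u v hau huv h1 h2
    have := meas_split (μ := μ) a u v hau huv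
    have hfin : μ (Ioc u v) ≠ ⊤ := measure_ne_top _ _
    have hfin2 : μ (Ioc a u) ≠ ⊤ := measure_ne_top _ _
    rw [this, ENNReal.toReal_add hfin2 hfin]
    have hsub : μ (Ioc u v) ≤ μ (Icc (c - δ'/2) (c + δ'/2)) :=
      measure_mono (fun z hz => ⟨by linarith [hz.1], by linarith [hz.2]⟩)
    have : (μ (Ioc u v)).toReal < ε :=
      ENNReal.toReal_lt_of_lt_ofReal (lt_of_le_of_lt hsub hkey)
    linarith
  
  rw [Real.dist_eq] at hyc
  rw [Real.dist_eq]
  rcases le_total y c with h | h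
  · rw [abs_sub_comm, abs_of_nonneg (by
      have : μ (Ioc a y) ≤ μ (Ioc a c) := measure_mono (Ioc_subset_Ioc_right h)
      exact sub_nonneg.2 (ENNReal.toReal_mono (measure_ne_top _ _) this))]
    exact hbound y c hy.1 h (by cases abs_lt.1 hyc; linarith) (by linarith [hc.1, hc.2])
  · rw [abs_of_nonneg (by
      have : μ (Ioc a c) ≤ μ (Ioc a y) := measure_mono (Ioc_subset_Ioc_right h)
      exact sub_nonneg.2 (ENNReal.toReal_mono (measure_ne_top _ _) this))]
    exact hbound c y hc.1 h (by linarith [hc.1, hc.2]) (by cases abs_lt.1 hyc; linarith)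

lemma exists_cut [NullSingletonClass μ] (a : ℝ) (ha : a ≤ 1) (s : ℝ) (hs : 0 ≤ s)
    (h1 : ENNReal.ofReal s ≤ μ (Ioc a 1)) :
    ∃ t ∈ Icc a 1, μ (Ioc a t) = ENNReal.ofReal s := by
  have hF1 : s ≤ (μ (Ioc a 1)).toReal := by
    have := ENNReal.toReal_mono (measure_ne_top _ _) h1
    rwa [ENNReal.toReal_ofReal hs] at this
  have hmem : s ∈ Icc ((μ (Ioc a a)).toReal) ((μ (Ioc a 1)).toReal) := by
    simp only [Ioc_self, measure_empty, ENNReal.toReal_zero]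
    exact ⟨hs, hF1⟩
  obtain ⟨t, ht, hts⟩ := intermediate_value_Icc ha (contF a) hmem
  exact ⟨t, ht, by
    rw [← hts, ENNReal.ofReal_toReal (measure_ne_top _ _)]⟩

end Helpers

lemma slide (D : ℕ) : ∀ {n : ℕ} (μ : Fin n → Measure ℝ), (∀ i, GoodMeasure (μ i)) →
    ∀ (s : ℝ), 0 ≤ s → ∀ (p : Fin n → ℕ), ∑ i, p i = D + 1 → ∀ (a : ℝ), a ≤ 1 →
    (∀ i, 0 < p i → ENNReal.ofReal ((D + 1 : ℕ) * s) ≤ μ i (Set.Ioc a 1)) →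
    ∃ (x : Fin (D + 2) → ℝ) (g : Fin (D + 1) → Fin n),
      Monotone x ∧ x 0 = a ∧ x (Fin.last (D + 1)) = 1 ∧
      ∀ i, ENNReal.ofReal ((p i : ℝ) * s) ≤
        μ i (⋃ j ∈ {j : Fin (D + 1) | g j = i}, Set.Ioc (x j.castSucc) (x j.succ)) := by
  induction D with
  | zero =>
    intro n μ hμ s hs p hp a ha hmass
    obtain ⟨i₀, hi₀⟩ : ∃ i₀, p i₀ ≠ 0 := by
      by_contra h
      push_neg at h
      simp [h] at hp
    have hsum0 : ∑ j ∈ Finset.univ.erase i₀, p j = 0 ∧ p i₀ = 1 := by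
      have h2 := Finset.sum_erase_add Finset.univ p (Finset.mem_univ i₀)
      constructor <;> omega
    refine ⟨![a, 1], fun _ => i₀, ?_, by simp, by simp [Fin.last], ?_⟩
    · intro u v huv
      fin_cases u <;> fin_cases v <;> simp_all <;> first | rfl | exact ha | omega
    · intro i
      rcases eq_or_ne i i₀ with rfl | hne
      · have h1 : ENNReal.ofReal ((p i : ℝ) * s) ≤ μ i (Set.Ioc a 1) := by
          have := hmass i (by omega)
          simpa [hsum0.2] using this
        refine h1.trans (measure_mono ?_)
        have hmem : (0 : Fin 1) ∈ {j : Fin 1 | (fun _ => i) j = i} := by simp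
        refine (subset_biUnion_of_mem hmem).trans_eq' ?_
        norm_num
      · have hz : p i = 0 := by
          have := Finset.sum_eq_zero_iff.1 hsum0.1 i (by simp [hne.symm, hne])
          exact this
        simp [hz]
  | succ D IH =>
    intro n μ hμ s hs p hp a ha hmass
    have hPM : ∀ i, IsProbabilityMeasure (μ i) := fun i => (hμ i).1
    have hNA : ∀ i, NullSingletonClass (μ i) := fun i => ⟨(hμ i).2.2⟩
    have hcut : ∀ i : Fin n, ∃ t, t ∈ Icc a 1 ∧
        (0 < p i → μ i (Set.Ioc a t) = ENNReal.ofReal s) := by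
      intro i
      by_cases h : 0 < p i
      · haveI := hPM i; haveI := hNA i
        have h1 : ENNReal.ofReal s ≤ μ i (Set.Ioc a 1) := by
          refine le_trans (ENNReal.ofReal_le_ofReal ?_) (hmass i h)
          have hone : (1:ℝ) ≤ ((D + 1 + 1 : ℕ) : ℝ) := by exact_mod_cast (by omega : 1 ≤ D + 1 + 1)
          nlinarith
        obtain ⟨t, ht, hts⟩ := exists_cut a ha s hs h1
        exact ⟨t, ht, fun _ => hts⟩
      · exact ⟨a, ⟨le_refl a, ha⟩, fun hh => absurd hh h⟩
    choose t htI hts using hcut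
    have hTne : (Finset.univ.filter fun i => 0 < p i).Nonempty := by
      by_contra h
      rw [Finset.not_nonempty_iff_eq_empty, Finset.filter_eq_empty_iff] at h
      have : ∀ i ∈ Finset.univ, p i = 0 := fun i _ => by
        have := h (Finset.mem_univ i); omega
      rw [Finset.sum_eq_zero this] at hp
      omega
    obtain ⟨i₀, hi₀mem, hi₀min⟩ :=
      Finset.exists_min_image (Finset.univ.filter fun i => 0 < p i) t hTne
    have hpi₀ : 0 < p i₀ := (Finset.mem_filter.1 hi₀mem).2
    set t₀ := t i₀ with ht₀def
    have ht₀ : a ≤ t₀ ∧ t₀ ≤ 1 := ⟨(htI i₀).1, (htI i₀).2⟩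
    have hμt₀ : μ i₀ (Set.Ioc a t₀) = ENNReal.ofReal s := hts i₀ hpi₀
    set p' : Fin n → ℕ := Function.update p i₀ (p i₀ - 1) with hp'def
    have hp'sum : ∑ i, p' i = D + 1 := by
      have h2 := Finset.sum_erase_add Finset.univ p (Finset.mem_univ i₀)
      have h3 := Finset.sum_erase_add Finset.univ p' (Finset.mem_univ i₀)
      have h4 : ∑ j ∈ Finset.univ.erase i₀, p' j = ∑ j ∈ Finset.univ.erase i₀, p j :=
        Finset.sum_congr rfl fun j hj =>
          Function.update_of_ne (Finset.mem_erase.1 hj).1 _ _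
      have h5 : p' i₀ = p i₀ - 1 := Function.update_self _ _ _
      omega
    have hmass' : ∀ i, 0 < p' i → ENNReal.ofReal ((D + 1 : ℕ) * s) ≤ μ i (Set.Ioc t₀ 1) := by
      intro i hi
      have hpi : 0 < p i := by
        rcases eq_or_ne i i₀ with rfl | hne
        · exact hpi₀
        · rwa [hp'def, Function.update_of_ne hne] at hi
      have hto : μ i (Set.Ioc a t₀) ≤ ENNReal.ofReal s := by
        have h1 : t₀ ≤ t i := hi₀min i (Finset.mem_filter.2 ⟨Finset.mem_univ i, hpi⟩)
        calc μ i (Set.Ioc a t₀) ≤ μ i (Set.Ioc a (t i)) :=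
              measure_mono (Set.Ioc_subset_Ioc_right h1)
          _ = ENNReal.ofReal s := hts i hpi
      have hsplit : μ i (Set.Ioc a 1) = μ i (Set.Ioc a t₀) + μ i (Set.Ioc t₀ 1) := by
        haveI := hPM i
        exact meas_split a t₀ 1 ht₀.1 ht₀.2
      have h6 : ENNReal.ofReal ((D + 1 : ℕ) * s) + ENNReal.ofReal s ≤
          ENNReal.ofReal s + μ i (Set.Ioc t₀ 1) := by
        calc ENNReal.ofReal ((D + 1 : ℕ) * s) + ENNReal.ofReal s
            = ENNReal.ofReal ((D + 1 + 1 : ℕ) * s) := by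
              rw [← ENNReal.ofReal_add (by positivity) hs]
              congr 1
              push_cast
              ring
          _ ≤ μ i (Set.Ioc a 1) := hmass i hpi
          _ = μ i (Set.Ioc a t₀) + μ i (Set.Ioc t₀ 1) := hsplit
          _ ≤ ENNReal.ofReal s + μ i (Set.Ioc t₀ 1) := add_le_add_left hto _
      rw [add_comm (ENNReal.ofReal ((D + 1 : ℕ) * s)) (ENNReal.ofReal s)] at h6
      exact (ENNReal.add_le_add_iff_left ENNReal.ofReal_ne_top).1 h6
    obtain ⟨x', g', hx'mono, hx'0, hx'last, hbound'⟩ :=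
      IH μ hμ s hs p' hp'sum t₀ ht₀.2 hmass'
    refine ⟨Fin.cases a x', Fin.cases i₀ g', ?_, by simp, ?_, ?_⟩
    · rw [Fin.monotone_iff_le_succ]
      intro j
      rcases Fin.eq_zero_or_eq_succ j with rfl | ⟨j', rfl⟩
      · have h0c : ((0 : Fin (D+2)).castSucc) = (0 : Fin (D+3)) := rfl
        rw [h0c]
        simp only [Fin.cases_zero, Fin.cases_succ, hx'0]
        exact ht₀.1
      · have h1 : (j'.succ).castSucc = (j'.castSucc).succ := rfl
        rw [h1]
        simp only [Fin.cases_succ]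
        exact hx'mono (by simp [Fin.le_def])
    · have h1 : Fin.last (D + 1 + 1) = (Fin.last (D + 1)).succ := rfl
      rw [h1]
      simp only [Fin.cases_succ]
      exact hx'last
    · intro i
      have pieceEq : ∀ j' : Fin (D + 1),
          Set.Ioc ((Fin.cases a x' : Fin (D+3) → ℝ) (j'.succ).castSucc)
            ((Fin.cases a x' : Fin (D+3) → ℝ) (j'.succ).succ)
          = Set.Ioc (x' j'.castSucc) (x' j'.succ) := by
        intro j'
        have h1 : (j'.succ).castSucc = (j'.castSucc).succ := rfl
        rw [h1]
        simp only [Fin.cases_succ]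
      have hsubset : (⋃ j ∈ {j : Fin (D + 1) | g' j = i},
            Set.Ioc (x' j.castSucc) (x' j.succ)) ⊆
          ⋃ j ∈ {j : Fin (D + 2) | (Fin.cases i₀ g' : Fin (D+2) → Fin n) j = i},
            Set.Ioc ((Fin.cases a x' : Fin (D+3) → ℝ) j.castSucc)
              ((Fin.cases a x' : Fin (D+3) → ℝ) j.succ) := by
        refine Set.iUnion₂_subset fun j' hj' => ?_
        have hmem2 : j'.succ ∈
            {j : Fin (D + 2) | (Fin.cases i₀ g' : Fin (D+2) → Fin n) j = i} := by
          simp only [Set.mem_setOf_eq, Fin.cases_succ]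
          simpa using hj'
        rw [← pieceEq j']
        exact subset_biUnion_of_mem
          (u := fun j => Set.Ioc ((Fin.cases a x' : Fin (D+3) → ℝ) j.castSucc)
            ((Fin.cases a x' : Fin (D+3) → ℝ) j.succ)) hmem2
      by_cases heq : i = i₀
      · rw [heq]
        have hU'sub : (⋃ j ∈ {j : Fin (D + 1) | g' j = i₀},
              Set.Ioc (x' j.castSucc) (x' j.succ)) ⊆ Set.Ioc t₀ 1 := by
          refine Set.iUnion₂_subset fun j' _ => ?_
          refine Set.Ioc_subset_Ioc ?_ ?_
          · rw [← hx'0]; exact hx'mono (Fin.zero_le _)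
          · rw [← hx'last]; exact hx'mono (Fin.le_last _)
        have hdisj : Disjoint (Set.Ioc a t₀)
            (⋃ j ∈ {j : Fin (D + 1) | g' j = i₀}, Set.Ioc (x' j.castSucc) (x' j.succ)) :=
          (Set.Ioc_disjoint_Ioc_of_le le_rfl).mono_right hU'sub
        have hmeasU' : MeasurableSet
            (⋃ j ∈ {j : Fin (D + 1) | g' j = i₀}, Set.Ioc (x' j.castSucc) (x' j.succ)) :=
          MeasurableSet.biUnion (Set.to_countable _) fun _ _ => measurableSet_Ioc
        have hpiece0 : Set.Ioc a t₀ ⊆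
            ⋃ j ∈ {j : Fin (D + 2) | (Fin.cases i₀ g' : Fin (D+2) → Fin n) j = i₀},
              Set.Ioc ((Fin.cases a x' : Fin (D+3) → ℝ) j.castSucc)
                ((Fin.cases a x' : Fin (D+3) → ℝ) j.succ) := by
          have hmem : (0 : Fin (D + 2)) ∈
              {j : Fin (D + 2) | (Fin.cases i₀ g' : Fin (D+2) → Fin n) j = i₀} := by
            simp only [Set.mem_setOf_eq, Fin.cases_zero]
          refine (subset_biUnion_of_mem hmem).trans_eq' ?_
          have h0c : ((0 : Fin (D+2)).castSucc) = (0 : Fin (D+3)) := rfl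
          rw [h0c]
          simp only [Fin.cases_succ, Fin.cases_zero, hx'0]
        have hsubset0 := hsubset
        rw [heq] at hsubset0
        calc ENNReal.ofReal ((p i₀ : ℝ) * s)
            = ENNReal.ofReal s + ENNReal.ofReal ((p' i₀ : ℝ) * s) := by
              rw [← ENNReal.ofReal_add hs (by positivity)]
              congr 1
              have : (p' i₀ : ℝ) = (p i₀ : ℝ) - 1 := by
                rw [hp'def, Function.update_self]
                push_cast [Nat.cast_sub (by omega : 1 ≤ p i₀)]
                ring
              rw [this]; ring
          _ ≤ μ i₀ (Set.Ioc a t₀) +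
              μ i₀ (⋃ j ∈ {j : Fin (D + 1) | g' j = i₀},
                Set.Ioc (x' j.castSucc) (x' j.succ)) := by
              gcongr
              · exact hμt₀.ge
              · exact hbound' i₀
          _ = μ i₀ (Set.Ioc a t₀ ∪ ⋃ j ∈ {j : Fin (D + 1) | g' j = i₀},
                Set.Ioc (x' j.castSucc) (x' j.succ)) :=
              (measure_union hdisj hmeasU').symm
          _ ≤ _ := measure_mono (Set.union_subset hpiece0 hsubset0)
      · have hpp : p' i = p i := Function.update_of_ne heq _ _
        calc ENNReal.ofReal ((p i : ℝ) * s)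
            = ENNReal.ofReal ((p' i : ℝ) * s) := by rw [hpp]
          _ ≤ _ := (hbound' i).trans (measure_mono hsubset)

/-- The rational-demands case of disproportionate division: some finite number of cuts
suffices. -/
theorem rational_demands (n : ℕ) (hn : 1 ≤ n)
    (μ : Fin n → Measure ℝ) (hμ : ∀ i, GoodMeasure (μ i))
    (α : Fin n → ℚ) (hα : ∀ i, 0 ≤ α i) (hsum : ∑ i, α i = 1) :
    ∃ m : ℕ, Solvable n m μ (fun i => (α i : ℝ)) := by
  classical
  set D : ℕ := ∏ i, (α i).den with hDdef
  have hDpos : 0 < D := Finset.prod_pos fun i _ => (α i).pos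
  set p : Fin n → ℕ := fun i => (α i).num.toNat * ∏ j ∈ Finset.univ.erase i, (α j).den
    with hpdef
  have key : ∀ i, (p i : ℚ) = α i * D := by
    intro i
    have hprod : ((α i).den : ℚ) * ∏ j ∈ Finset.univ.erase i, ((α j).den : ℚ) = (D : ℚ) := by
      rw [hDdef]
      push_cast
      exact Finset.mul_prod_erase Finset.univ (fun j => ((α j).den : ℚ)) (Finset.mem_univ i)
    have hnum : (((α i).num.toNat : ℤ) : ℚ) = ((α i).num : ℚ) := by
      congr 1
      exact Int.toNat_of_nonneg (Rat.num_nonneg.2 (hα i))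
    have hαi : α i = ((α i).num : ℚ) / ((α i).den : ℚ) := (Rat.num_div_den (α i)).symm
    have hden : ((α i).den : ℚ) ≠ 0 := Nat.cast_ne_zero.2 (α i).den_nz
    have h0 : ((α i).num.toNat : ℚ) = ((α i).num : ℚ) := by
      exact_mod_cast congrArg (fun z : ℤ => (z : ℚ)) (Int.toNat_of_nonneg (Rat.num_nonneg.2 (hα i)))
    calc (p i : ℚ)
        = ((α i).num.toNat : ℚ) * ∏ j ∈ Finset.univ.erase i, ((α j).den : ℚ) := by
          rw [hpdef]; push_cast; ring
      _ = ((α i).num : ℚ) * ∏ j ∈ Finset.univ.erase i, ((α j).den : ℚ) := by rw [h0]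
      _ = α i * (((α i).den : ℚ) * ∏ j ∈ Finset.univ.erase i, ((α j).den : ℚ)) := by
          have hn2 : ((α i).num : ℚ) = α i * ((α i).den : ℚ) :=
            (div_eq_iff hden).1 (Rat.num_div_den (α i))
          rw [hn2]; ring
      _ = α i * D := by rw [hprod]
  have hpsum : ∑ i, p i = D := by
    have : ((∑ i, p i : ℕ) : ℚ) = ((D : ℕ) : ℚ) := by
      push_cast
      calc (∑ i, (p i : ℚ)) = ∑ i, α i * D := by
            exact Finset.sum_congr rfl fun i _ => key i
        _ = (∑ i, α i) * D := by rw [← Finset.sum_mul]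
        _ = D := by rw [hsum, one_mul]
    exact Nat.cast_injective this
  obtain ⟨E, hE⟩ : ∃ E, D = E + 1 := ⟨D - 1, by omega⟩
  have hIoc1 : ∀ i, μ i (Set.Ioc (0:ℝ) 1) = 1 := by
    intro i
    obtain ⟨hPM, hnull, hatom⟩ := hμ i
    haveI := hPM
    have hIcc : μ i (Set.Icc (0:ℝ) 1) = 1 := by
      have h1 := measure_compl (μ := μ i) (s := Set.Icc (0:ℝ) 1) measurableSet_Icc (measure_ne_top _ _)
      rw [hnull] at h1
      have h2 : μ i (Set.Icc (0:ℝ) 1) ≤ 1 := prob_le_one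
      have h3 : μ i Set.univ = 1 := measure_univ
      rw [h3] at h1
      have := tsub_eq_zero_iff_le.1 h1.symm
      exact le_antisymm h2 this
    have hsplit : μ i (Set.Icc (0:ℝ) 1) ≤ μ i {(0:ℝ)} + μ i (Set.Ioc (0:ℝ) 1) := by
      refine le_trans (measure_mono ?_) (measure_union_le _ _)
      intro z hz
      rcases eq_or_lt_of_le hz.1 with h | h
      · exact Or.inl (by simp [← h])
      · exact Or.inr ⟨h, hz.2⟩
    rw [hatom 0, zero_add] at hsplit
    exact le_antisymm prob_le_one (hIcc ▸ hsplit)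
  have hs : (0:ℝ) ≤ 1 / D := by positivity
  have hmass : ∀ i, 0 < p i →
      ENNReal.ofReal ((E + 1 : ℕ) * (1 / D)) ≤ μ i (Set.Ioc (0:ℝ) 1) := by
    intro i _
    rw [hIoc1 i]
    have : ((E + 1 : ℕ) : ℝ) * (1 / D) = 1 := by
      rw [← hE]
      field_simp
    rw [this]
    simp
  obtain ⟨x, g, hmono, hx0, hxlast, hbound⟩ :=
    slide E μ hμ (1 / D) hs p (by omega) 0 zero_le_one hmass
  refine ⟨E, x, g, hmono, hx0, hxlast, ?_⟩
  intro i
  have hval : ((α i : ℝ)) = (p i : ℝ) * (1 / D) := by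
    have hD0 : (D:ℝ) ≠ 0 := by positivity
    have h1 : (p i : ℝ) = (α i : ℝ) * D := by
      exact_mod_cast congrArg (fun q : ℚ => (q : ℝ)) (key i)
    rw [h1]
    field_simp
  show ENNReal.ofReal ((α i : ℝ)) ≤ _
  rw [hval]
  exact hbound i
end

section
/- For every n ≥ 2 there exist non-atomic Borel probability measures μ₁, ..., μ_n on [0,1] and non-negative demands α₁, ..., α_n summing to 1 such that every disproportionate division (a partition of [0,1] into intervals assigned to agents with μᵢ(Xᵢ) ≥ αᵢ for all i) uses at least 2n − 2 cuts. -/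
open MeasureTheory Set

noncomputable def mylo (n : ℕ) (i : Fin n) : ℝ := if (i : ℕ) = 0 then 0 else (i : ℝ) / n
noncomputable def myhi (n : ℕ) (i : Fin n) : ℝ :=
  if (i : ℕ) = 0 then 1 else (i : ℝ) / n + 1 / (4 * n)
noncomputable def myMu (n : ℕ) (i : Fin n) : Measure ℝ :=
  (ENNReal.ofReal (myhi n i - mylo n i)⁻¹) • volume.restrict (Set.Ioc (mylo n i) (myhi n i))
noncomputable def myAl (n : ℕ) (i : Fin n) : ℝ :=
  if (i : ℕ) = 0 then 1 - 1 / (4 * n) else 1 / (4 * n * (n - 1))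

lemma aux_bounds (n : ℕ) (hn : 2 ≤ n) (i : Fin n) :
    0 < myhi n i - mylo n i ∧ 0 ≤ mylo n i ∧ myhi n i ≤ 1 := by
  have hn0 : (0:ℝ) < n := by positivity
  by_cases h : (i : ℕ) = 0
  · simp [mylo, myhi, h]
  · have hi1 : ((i : ℕ) : ℝ) ≤ (n : ℝ) - 1 := by
      have h2 : (i : ℕ) + 1 ≤ n := i.isLt
      have h3 : ((i : ℕ) : ℝ) + 1 ≤ (n : ℝ) := by exact_mod_cast h2
      linarith
    have hge : (0:ℝ) ≤ ((i : ℕ) : ℝ) := by positivity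
    refine ⟨?_, ?_, ?_⟩
    · simp only [mylo, myhi, if_neg h]
      have : (0:ℝ) < 1 / (4 * n) := by positivity
      linarith
    · simp only [mylo, if_neg h]; positivity
    · simp only [myhi, if_neg h]
      rw [div_add_div _ _ (ne_of_gt hn0) (by positivity : (4 * (n:ℝ)) ≠ 0),
        div_le_one (by positivity)]
      nlinarith

lemma myMu_apply (n : ℕ) (i : Fin n) (s : Set ℝ) :
    myMu n i s = ENNReal.ofReal (myhi n i - mylo n i)⁻¹ *
      volume (s ∩ Set.Ioc (mylo n i) (myhi n i)) := by
  simp [myMu, Measure.restrict_apply' measurableSet_Ioc]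

lemma myMu_good (n : ℕ) (hn : 2 ≤ n) (i : Fin n) : GoodMeasure (myMu n i) := by
  obtain ⟨hlen, hlo, hhi⟩ := aux_bounds n hn i
  refine ⟨⟨?_⟩, ?_, ?_⟩
  · rw [myMu_apply, Set.univ_inter, Real.volume_Ioc, ← ENNReal.ofReal_mul (by positivity),
      inv_mul_cancel₀ (ne_of_gt hlen), ENNReal.ofReal_one]
  · rw [myMu_apply]
    have : (Set.Icc (0:ℝ) 1)ᶜ ∩ Set.Ioc (mylo n i) (myhi n i) = ∅ := by
      rw [Set.eq_empty_iff_forall_notMem]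
      rintro p ⟨hp1, hp2, hp3⟩
      exact hp1 ⟨le_trans hlo (le_of_lt hp2), le_trans hp3 hhi⟩
    rw [this]; simp
  · intro p
    rw [myMu_apply]
    have : volume ({p} ∩ Set.Ioc (mylo n i) (myhi n i)) = 0 :=
      measure_mono_null (Set.inter_subset_left) (Real.volume_singleton)
    rw [this]; simp

/-- Lower bound: for every `n ≥ 2` there are non-atomic probability measures on `[0,1]` and
demands summing to `1` for which every disproportionate division requires at least `2n − 2`
cuts. -/
theorem lower_bound (n : ℕ) (hn : 2 ≤ n) :
    ∃ (μ : Fin n → Measure ℝ) (α : Fin n → ℝ),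
      (∀ i, GoodMeasure (μ i)) ∧ (∀ i, 0 ≤ α i) ∧ ∑ i, α i = 1 ∧
      ∀ m : ℕ, Solvable n m μ α → 2 * n - 2 ≤ m := by
  have hn0 : (0:ℝ) < n := by positivity
  have hn2 : (2:ℝ) ≤ n := by exact_mod_cast hn
  have hn1 : (0:ℝ) < (n:ℝ) - 1 := by linarith
  have hden : (0:ℝ) < 4 * n * ((n:ℝ) - 1) := by nlinarith
  have hquar : (0:ℝ) < 1 / (4 * (n:ℝ)) := by positivity
  have hquar8 : 1 / (4 * (n:ℝ)) ≤ 1 / 8 := by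
    apply one_div_le_one_div_of_le (by norm_num); linarith
  refine ⟨myMu n, myAl n, fun i => myMu_good n hn i, ?_, ?_, ?_⟩
  · intro i
    by_cases h : (i : ℕ) = 0
    · simp only [myAl, if_pos h]; linarith
    · simp only [myAl, if_neg h]
      exact le_of_lt (div_pos one_pos hden)
  · have key : ∀ i : Fin n, myAl n i =
        1 / (4 * n * ((n:ℝ) - 1)) +
          (if (i:ℕ) = 0 then (1 - 1/(4*(n:ℝ))) - 1/(4*n*((n:ℝ)-1)) else 0) := by
      intro i; by_cases h : (i:ℕ) = 0 <;> simp [myAl, h]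
    rw [Finset.sum_congr rfl (fun i _ => key i), Finset.sum_add_distrib, Finset.sum_const]
    have hsingle : ∑ i : Fin n,
        (if (i:ℕ) = 0 then (1 - 1/(4*(n:ℝ))) - 1/(4*n*((n:ℝ)-1)) else 0)
        = (1 - 1/(4*(n:ℝ))) - 1/(4*n*((n:ℝ)-1)) := by
      rw [Finset.sum_eq_single_of_mem (⟨0, by omega⟩ : Fin n) (Finset.mem_univ _)]
      · simp
      · intro j _ hj
        rw [if_neg]
        intro hj0
        exact hj (Fin.ext hj0)
    rw [hsingle]
    simp only [Finset.card_univ, Fintype.card_fin, nsmul_eq_mul]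
    field_simp
    ring
  · -- main lower-bound argument
    intro m hS
    obtain ⟨x, g, hmono, hx0, hxlast, hineq⟩ := hS
    set δ : ℝ := 1 / (4 * (n:ℝ)) with hδ
    -- all cut points lie in [0,1]
    have hx01 : ∀ k, 0 ≤ x k ∧ x k ≤ 1 := fun k =>
      ⟨hx0 ▸ hmono (Fin.zero_le k), hxlast ▸ hmono (Fin.le_last k)⟩
    -- agent 0
    set i0 : Fin n := ⟨0, by omega⟩ with hi0
    have hmu0 : ∀ s : Set ℝ, myMu n i0 s = volume (s ∩ Set.Ioc (0:ℝ) 1) := by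
      intro s
      rw [myMu_apply]
      have h0 : (i0 : ℕ) = 0 := rfl
      simp [mylo, myhi, h0]
    set U0 : Set ℝ := ⋃ j ∈ {j : Fin (m + 1) | g j = i0}, Set.Ioc (x j.castSucc) (x j.succ)
      with hU0def
    have hU0meas : MeasurableSet U0 :=
      MeasurableSet.biUnion (Set.to_countable _) (fun _ _ => measurableSet_Ioc)
    have hU0sub : U0 ⊆ Set.Ioc (0:ℝ) 1 := by
      refine Set.iUnion₂_subset fun j _ => ?_
      exact Set.Ioc_subset_Ioc (hx01 j.castSucc).1 (hx01 j.succ).2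
    have hU0vol : ENNReal.ofReal (1 - δ) ≤ volume U0 := by
      have h := hineq i0
      rw [hmu0] at h
      rw [Set.inter_eq_self_of_subset_left hU0sub] at h
      have hα0 : myAl n i0 = 1 - δ := by
        have h0 : (i0 : ℕ) = 0 := rfl
        simp [myAl, h0, hδ]
      rwa [hα0] at h
    -- disjointness of distinct pieces
    have hdisj : ∀ j j' : Fin (m + 1), j ≠ j' →
        Disjoint (Set.Ioc (x j.castSucc) (x j.succ)) (Set.Ioc (x j'.castSucc) (x j'.succ)) := by
      intro j j' hne
      rw [Set.Ioc_disjoint_Ioc]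
      rcases lt_or_gt_of_ne (fun h => hne (Fin.ext h) : (j:ℕ) ≠ (j':ℕ)) with h | h
      · have : x j.succ ≤ x j'.castSucc := hmono (by simp [Fin.le_def]; omega)
        exact le_trans (min_le_left _ _) (le_trans this (le_max_right _ _))
      · have : x j'.succ ≤ x j.castSucc := hmono (by simp [Fin.le_def]; omega)
        exact le_trans (min_le_right _ _) (le_trans this (le_max_left _ _))
    -- every piece not owned by agent 0 is short
    have hshort : ∀ j : Fin (m + 1), g j ≠ i0 → x j.succ ≤ x j.castSucc + δ := by
      intro j hgj
      rcases le_or_gt (x j.succ) (x j.castSucc) with hle | hlt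
      · linarith [hquar]
      have hdisjU : Disjoint (Set.Ioc (x j.castSucc) (x j.succ)) U0 := by
        rw [hU0def, Set.disjoint_iUnion₂_right]
        intro j' hj'
        exact hdisj j j' (fun h => hgj (h ▸ hj'))
      have hsum : volume (Set.Ioc (x j.castSucc) (x j.succ)) + volume U0 ≤ 1 := by
        rw [← measure_union hdisjU hU0meas]
        have hsub : Set.Ioc (x j.castSucc) (x j.succ) ∪ U0 ⊆ Set.Ioc (0:ℝ) 1 :=
          Set.union_subset (Set.Ioc_subset_Ioc (hx01 j.castSucc).1 (hx01 j.succ).2) hU0sub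
        calc volume (Set.Ioc (x j.castSucc) (x j.succ) ∪ U0) ≤ volume (Set.Ioc (0:ℝ) 1) :=
              measure_mono hsub
          _ = 1 := by rw [Real.volume_Ioc]; norm_num
      have hchain : ENNReal.ofReal ((x j.succ - x j.castSucc) + (1 - δ)) ≤ ENNReal.ofReal 1 := by
        rw [ENNReal.ofReal_add (by linarith) (by linarith), ENNReal.ofReal_one]
        calc ENNReal.ofReal (x j.succ - x j.castSucc) + ENNReal.ofReal (1 - δ)
            ≤ volume (Set.Ioc (x j.castSucc) (x j.succ)) + volume U0 := by
              rw [Real.volume_Ioc]; exact add_le_add_right hU0vol _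
          _ ≤ 1 := hsum
      have := (ENNReal.ofReal_le_ofReal_iff (by norm_num)).mp hchain
      linarith
    -- each small agent owns a short piece meeting its window
    have key : ∀ k : Fin (n - 1), ∃ j : Fin (m + 1),
        ((k:ℕ) + 1 : ℝ) / n - δ < x j.castSucc ∧ x j.castSucc < x j.succ ∧
          x j.succ < ((k:ℕ) + 1 : ℝ) / n + 2 * δ := by
      intro k
      set ik : Fin n := ⟨(k:ℕ) + 1, by have := k.isLt; omega⟩ with hik
      have hikv : (ik : ℕ) = (k:ℕ) + 1 := rfl
      set c : ℝ := ((k:ℕ) + 1 : ℝ) / n with hc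
      have hlo_ik : mylo n ik = c := by
        simp only [mylo, hikv]
        rw [if_neg (by omega), hc]
        push_cast
        try ring
      have hhi_ik : myhi n ik = c + δ := by
        simp only [myhi, hikv]
        rw [if_neg (by omega), hc, hδ]
        push_cast
        try ring
      have h := hineq ik
      have hαpos : 0 < ENNReal.ofReal (myAl n ik) := by
        rw [ENNReal.ofReal_pos]
        simp only [myAl, hikv]
        rw [if_neg (by omega)]
        exact div_pos one_pos hden
      have hUpos : volume ((⋃ j ∈ {j : Fin (m + 1) | g j = ik},
          Set.Ioc (x j.castSucc) (x j.succ)) ∩ Set.Ioc c (c + δ)) ≠ 0 := by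
        intro hz
        rw [myMu_apply, hlo_ik, hhi_ik, hz, mul_zero] at h
        exact absurd (lt_of_lt_of_le hαpos h) (lt_irrefl 0)
      rw [Set.iUnion₂_inter] at hUpos
      have hex : ∃ j ∈ {j : Fin (m + 1) | g j = ik},
          volume (Set.Ioc (x j.castSucc) (x j.succ) ∩ Set.Ioc c (c + δ)) ≠ 0 := by
        by_contra hall
        push_neg at hall
        exact hUpos ((measure_biUnion_null_iff (Set.to_countable _)).mpr hall)
      obtain ⟨j, hgj, hjvol⟩ := hex
      refine ⟨j, ?_⟩
      rw [Set.Ioc_inter_Ioc, Real.volume_Ioc, Ne, ENNReal.ofReal_eq_zero, not_le,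
        sub_pos] at hjvol
      have h1 : x j.castSucc < c + δ := lt_of_le_of_lt (le_max_left _ _) (lt_of_lt_of_le hjvol (min_le_right _ _))
      have h2 : c < x j.succ := lt_of_le_of_lt (le_max_right _ _) (lt_of_lt_of_le hjvol (min_le_left _ _))
      have h3 : x j.castSucc < x j.succ := lt_of_le_of_lt (le_max_left _ _) (lt_of_lt_of_le hjvol (min_le_left _ _))
      have hgj' : g j = ik := hgj
      have hne0 : g j ≠ i0 := by
        rw [hgj']
        intro hcontra
        have hvv := congrArg Fin.val hcontra
        simp [hikv, hi0] at hvv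
      have hsh := hshort j hne0
      exact ⟨by linarith, h3, by linarith⟩
    choose J hJ1 hJ2 hJ3 using key
    -- index map: two endpoints per small agent
    set idx : Fin (n - 1) × Fin 2 → Fin (m + 2) := fun p =>
      ⟨(J p.1).val + (p.2).val, by have := (J p.1).isLt; have := (p.2).isLt; omega⟩ with hidx
    have hidx_cast : ∀ p : Fin (n-1) × Fin 2, (J p.1).castSucc ≤ idx p ∧ idx p ≤ (J p.1).succ := by
      intro p
      constructor <;> (rw [Fin.le_def]; simp [hidx]; try omega)
    have hxin : ∀ p : Fin (n-1) × Fin 2,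
        ((p.1:ℕ) + 1 : ℝ) / n - δ < x (idx p) ∧ x (idx p) < ((p.1:ℕ) + 1 : ℝ) / n + 2 * δ := by
      intro p
      exact ⟨lt_of_lt_of_le (hJ1 p.1) (hmono (hidx_cast p).1),
        lt_of_le_of_lt (hmono (hidx_cast p).2) (hJ3 p.1)⟩
    have hxpos : ∀ p : Fin (n-1) × Fin 2, 0 < x (idx p) := by
      intro p
      have h1 := (hxin p).1
      have hk0 : (0:ℝ) ≤ ((p.1:ℕ) : ℝ) := by positivity
      have : (1:ℝ) / n ≤ ((p.1:ℕ) + 1 : ℝ) / n := by gcongr; linarith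
      have h2 : δ < 1 / (n:ℝ) := by
        rw [hδ]
        exact one_div_lt_one_div_of_lt hn0 (by linarith)
      linarith
    have hxlt1 : ∀ p : Fin (n-1) × Fin 2, x (idx p) < 1 := by
      intro p
      have h1 := (hxin p).2
      have hk : ((p.1:ℕ) + 1 : ℝ) ≤ (n:ℝ) - 1 := by
        have h2 : (p.1:ℕ) + 1 ≤ n - 1 := p.1.isLt
        have h3 : ((p.1:ℕ) : ℝ) + 1 ≤ ((n - 1 : ℕ) : ℝ) := by exact_mod_cast h2
        have h4 : ((n - 1 : ℕ) : ℝ) = (n:ℝ) - 1 := by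
          rw [Nat.cast_sub (by omega)]; norm_num
        linarith
      have h5 : ((p.1:ℕ) + 1 : ℝ) / n + 2 * δ ≤ ((n:ℝ) - 1) / n + 2 * δ := by gcongr
      have h6 : ((n:ℝ) - 1) / n + 2 * δ = 1 - 1 / (2 * n) := by
        rw [hδ]; field_simp; ring
      have h7 : (0:ℝ) < 1 / (2 * n) := by positivity
      linarith
    have hidx_bd : ∀ p : Fin (n-1) × Fin 2, 1 ≤ (idx p).val ∧ (idx p).val ≤ m := by
      intro p
      have hne0 : (idx p).val ≠ 0 := by
        intro h
        have h0 : idx p = 0 := Fin.ext (by rw [h]; rfl)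
        have hp := hxpos p
        rw [h0, hx0] at hp
        exact lt_irrefl 0 hp
      have hnelast : (idx p).val ≠ m + 1 := by
        intro h
        have hlast : idx p = Fin.last (m + 1) := Fin.ext (by rw [h]; rfl)
        have := hxlt1 p
        rw [hlast, hxlast] at this
        exact lt_irrefl 1 this
      have := (idx p).isLt
      omega
    -- injective map into Fin m
    set ψ : Fin (n - 1) × Fin 2 → Fin m := fun p =>
      ⟨(idx p).val - 1, by have := hidx_bd p; omega⟩ with hψ
    have hψinj : Function.Injective ψ := by
      intro p q hpq
      have hval : (idx p).val = (idx q).val := by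
        have h1 := hidx_bd p
        have h2 := hidx_bd q
        have hv : (idx p).val - 1 = (idx q).val - 1 := congrArg Fin.val hpq
        omega
      have hxeq : x (idx p) = x (idx q) := by rw [Fin.ext hval]
      -- first coordinates agree
      have h1eq : p.1 = q.1 := by
        by_contra hne
        have hvne : (p.1 : ℕ) ≠ (q.1 : ℕ) := fun h => hne (Fin.ext h)
        have harith : ∀ a b : Fin (n - 1), (a:ℕ) < (b:ℕ) →
            ((a:ℕ) + 1 : ℝ) / n + 2 * δ ≤ ((b:ℕ) + 1 : ℝ) / n - δ := by
          intro a b hab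
          have hcast : ((a:ℕ) : ℝ) + 1 ≤ ((b:ℕ) : ℝ) := by exact_mod_cast hab
          have e1 : (2:ℝ) * δ = (1/2) / n := by rw [hδ]; field_simp; try ring
          have e2 : δ = (1/4) / n := by rw [hδ]; field_simp; try ring
          rw [e1, e2, ← add_div, div_sub_div_same]
          gcongr
          linarith
        rcases lt_trichotomy ((p.1:ℕ)) ((q.1:ℕ)) with hlt | heq | hgt
        · linarith [(hxin p).2, (hxin q).1, harith p.1 q.1 hlt]
        · exact hvne heq
        · linarith [(hxin q).2, (hxin p).1, harith q.1 p.1 hgt]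
      have hval2 : (J p.1).val + (p.2:ℕ) = (J q.1).val + (q.2:ℕ) := by
        simpa [hidx] using hval
      rw [h1eq] at hval2
      have h2eq : p.2 = q.2 := Fin.ext (by omega)
      exact Prod.ext h1eq h2eq
    have hcard := Fintype.card_le_of_injective ψ hψinj
    simp only [Fintype.card_prod, Fintype.card_fin] at hcard
    omega
end

section
/- For any two non-atomic Borel probability measures μ₁, μ₂ on the circle S¹ and non-negative reals α₁, α₂ with α₁ + α₂ = 1, there exists an arc X ⊆ S¹ such that either (μ₁(X) = α₁ and μ₂(S¹ \ X) ≥ α₂) or (μ₂(X) = α₂ and μ₁(S¹ \ X) ≥ α₁); equivalently, there is a partition of {1,2} into nonempty sets P, Q and a partition of S¹ into an arc X and its complementary arc X^c with min over P of μᵢ(X) equal to the sum of α over P, and min over Q of μᵢ(X^c) equal to the sum of α over Q. -/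
open MeasureTheory Set intervalIntegral
open scoped ENNReal NNReal

private lemma circle_partition_key_real (f₁ f₂ : ℝ → ℝ) (hc : Continuous f₁) (hm₁ : Monotone f₁)
    (hm₂ : Monotone f₂) (h0 : f₁ 0 = 0) (h1 : f₁ 1 = 1)
    {α₁ α₂ : ℝ} (hα₁ : 0 < α₁) (hα₂ : 0 < α₂) (hsum : α₁ + α₂ = 1) :
    ∃ a b : ℝ, 0 ≤ a ∧ a ≤ b ∧ b ≤ 1 ∧
      ((f₁ b - f₁ a = α₁ ∧ f₂ b - f₂ a ≤ α₁) ∨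
       (f₁ b - f₁ a = α₂ ∧ α₂ ≤ f₂ b - f₂ a)) := by
  by_contra hcon
  push_neg at hcon
  have hα₁1 : α₁ ≤ 1 := by linarith
  have hα₂1 : α₂ ≤ 1 := by linarith
  -- quantile function
  set S : ℝ → Set ℝ := fun u => Icc (0:ℝ) 1 ∩ f₁ ⁻¹' {u} with hS
  have hSne : ∀ u ∈ Icc (0:ℝ) 1, (S u).Nonempty := by
    intro u hu
    have := intermediate_value_Icc (zero_le_one) hc.continuousOn
    rw [h0, h1] at this
    obtain ⟨x, hx, hfx⟩ := this hu
    exact ⟨x, hx, hfx⟩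
  have hSbdd : ∀ u, BddBelow (S u) := fun u => (bddBelow_Icc).mono inter_subset_left
  have hSclosed : ∀ u, IsClosed (S u) :=
    fun u => isClosed_Icc.inter (isClosed_singleton.preimage hc)
  set q : ℝ → ℝ := fun u => sInf (S u) with hq
  have hqmem : ∀ u ∈ Icc (0:ℝ) 1, q u ∈ S u :=
    fun u hu => (hSclosed u).csInf_mem (hSne u hu) (hSbdd u)
  have hqval : ∀ u ∈ Icc (0:ℝ) 1, f₁ (q u) = u := fun u hu => (hqmem u hu).2
  have hqIcc : ∀ u ∈ Icc (0:ℝ) 1, q u ∈ Icc (0:ℝ) 1 := fun u hu => (hqmem u hu).1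
  have hqmono : ∀ u ∈ Icc (0:ℝ) 1, ∀ v ∈ Icc (0:ℝ) 1, u ≤ v → q u ≤ q v := by
    intro u hu v hv huv
    have hqv := hqmem v hv
    have : u ∈ Icc (f₁ 0) (f₁ (q v)) := by
      rw [h0, hqval v hv]; exact ⟨hu.1, huv⟩
    obtain ⟨y, hy, hfy⟩ := intermediate_value_Icc (hqv.1.1) hc.continuousOn this
    exact le_trans (csInf_le (hSbdd u) ⟨⟨hy.1, le_trans hy.2 hqv.1.2⟩, hfy⟩) hy.2
  set G : ℝ → ℝ := fun u => f₂ (q u) with hG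
  have hGmono : MonotoneOn G (Icc (0:ℝ) 1) :=
    fun x hx y hy hxy => hm₂ (hqmono x hx y hy hxy)
  -- pointwise inequalities from failure
  have gGt : ∀ s ∈ Icc (0:ℝ) α₂, α₁ < G (s + α₁) - G s := by
    intro s hs
    have hs1 : s ∈ Icc (0:ℝ) 1 := ⟨hs.1, le_trans hs.2 hα₂1⟩
    have hs2 : s + α₁ ∈ Icc (0:ℝ) 1 := ⟨by linarith [hs.1], by linarith [hs.2]⟩
    have hab : q s ≤ q (s + α₁) := hqmono s hs1 _ hs2 (by linarith)
    have hdiff : f₁ (q (s + α₁)) - f₁ (q s) = α₁ := by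
      rw [hqval _ hs2, hqval _ hs1]; ring
    exact (hcon (q s) (q (s + α₁)) (hqIcc s hs1).1 hab (hqIcc _ hs2).2).1 hdiff
  have hLt : ∀ s ∈ Icc (0:ℝ) α₁, G (s + α₂) - G s < α₂ := by
    intro s hs
    have hs1 : s ∈ Icc (0:ℝ) 1 := ⟨hs.1, le_trans hs.2 hα₁1⟩
    have hs2 : s + α₂ ∈ Icc (0:ℝ) 1 := ⟨by linarith [hs.1], by linarith [hs.2]⟩
    have hab : q s ≤ q (s + α₂) := hqmono s hs1 _ hs2 (by linarith)
    have hdiff : f₁ (q (s + α₂)) - f₁ (q s) = α₂ := by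
      rw [hqval _ hs2, hqval _ hs1]; ring
    exact (hcon (q s) (q (s + α₂)) (hqIcc s hs1).1 hab (hqIcc _ hs2).2).2 hdiff
  -- integrability
  have hint : ∀ c d : ℝ, 0 ≤ c → c ≤ d → d ≤ 1 → IntervalIntegrable G volume c d := by
    intro c d h1' h2' h3'
    exact (hGmono.mono (by rw [uIcc_of_le h2']; exact Icc_subset_Icc h1' h3')).intervalIntegrable
  have int01 : IntervalIntegrable G volume 0 1 := hint 0 1 le_rfl zero_le_one le_rfl
  have int0a1 : IntervalIntegrable G volume 0 α₁ := hint 0 α₁ le_rfl hα₁.le hα₁1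
  have int0a2 : IntervalIntegrable G volume 0 α₂ := hint 0 α₂ le_rfl hα₂.le hα₂1
  have inta11 : IntervalIntegrable G volume α₁ 1 := hint α₁ 1 hα₁.le hα₁1 le_rfl
  have inta21 : IntervalIntegrable G volume α₂ 1 := hint α₂ 1 hα₂.le hα₂1 le_rfl
  have intsh1 : IntervalIntegrable (fun s => G (s + α₁)) volume 0 α₂ := by
    apply MonotoneOn.intervalIntegrable
    intro x hx y hy hxy
    rw [uIcc_of_le hα₂.le] at hx hy
    exact hGmono ⟨by linarith [hx.1], by linarith [hx.2]⟩
      ⟨by linarith [hy.1], by linarith [hy.2]⟩ (by linarith)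
  have intsh2 : IntervalIntegrable (fun s => G (s + α₂)) volume 0 α₁ := by
    apply MonotoneOn.intervalIntegrable
    intro x hx y hy hxy
    rw [uIcc_of_le hα₁.le] at hx hy
    exact hGmono ⟨by linarith [hx.1], by linarith [hx.2]⟩
      ⟨by linarith [hy.1], by linarith [hy.2]⟩ (by linarith)
  -- the two averaged integrals coincide
  have i1 : (∫ s in (0:ℝ)..α₂, G (s + α₁)) = ∫ s in α₁..(1:ℝ), G s := by
    have := integral_comp_add_right (a := (0:ℝ)) (b := α₂) G α₁
    rw [zero_add, show α₂ + α₁ = 1 by linarith] at this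
    exact this
  have i2 : (∫ s in (0:ℝ)..α₁, G (s + α₂)) = ∫ s in α₂..(1:ℝ), G s := by
    have := integral_comp_add_right (a := (0:ℝ)) (b := α₁) G α₂
    rw [zero_add, show α₁ + α₂ = 1 by linarith] at this
    exact this
  have adj1 : (∫ s in α₁..(1:ℝ), G s) = (∫ s in (0:ℝ)..1, G s) - ∫ s in (0:ℝ)..α₁, G s := by
    rw [← integral_add_adjacent_intervals int0a1 inta11]; ring
  have adj2 : (∫ s in α₂..(1:ℝ), G s) = (∫ s in (0:ℝ)..1, G s) - ∫ s in (0:ℝ)..α₂, G s := by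
    rw [← integral_add_adjacent_intervals int0a2 inta21]; ring
  have hIJ : (∫ s in (0:ℝ)..α₂, (G (s + α₁) - G s)) = ∫ s in (0:ℝ)..α₁, (G (s + α₂) - G s) := by
    rw [integral_sub intsh1 int0a2, integral_sub intsh2 int0a1, i1, i2, adj1, adj2]
    ring
  -- lower and upper bounds
  have hI : α₁ * α₂ ≤ ∫ s in (0:ℝ)..α₂, (G (s + α₁) - G s) := by
    have := integral_mono_on (a := (0:ℝ)) (b := α₂) (f := fun _ => α₁)
      (g := fun s => G (s + α₁) - G s) hα₂.le intervalIntegrable_const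
      (intsh1.sub int0a2) (fun x hx => (gGt x hx).le)
    simpa [mul_comm] using this
  have hJ : (∫ s in (0:ℝ)..α₁, (G (s + α₂) - G s)) ≤ α₁ * α₂ := by
    have := integral_mono_on (a := (0:ℝ)) (b := α₁) (g := fun _ => α₂)
      (f := fun s => G (s + α₂) - G s) hα₁.le (intsh2.sub int0a1)
      intervalIntegrable_const (fun x hx => (hLt x hx).le)
    simpa using this
  have hIeq : (∫ s in (0:ℝ)..α₂, (G (s + α₁) - G s)) = α₁ * α₂ :=
    le_antisymm (hIJ ▸ hJ) hI
  -- conclude a.e. equality, contradiction with strict inequality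
  have hzero : (∫ s in (0:ℝ)..α₂, (G (s + α₁) - G s - α₁)) = 0 := by
    rw [integral_sub (intsh1.sub int0a2) intervalIntegrable_const, hIeq]
    simp [mul_comm]
  have hnonneg : 0 ≤ᵐ[volume.restrict (Ioc (0:ℝ) α₂)] fun s => G (s + α₁) - G s - α₁ := by
    refine (ae_restrict_mem measurableSet_Ioc).mono fun x hx => ?_
    have := gGt x ⟨hx.1.le, hx.2⟩
    simp only [Pi.zero_apply]
    linarith
  have haezero := (integral_eq_zero_iff_of_le_of_nonneg_ae hα₂.le hnonneg
    ((intsh1.sub int0a2).sub intervalIntegrable_const)).1 hzero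
  have hneb : Filter.NeBot (ae (volume.restrict (Ioc (0:ℝ) α₂))) := by
    rw [ae_neBot, Ne, Measure.restrict_eq_zero]
    simp [Real.volume_Ioc, hα₂]
  obtain ⟨x, hx1, hx2⟩ := (haezero.and (ae_restrict_mem measurableSet_Ioc)).exists
  have := gGt x ⟨hx2.1.le, hx2.2⟩
  simp only [Pi.zero_apply] at hx1
  linarith


private noncomputable def cptF (μ : Measure (AddCircle (1:ℝ))) : ℝ → ℝ :=
  fun x => (μ ((QuotientAddGroup.mk : ℝ → AddCircle (1:ℝ)) '' Icc 0 x)).toReal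

private lemma cpt_meas (a b : ℝ) :
    MeasurableSet ((QuotientAddGroup.mk : ℝ → AddCircle (1:ℝ)) '' Icc a b) :=
  ((isCompact_Icc.image (AddCircle.continuous_mk' 1)).isClosed).measurableSet

private lemma cpt_int_cases {u v : ℝ}
    (h : (QuotientAddGroup.mk u : AddCircle (1:ℝ)) = QuotientAddGroup.mk v)
    (h0 : 0 ≤ v - u) (h1 : v - u ≤ 1) : v = u ∨ v = u + 1 := by
  rw [QuotientAddGroup.eq_iff_sub_mem] at h
  obtain ⟨k, hk⟩ := AddSubgroup.mem_zmultiples_iff.mp h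
  have hk' : (k:ℝ) = u - v := by rw [← hk]; simp [zsmul_eq_mul]
  have hk0 : -1 ≤ (k:ℝ) := by linarith
  have hk1 : (k:ℝ) ≤ 0 := by linarith
  have : k = -1 ∨ k = 0 := by
    have h0' : (-1:ℤ) ≤ k := by exact_mod_cast hk0
    have h1' : k ≤ 0 := by exact_mod_cast hk1
    omega
  rcases this with h | h <;> rw [h] at hk' <;> [right; left] <;> push_cast at hk' <;> linarith

private lemma cptF_mono (μ : Measure (AddCircle (1:ℝ))) [IsProbabilityMeasure μ] :
    Monotone (cptF μ) := fun x y hxy =>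
  ENNReal.toReal_mono (measure_ne_top _ _)
    (measure_mono (image_mono (Icc_subset_Icc le_rfl hxy)))

private lemma cpt_small_arc (μ : Measure (AddCircle (1:ℝ))) [IsProbabilityMeasure μ]
    (hμ : ∀ z : AddCircle (1:ℝ), μ {z} = 0) (c : ℝ) {ε : ℝ≥0∞} (hε : 0 < ε) :
    ∃ δ : ℝ, 0 < δ ∧ μ ((QuotientAddGroup.mk : ℝ → AddCircle (1:ℝ)) '' Icc (c - δ) (c + δ)) < ε := by
  set s : ℕ → Set (AddCircle (1:ℝ)) :=
    fun n => (QuotientAddGroup.mk : ℝ → AddCircle (1:ℝ)) '' Icc (c - 1/(n+1)) (c + 1/(n+1)) with hs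
  have hpos : ∀ n : ℕ, (0:ℝ) < 1/(n+1) := fun n => by positivity
  have hanti : Antitone s := by
    intro m n hmn
    apply image_mono
    have : (1:ℝ)/(n+1) ≤ 1/(m+1) := by
      apply one_div_le_one_div_of_le (by positivity)
      exact_mod_cast by omega
    exact Icc_subset_Icc (by linarith) (by linarith)
  have hiInter : (⋂ n, s n) = {(QuotientAddGroup.mk c : AddCircle (1:ℝ))} := by
    apply Subset.antisymm
    · intro z hz
      simp only [mem_iInter] at hz
      set t : ℕ → Set ℝ :=
        fun n => ((QuotientAddGroup.mk : ℝ → AddCircle (1:ℝ)) ⁻¹' {z}) ∩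
          Icc (c - 1/(n+1)) (c + 1/(n+1)) with ht
    
      have htne : ∀ n, (t n).Nonempty := by
        intro n
        obtain ⟨w, hw, rfl⟩ := hz n
        exact ⟨w, by simp, hw⟩
      have htcl : ∀ n, IsClosed (t n) :=
        fun n => (isClosed_singleton.preimage (AddCircle.continuous_mk' 1)).inter isClosed_Icc
      have htsub : ∀ n, t (n+1) ⊆ t n := by
        intro n
        apply inter_subset_inter_right
        have h : (1:ℝ)/(↑(n+1)+1) ≤ 1/(↑n+1) := by
          apply one_div_le_one_div_of_le (by positivity)
          push_cast; linarith
        exact Icc_subset_Icc (by linarith) (by linarith)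
      have htc : IsCompact (t 0) :=
        IsCompact.of_isClosed_subset isCompact_Icc (htcl 0) inter_subset_right
      obtain ⟨w, hw⟩ := IsCompact.nonempty_iInter_of_sequence_nonempty_isCompact_isClosed
        t htsub htne htc htcl
      simp only [mem_iInter, ht, mem_inter_iff, mem_preimage, mem_singleton_iff] at hw
      have hwc : w = c := by
        by_contra hne
        have habs : 0 < |w - c| := abs_pos.mpr (sub_ne_zero.mpr hne)
        obtain ⟨n, hn⟩ := exists_nat_one_div_lt habs
        have := (hw n).2
        rw [mem_Icc] at this
        have : |w - c| ≤ 1/(n+1) := abs_sub_le_iff.mpr ⟨by linarith [this.2], by linarith [this.1]⟩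
        linarith
      rw [← (hw 0).1, hwc]
      exact mem_singleton _
    · intro z hz
      rw [mem_singleton_iff] at hz
      subst hz
      simp only [mem_iInter]
      intro n
      exact ⟨c, ⟨by linarith [hpos n], by linarith [hpos n]⟩, rfl⟩
  have htend := tendsto_measure_iInter_atTop
    (μ := μ) (s := s) (fun n => (cpt_meas _ _).nullMeasurableSet) hanti ⟨0, measure_ne_top _ _⟩
  rw [hiInter, hμ] at htend
  have hev := htend.eventually_lt_const hε
  obtain ⟨n, hn⟩ := hev.exists
  exact ⟨1/(n+1), hpos n, hn⟩

private lemma cptF_diff_le (μ : Measure (AddCircle (1:ℝ))) [IsProbabilityMeasure μ]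
    {y z : ℝ} (hyz : y ≤ z) :
    cptF μ z - cptF μ y ≤ (μ ((QuotientAddGroup.mk : ℝ → AddCircle (1:ℝ)) '' Icc y z)).toReal := by
  have hsub : Icc (0:ℝ) z ⊆ Icc 0 y ∪ Icc y z := by
    intro x hx
    rcases le_total x y with h | h
    · exact Or.inl ⟨hx.1, h⟩
    · exact Or.inr ⟨h, hx.2⟩
  have hle : μ ((QuotientAddGroup.mk : ℝ → AddCircle (1:ℝ)) '' Icc 0 z) ≤
      μ ((QuotientAddGroup.mk : ℝ → AddCircle (1:ℝ)) '' Icc 0 y) +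
      μ ((QuotientAddGroup.mk : ℝ → AddCircle (1:ℝ)) '' Icc y z) := by
    calc μ (_ '' Icc 0 z) ≤ μ ((QuotientAddGroup.mk : ℝ → AddCircle (1:ℝ)) '' (Icc 0 y ∪ Icc y z)) :=
          measure_mono (image_mono hsub)
    _ ≤ _ := by rw [image_union]; exact measure_union_le _ _
  have := ENNReal.toReal_mono (by finiteness) hle
  rw [ENNReal.toReal_add (measure_ne_top _ _) (measure_ne_top _ _)] at this
  unfold cptF
  linarith

private lemma cptF_cont (μ : Measure (AddCircle (1:ℝ))) [IsProbabilityMeasure μ]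
    (hμ : ∀ z : AddCircle (1:ℝ), μ {z} = 0) : Continuous (cptF μ) := by
  rw [Metric.continuous_iff]
  intro x₀ ε hε
  obtain ⟨δ, hδ, harc⟩ := cpt_small_arc μ hμ x₀ (ε := ENNReal.ofReal ε) (ENNReal.ofReal_pos.mpr hε)
  refine ⟨δ, hδ, fun x hx => ?_⟩
  rw [Real.dist_eq] at hx ⊢
  have habs := abs_lt.mp hx
  have hsmall : (μ ((QuotientAddGroup.mk : ℝ → AddCircle (1:ℝ)) '' Icc (x₀ - δ) (x₀ + δ))).toReal < ε := by
    rw [← ENNReal.toReal_ofReal hε.le]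
    exact ENNReal.toReal_strict_mono ENNReal.ofReal_ne_top harc
  rcases le_total x x₀ with h | h
  · have h1 := cptF_diff_le μ h
    have h2 : (μ ((QuotientAddGroup.mk : ℝ → AddCircle (1:ℝ)) '' Icc x x₀)).toReal ≤
        (μ ((QuotientAddGroup.mk : ℝ → AddCircle (1:ℝ)) '' Icc (x₀ - δ) (x₀ + δ))).toReal :=
      ENNReal.toReal_mono (measure_ne_top _ _)
        (measure_mono (image_mono (Icc_subset_Icc (by linarith) (by linarith))))
    have h3 := cptF_mono μ h
    rw [abs_lt]
    constructor <;> linarith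
  · have h1 := cptF_diff_le μ h
    have h2 : (μ ((QuotientAddGroup.mk : ℝ → AddCircle (1:ℝ)) '' Icc x₀ x)).toReal ≤
        (μ ((QuotientAddGroup.mk : ℝ → AddCircle (1:ℝ)) '' Icc (x₀ - δ) (x₀ + δ))).toReal :=
      ENNReal.toReal_mono (measure_ne_top _ _)
        (measure_mono (image_mono (Icc_subset_Icc (by linarith) (by linarith))))
    have h3 := cptF_mono μ h
    rw [abs_lt]
    constructor <;> linarith

private lemma cptF_zero (μ : Measure (AddCircle (1:ℝ))) [IsProbabilityMeasure μ]
    (hμ : ∀ z : AddCircle (1:ℝ), μ {z} = 0) : cptF μ 0 = 0 := by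
  unfold cptF
  rw [Icc_self, image_singleton, hμ, ENNReal.toReal_zero]

private lemma cptF_one (μ : Measure (AddCircle (1:ℝ))) [IsProbabilityMeasure μ] :
    cptF μ 1 = 1 := by
  unfold cptF
  have : (QuotientAddGroup.mk : ℝ → AddCircle (1:ℝ)) '' Icc 0 1 = univ := by
    have := AddCircle.coe_image_Icc_eq (1:ℝ) 0
    rwa [zero_add] at this
  rw [this, measure_univ, ENNReal.toReal_one]

private lemma cpt_arc_meas (μ : Measure (AddCircle (1:ℝ))) [IsProbabilityMeasure μ]
    (hμ : ∀ z : AddCircle (1:ℝ), μ {z} = 0) {a b : ℝ} (ha : 0 ≤ a) (hab : a ≤ b) (hb : b ≤ 1) :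
    μ ((QuotientAddGroup.mk : ℝ → AddCircle (1:ℝ)) '' Icc a b) =
      ENNReal.ofReal (cptF μ b - cptF μ a) := by
  have hsplit : (QuotientAddGroup.mk : ℝ → AddCircle (1:ℝ)) '' Icc 0 b =
      (QuotientAddGroup.mk : ℝ → AddCircle (1:ℝ)) '' Icc 0 a ∪
      (QuotientAddGroup.mk : ℝ → AddCircle (1:ℝ)) '' Icc a b := by
    rw [← image_union, Icc_union_Icc_eq_Icc ha hab]
  have hintnull : μ ((QuotientAddGroup.mk : ℝ → AddCircle (1:ℝ)) '' Icc 0 a ∩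
      (QuotientAddGroup.mk : ℝ → AddCircle (1:ℝ)) '' Icc a b) = 0 := by
    refine measure_mono_null (t :=
      ({(QuotientAddGroup.mk a : AddCircle (1:ℝ))} : Set _) ∪ {(QuotientAddGroup.mk 0 : AddCircle (1:ℝ))})
      ?_ (measure_union_null (hμ _) (hμ _))
    rintro z ⟨⟨u, hu, rfl⟩, ⟨v, hv, hvz⟩⟩
    have h0 : 0 ≤ v - u := by linarith [hu.2, hv.1]
    have h1 : v - u ≤ 1 := by linarith [hu.1, hv.2]
    rcases cpt_int_cases hvz.symm h0 h1 with h | h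
    · left
      have : u = a := le_antisymm hu.2 (by linarith [hv.1])
      rw [this]; rfl
    · right
      have : u = 0 := le_antisymm (by linarith [hv.2]) hu.1
      rw [this]; rfl
  have heq : μ ((QuotientAddGroup.mk : ℝ → AddCircle (1:ℝ)) '' Icc 0 b) =
      μ ((QuotientAddGroup.mk : ℝ → AddCircle (1:ℝ)) '' Icc 0 a) +
      μ ((QuotientAddGroup.mk : ℝ → AddCircle (1:ℝ)) '' Icc a b) := by
    rw [hsplit]
    have := measure_union_add_inter (μ := μ)
      ((QuotientAddGroup.mk : ℝ → AddCircle (1:ℝ)) '' Icc 0 a) (cpt_meas a b)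
    rw [hintnull, add_zero] at this
    exact this
  have hsub : μ ((QuotientAddGroup.mk : ℝ → AddCircle (1:ℝ)) '' Icc a b) =
      μ ((QuotientAddGroup.mk : ℝ → AddCircle (1:ℝ)) '' Icc 0 b) -
      μ ((QuotientAddGroup.mk : ℝ → AddCircle (1:ℝ)) '' Icc 0 a) := by
    rw [heq]
    rw [ENNReal.add_sub_cancel_left (measure_ne_top _ _)]
  have hle : μ ((QuotientAddGroup.mk : ℝ → AddCircle (1:ℝ)) '' Icc 0 a) ≤
      μ ((QuotientAddGroup.mk : ℝ → AddCircle (1:ℝ)) '' Icc 0 b) :=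
    measure_mono (image_mono (Icc_subset_Icc le_rfl hab))
  rw [hsub]
  unfold cptF
  rw [← ENNReal.toReal_sub_of_le hle (measure_ne_top _ _),
    ENNReal.ofReal_toReal (by finiteness)]

private lemma cpt_arc2_meas (μ : Measure (AddCircle (1:ℝ))) [IsProbabilityMeasure μ]
    (hμ : ∀ z : AddCircle (1:ℝ), μ {z} = 0) {a b : ℝ} (ha : 0 ≤ a) (hab : a ≤ b) (hb : b ≤ 1) :
    μ ((QuotientAddGroup.mk : ℝ → AddCircle (1:ℝ)) '' Icc b (a + 1)) =
      1 - μ ((QuotientAddGroup.mk : ℝ → AddCircle (1:ℝ)) '' Icc a b) := by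
  have hba1 : b ≤ a + 1 := by linarith
  have huniv : (QuotientAddGroup.mk : ℝ → AddCircle (1:ℝ)) '' Icc a b ∪
      (QuotientAddGroup.mk : ℝ → AddCircle (1:ℝ)) '' Icc b (a+1) = univ := by
    rw [← image_union, Icc_union_Icc_eq_Icc hab hba1]
    have := AddCircle.coe_image_Icc_eq (1:ℝ) a
    exact this
  have hintnull : μ ((QuotientAddGroup.mk : ℝ → AddCircle (1:ℝ)) '' Icc a b ∩
      (QuotientAddGroup.mk : ℝ → AddCircle (1:ℝ)) '' Icc b (a+1)) = 0 := by
    refine measure_mono_null (t :=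
      ({(QuotientAddGroup.mk b : AddCircle (1:ℝ))} : Set _) ∪ {(QuotientAddGroup.mk a : AddCircle (1:ℝ))})
      ?_ (measure_union_null (hμ _) (hμ _))
    rintro z ⟨⟨u, hu, rfl⟩, ⟨v, hv, hvz⟩⟩
    have h0 : 0 ≤ v - u := by linarith [hu.2, hv.1]
    have h1 : v - u ≤ 1 := by linarith [hu.1, hv.2]
    rcases cpt_int_cases hvz.symm h0 h1 with h | h
    · left
      have : u = b := le_antisymm hu.2 (by linarith [hv.1])
      rw [this]; rfl
    · right
      have : u = a := le_antisymm (by linarith [hv.2]) hu.1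
      rw [this]; rfl
  have := measure_union_add_inter (μ := μ)
    ((QuotientAddGroup.mk : ℝ → AddCircle (1:ℝ)) '' Icc a b) (cpt_meas b (a+1))
  rw [hintnull, add_zero, huniv, measure_univ] at this
  rw [eq_comm, this, ENNReal.add_sub_cancel_left (measure_ne_top _ _)]

/-- The `n = 2` case of the circle partition conjecture: for non-atomic probability measures
`μ₁, μ₂` on `S¹ = ℝ/ℤ` and demands `α₁ + α₂ = 1`, there is a closed arc `X` with either
`μ₁ X = α₁` and `μ₂ Xᶜ ≥ α₂`, or `μ₂ X = α₂` and `μ₁ Xᶜ ≥ α₁`. -/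
theorem circle_partition_two (μ₁ μ₂ : Measure (AddCircle (1 : ℝ)))
    [IsProbabilityMeasure μ₁] [IsProbabilityMeasure μ₂]
    (h₁ : ∀ z : AddCircle (1 : ℝ), μ₁ {z} = 0)
    (h₂ : ∀ z : AddCircle (1 : ℝ), μ₂ {z} = 0)
    (α₁ α₂ : ℝ) (hα₁ : 0 ≤ α₁) (hα₂ : 0 ≤ α₂) (hsum : α₁ + α₂ = 1) :
    ∃ (a b : ℝ) (X : Set (AddCircle (1 : ℝ))), a ≤ b ∧ b ≤ a + 1 ∧
      X = (QuotientAddGroup.mk : ℝ → AddCircle (1 : ℝ)) '' Set.Icc a b ∧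
      ((μ₁ X = ENNReal.ofReal α₁ ∧ ENNReal.ofReal α₂ ≤ μ₂ Xᶜ) ∨
       (μ₂ X = ENNReal.ofReal α₂ ∧ ENNReal.ofReal α₁ ≤ μ₁ Xᶜ)) := by
  rcases hα₁.eq_or_lt with h0₁ | hp₁
  · -- α₁ = 0 : a single point works
    refine ⟨0, 0, _, le_rfl, by linarith, rfl, Or.inl ⟨?_, ?_⟩⟩
    · rw [Icc_self, image_singleton, h₁, ← h0₁, ENNReal.ofReal_zero]
    · rw [Icc_self, image_singleton,
        measure_compl (measurableSet_singleton _) (measure_ne_top _ _), measure_univ, h₂,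
        tsub_zero]
      exact ENNReal.ofReal_le_one.mpr (by linarith)
  rcases hα₂.eq_or_lt with h0₂ | hp₂
  · -- α₂ = 0 : the whole circle works
    refine ⟨0, 1, _, zero_le_one, by linarith, rfl, Or.inl ⟨?_, ?_⟩⟩
    · have huniv : (QuotientAddGroup.mk : ℝ → AddCircle (1:ℝ)) '' Icc 0 1 = univ := by
        have := AddCircle.coe_image_Icc_eq (1:ℝ) 0
        rwa [zero_add] at this
      rw [huniv, measure_univ, show α₁ = 1 by linarith, ENNReal.ofReal_one]
    · rw [← h0₂, ENNReal.ofReal_zero]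
      exact zero_le
  -- main case
  obtain ⟨a, b, ha, hab, hb, hcase⟩ := circle_partition_key_real (cptF μ₁) (cptF μ₂)
    (cptF_cont μ₁ h₁) (cptF_mono μ₁) (cptF_mono μ₂) (cptF_zero μ₁ h₁) (cptF_one μ₁)
    hp₁ hp₂ hsum
  have main : ∀ X : Set (AddCircle (1:ℝ)), MeasurableSet X →
      μ₁ X = ENNReal.ofReal α₁ → μ₂ X ≤ ENNReal.ofReal α₁ → ENNReal.ofReal α₂ ≤ μ₂ Xᶜ := by
    intro X hm hx1 hx2
    rw [measure_compl hm (measure_ne_top _ _), measure_univ]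
    refine ENNReal.le_sub_of_add_le_left (measure_ne_top _ _) ?_
    calc μ₂ X + ENNReal.ofReal α₂ ≤ ENNReal.ofReal α₁ + ENNReal.ofReal α₂ :=
          add_le_add_left hx2 _
    _ = 1 := by
        rw [← ENNReal.ofReal_add hα₁ hα₂, hsum, ENNReal.ofReal_one]
  have hone : (1:ℝ≥0∞) = ENNReal.ofReal α₁ + ENNReal.ofReal α₂ := by
    rw [← ENNReal.ofReal_add hα₁ hα₂, hsum, ENNReal.ofReal_one]
  rcases hcase with ⟨he, hle⟩ | ⟨he, hge⟩
  · -- direct arc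
    refine ⟨a, b, _, hab, by linarith, rfl, Or.inl ⟨?_, ?_⟩⟩
    · rw [cpt_arc_meas μ₁ h₁ ha hab hb, he]
    · apply main _ (cpt_meas a b)
      · rw [cpt_arc_meas μ₁ h₁ ha hab hb, he]
      · rw [cpt_arc_meas μ₂ h₂ ha hab hb]
        exact ENNReal.ofReal_le_ofReal hle
  · -- complementary arc
    have hX1 : μ₁ ((QuotientAddGroup.mk : ℝ → AddCircle (1:ℝ)) '' Icc b (a+1)) =
        ENNReal.ofReal α₁ := by
      rw [cpt_arc2_meas μ₁ h₁ ha hab hb, cpt_arc_meas μ₁ h₁ ha hab hb, he, hone,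
        ENNReal.add_sub_cancel_right ENNReal.ofReal_ne_top]
    have hX2 : μ₂ ((QuotientAddGroup.mk : ℝ → AddCircle (1:ℝ)) '' Icc b (a+1)) ≤
        ENNReal.ofReal α₁ := by
      rw [cpt_arc2_meas μ₂ h₂ ha hab hb, cpt_arc_meas μ₂ h₂ ha hab hb]
      calc 1 - ENNReal.ofReal (cptF μ₂ b - cptF μ₂ a) ≤ 1 - ENNReal.ofReal α₂ :=
            tsub_le_tsub_left (ENNReal.ofReal_le_ofReal hge) 1
      _ = ENNReal.ofReal α₁ := by
          rw [hone, ENNReal.add_sub_cancel_right ENNReal.ofReal_ne_top]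
    exact ⟨b, a + 1, _, by linarith, by linarith, rfl,
      Or.inl ⟨hX1, main _ (cpt_meas b (a+1)) hX1 hX2⟩⟩
end

section
/- Fair division with n − 1 cuts: for any n ≥ 1 non-atomic Borel probability measures μ₁, ..., μ_n on [0,1], there exist points 0 = x₀ ≤ x₁ ≤ ... ≤ x_{n−1} ≤ x_n = 1 and a permutation σ of {1,...,n} such that μ_{σ(i)}([x_{i−1}, x_i]) ≥ 1/n for every i. -/
open MeasureTheory Set Filter Topology

lemma contF_s15 (ν : Measure ℝ) [IsFiniteMeasure ν] [NullSingletonClass ν] (t : ℝ) :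
    Continuous fun u => (ν (Icc t u)).toReal := by
  rw [continuous_iff_continuousAt]
  intro b
  rw [ContinuousAt, tendsto_iff_dist_tendsto_zero]
  have key : ∀ u : ℝ, dist ((ν (Icc t u)).toReal) ((ν (Icc t b)).toReal)
      ≤ (ν (Icc (b - |u - b|) (b + |u - b|))).toReal := by
    intro u
    have habs1 : u - b ≤ |u - b| := le_abs_self _
    have habs2 : -(u - b) ≤ |u - b| := neg_le_abs _
    have habs0 : 0 ≤ |u - b| := abs_nonneg _
    have h1 : Icc t u ⊆ Icc t b ∪ Icc (b - |u - b|) (b + |u - b|) := by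
      intro x hx
      rcases le_or_gt x b with h | h
      · exact Or.inl ⟨hx.1, h⟩
      · exact Or.inr ⟨by linarith, by linarith [hx.2]⟩
    have h2 : Icc t b ⊆ Icc t u ∪ Icc (b - |u - b|) (b + |u - b|) := by
      intro x hx
      rcases le_or_gt x u with h | h
      · exact Or.inl ⟨hx.1, h⟩
      · exact Or.inr ⟨by linarith [hx.2], by linarith [hx.2]⟩
    have hle1 : ν (Icc t u) ≤ ν (Icc t b) + ν (Icc (b - |u - b|) (b + |u - b|)) :=
      (measure_mono h1).trans (measure_union_le _ _)
    have hle2 : ν (Icc t b) ≤ ν (Icc t u) + ν (Icc (b - |u - b|) (b + |u - b|)) :=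
      (measure_mono h2).trans (measure_union_le _ _)
    have hne : ∀ s : Set ℝ, ν s ≠ ⊤ := fun s => measure_ne_top ν s
    have t1 : (ν (Icc t u)).toReal ≤ (ν (Icc t b)).toReal
        + (ν (Icc (b - |u - b|) (b + |u - b|))).toReal := by
      refine (ENNReal.toReal_mono (ENNReal.add_ne_top.mpr ⟨hne _, hne _⟩) hle1).trans_eq ?_
      exact ENNReal.toReal_add (hne _) (hne _)
    have t2 : (ν (Icc t b)).toReal ≤ (ν (Icc t u)).toReal
        + (ν (Icc (b - |u - b|) (b + |u - b|))).toReal := by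
      refine (ENNReal.toReal_mono (ENNReal.add_ne_top.mpr ⟨hne _, hne _⟩) hle2).trans_eq ?_
      exact ENNReal.toReal_add (hne _) (hne _)
    rw [Real.dist_eq, abs_sub_le_iff]
    constructor <;> linarith
  have h0 : Tendsto (fun u : ℝ => |u - b|) (𝓝 b) (𝓝 0) := by
    have h : Tendsto (fun u : ℝ => u - b) (𝓝 b) (𝓝 (b - b)) :=
      tendsto_id.sub tendsto_const_nhds
    rw [sub_self] at h
    simpa using h.abs
  have h3 : Tendsto (fun u : ℝ => (ν (Icc (b - |u - b|) (b + |u - b|))).toReal)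
      (𝓝 b) (𝓝 0) := by
    have h4 := (tendsto_measure_Icc ν b).comp h0
    have h5 := (ENNReal.tendsto_toReal (a := 0) (by simp)).comp h4
    simpa [Function.comp_def] using h5
  exact squeeze_zero (fun u => dist_nonneg) key h3

lemma fair_key (r : ℝ) (hr : 0 < r) :
    ∀ m : ℕ, ∀ t : ℝ, t ≤ 1 → ∀ ν : Fin (m + 1) → Measure ℝ,
      (∀ i, IsFiniteMeasure (ν i)) → (∀ i p, ν i {p} = 0) →
      (∀ i, ((m : ℝ) + 1) * r ≤ (ν i (Icc t 1)).toReal) →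
      ∃ x : Fin (m + 2) → ℝ, Monotone x ∧ x 0 = t ∧ x (Fin.last (m + 1)) = 1 ∧
        ∃ σ : Equiv.Perm (Fin (m + 1)), ∀ i,
          ENNReal.ofReal r ≤ ν (σ i) (Icc (x i.castSucc) (x i.succ)) := by
  intro m
  induction m with
  | zero =>
    intro t ht ν hfin hna htot
    refine ⟨![t, 1], ?_, rfl, rfl, Equiv.refl _, ?_⟩
    · refine Fin.monotone_iff_le_succ.mpr fun i => ?_
      fin_cases i <;> simpa using ht
    · intro i
      fin_cases i
      simp only [Equiv.refl_apply]
      refine ENNReal.ofReal_le_of_le_toReal ?_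
      have := htot 0
      norm_num at this ⊢
      convert this using 3
  | succ m ih =>
    intro t ht ν hfin hna htot
    haveI : ∀ i, IsFiniteMeasure (ν i) := hfin
    haveI hnoat : ∀ i, NullSingletonClass (ν i) := fun i => ⟨hna i⟩
    set F : Fin (m + 2) → ℝ → ℝ := fun i u => (ν i (Icc t u)).toReal with hF
    have hFc : ∀ i, Continuous (F i) := fun i => contF_s15 (ν i) t
    have hFmono : ∀ i, Monotone (F i) := by
      intro i u v huv
      exact ENNReal.toReal_mono (measure_ne_top _ _) (measure_mono (Icc_subset_Icc_right huv))
    have hFt : ∀ i, F i t = 0 := by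
      intro i
      simp [hF, Icc_self, hna i t]
    set S : Fin (m + 2) → Set ℝ := fun i => {u | u ∈ Icc t 1 ∧ r ≤ F i u} with hS
    have hS1 : ∀ i, (1 : ℝ) ∈ S i := by
      intro i
      have h := htot i
      have : r ≤ F i 1 := by
        have hm : (0:ℝ) ≤ (m : ℝ) + 1 := by positivity
        nlinarith
      exact ⟨⟨ht, le_refl 1⟩, this⟩
    have hSclosed : ∀ i, IsClosed (S i) := by
      intro i
      have : S i = Icc t 1 ∩ {u | r ≤ F i u} := by ext u; exact ⟨fun h => ⟨h.1, h.2⟩, fun h => ⟨h.1, h.2⟩⟩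
      rw [this]
      exact isClosed_Icc.inter (isClosed_le continuous_const (hFc i))
    have hSbdd : ∀ i, BddBelow (S i) := fun i => ⟨t, fun u hu => hu.1.1⟩
    set c : Fin (m + 2) → ℝ := fun i => sInf (S i) with hc
    have hcmem : ∀ i, c i ∈ S i := fun i => (hSclosed i).csInf_mem ⟨1, hS1 i⟩ (hSbdd i)
    have hct : ∀ i, t ≤ c i := fun i => (hcmem i).1.1
    have hc1 : ∀ i, c i ≤ 1 := fun i => (hcmem i).1.2
    have hcr : ∀ i, r ≤ F i (c i) := fun i => (hcmem i).2
    -- F i (c i) ≤ r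
    have hcrle : ∀ i, F i (c i) ≤ r := by
      intro i
      have htlt : t < c i := by
        rcases eq_or_lt_of_le (hct i) with h | h
        · exfalso; have := hcr i; rw [← h, hFt i] at this; linarith
        · exact h
      have hlt : ∀ u ∈ Ico t (c i), F i u ≤ r := by
        intro u hu
        by_contra hcon
        push_neg at hcon
        have humem : u ∈ S i := ⟨⟨hu.1, hu.2.le.trans (hc1 i)⟩, hcon.le⟩
        exact absurd (csInf_le (hSbdd i) humem) (not_le.mpr hu.2)
      have hne : (Ico t (c i)).Nonempty := ⟨t, le_refl t, htlt⟩
      have hclos : c i ∈ closure (Ico t (c i)) := by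
        rw [closure_Ico htlt.ne]
        exact ⟨(hct i), le_refl _⟩
      haveI : (𝓝[Ico t (c i)] (c i)).NeBot := mem_closure_iff_nhdsWithin_neBot.mp hclos
      have htend : Tendsto (F i) (𝓝[Ico t (c i)] (c i)) (𝓝 (F i (c i))) :=
        ((hFc i).continuousAt).continuousWithinAt
      exact le_of_tendsto htend (eventually_nhdsWithin_of_forall hlt)
    obtain ⟨i₀, hi₀⟩ := Finite.exists_min c
    set cc := c i₀ with hcc
    have hccmem : t ≤ cc ∧ cc ≤ 1 := ⟨hct i₀, hc1 i₀⟩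
    have hFj : ∀ j, F j cc ≤ r := fun j => (hFmono j (hi₀ j)).trans (hcrle j)
    -- remaining measure
    have hrem : ∀ j : Fin (m + 2), ((m : ℝ) + 1) * r ≤ (ν j (Icc cc 1)).toReal := by
      intro j
      have hsub : ν j (Icc t 1) ≤ ν j (Icc t cc) + ν j (Icc cc 1) := by
        have : Icc t 1 ⊆ Icc t cc ∪ Icc cc 1 := by
          rw [Icc_union_Icc_eq_Icc hccmem.1 hccmem.2]
        exact (measure_mono this).trans (measure_union_le _ _)
      have hsubR : (ν j (Icc t 1)).toReal ≤ F j cc + (ν j (Icc cc 1)).toReal := by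
        refine (ENNReal.toReal_mono (ENNReal.add_ne_top.mpr
          ⟨measure_ne_top _ _, measure_ne_top _ _⟩) hsub).trans_eq ?_
        exact ENNReal.toReal_add (measure_ne_top _ _) (measure_ne_top _ _)
      have h := htot j
      have hj := hFj j
      push_cast at h ⊢
      linarith
    obtain ⟨x', hx'mono, hx'0, hx'last, σ', hσ'⟩ :=
      ih cc hccmem.2 (fun j => ν (i₀.succAbove j)) (fun j => hfin _) (fun j => hna _)
        (fun j => hrem _)
    set g : Fin (m + 2) → Fin (m + 2) := Fin.cons i₀ (fun j => i₀.succAbove (σ' j)) with hg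
    have hginj : Function.Injective g := by
      intro a b hab
      induction a using Fin.cases with
      | zero =>
        induction b using Fin.cases with
        | zero => rfl
        | succ b =>
          exfalso
          simp only [hg, Fin.cons_zero, Fin.cons_succ] at hab
          exact (Fin.succAbove_ne i₀ (σ' b)) hab.symm
      | succ a =>
        induction b using Fin.cases with
        | zero =>
          exfalso
          simp only [hg, Fin.cons_zero, Fin.cons_succ] at hab
          exact (Fin.succAbove_ne i₀ (σ' a)) hab
        | succ b =>
          simp only [hg, Fin.cons_succ] at hab
          have := σ'.injective (Fin.succAbove_right_injective hab)
          rw [this]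
    have hgbij : Function.Bijective g := Finite.injective_iff_bijective.mp hginj
    refine ⟨Fin.cons t x', ?_, ?_, ?_, Equiv.ofBijective g hgbij, ?_⟩
    · refine Fin.monotone_iff_le_succ.mpr fun i => ?_
      induction i using Fin.cases with
      | zero =>
        simp only [Fin.castSucc_zero, Fin.cons_zero, Fin.succ_zero_eq_one]
        have : (1 : Fin (m + 3)) = (0 : Fin (m + 2)).succ := rfl
        rw [this, Fin.cons_succ, hx'0]
        exact hccmem.1
      | succ j =>
        rw [← Fin.succ_castSucc, Fin.cons_succ, Fin.cons_succ]
        exact hx'mono (Fin.castSucc_lt_succ (i := j)).le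
    · exact Fin.cons_zero _ _
    · have : Fin.last (m + 2) = (Fin.last (m + 1)).succ := (Fin.succ_last _).symm
      rw [this, Fin.cons_succ, hx'last]
    · intro i
      induction i using Fin.cases with
      | zero =>
        have hg0 : g 0 = i₀ := Fin.cons_zero _ _
        simp only [Equiv.ofBijective_apply, hg0]
        have h1 : Fin.cons (α := fun _ => ℝ) t x' (Fin.castSucc 0) = t := by
          rw [Fin.castSucc_zero]; exact Fin.cons_zero _ _
        have h2 : Fin.cons (α := fun _ => ℝ) t x' (Fin.succ 0) = cc := by
          rw [Fin.cons_succ, hx'0]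
        rw [h1, h2]
        exact ENNReal.ofReal_le_of_le_toReal (hcr i₀)
      | succ j =>
        have hgj : g j.succ = i₀.succAbove (σ' j) := Fin.cons_succ _ _ _
        simp only [Equiv.ofBijective_apply, hgj]
        have h1 : Fin.cons (α := fun _ => ℝ) t x' (Fin.castSucc j.succ) = x' j.castSucc := by
          rw [← Fin.succ_castSucc, Fin.cons_succ]
        have h2 : Fin.cons (α := fun _ => ℝ) t x' (Fin.succ j.succ) = x' j.succ :=
          Fin.cons_succ _ _ _
        rw [h1, h2]
        exact hσ' j

/-- Fair division with `n − 1` cuts: for `n ≥ 1` non-atomic probability measures on `[0,1]`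
there are points `0 = x₀ ≤ x₁ ≤ ⋯ ≤ x_{n−1} ≤ x_n = 1` and a permutation `σ` of the agents
such that `μ_{σ(i)} [x_{i−1}, x_i] ≥ 1/n` for every `i`. -/
theorem fair_division (n : ℕ) (hn : 1 ≤ n)
    (μ : Fin n → Measure ℝ) (hprob : ∀ i, IsProbabilityMeasure (μ i))
    (hs : ∀ i, μ i (Set.Icc (0 : ℝ) 1)ᶜ = 0) (ha : ∀ i (p : ℝ), μ i {p} = 0) :
    ∃ x : Fin (n + 1) → ℝ, Monotone x ∧ x 0 = 0 ∧ x (Fin.last n) = 1 ∧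
      ∃ σ : Equiv.Perm (Fin n), ∀ i : Fin n,
        ENNReal.ofReal (1 / n) ≤ μ (σ i) (Set.Icc (x i.castSucc) (x i.succ)) := by
  obtain ⟨m, rfl⟩ : ∃ m, n = m + 1 := ⟨n - 1, (Nat.succ_pred_eq_of_pos hn).symm⟩
  have hIcc : ∀ i, μ i (Icc (0:ℝ) 1) = 1 := by
    intro i
    haveI := hprob i
    have h1 : μ i univ ≤ μ i (Icc (0:ℝ) 1) + μ i (Icc (0:ℝ) 1)ᶜ := by
      rw [← union_compl_self (Icc (0:ℝ) 1)] at *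
      exact measure_union_le _ _
    rw [hs i, add_zero, measure_univ] at h1
    exact le_antisymm (le_trans (measure_mono (subset_univ _)) measure_univ.le) h1
  have hkey := fair_key (1 / ((m : ℝ) + 1)) (by positivity) m 0 zero_le_one μ
    (fun i => by haveI := hprob i; infer_instance) ha
    (fun i => by rw [hIcc i, ENNReal.toReal_one, mul_one_div, div_self (by positivity)])
  obtain ⟨x, hmono, hx0, hxlast, σ, hσ⟩ := hkey
  refine ⟨x, hmono, hx0, hxlast, σ, fun i => ?_⟩
  have : (1 : ℝ) / ((m : ℕ) + 1 : ℕ) = 1 / ((m : ℝ) + 1) := by push_cast; ring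
  rw [this]
  exact hσ i
end
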